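/- arXiv:2302.11862 — 6 statements merged into one kernel-verified Lean document; each statement's English description precedes it below -/
import Mathlib

section
/- Let (P, L) be a finite projective plane of order k and let G be its incidence graph. Then the functionality of G equals k + 1, i.e., fun(G) = k + 1. -/
open Classical in
/-- `v` is a function of the set `U` of vertices in the graph `G`. -/
def SimpleGraph.IsFunctionOf {V : Type*} (G : SimpleGraph V) (v : V)
    (U : Finset V) : Prop :=
  v ∉ U ∧ ∃ f : (U → Bool) → Bool, ∀ w : V, w ∉ U → w ≠ v →
    (G.Adj v w ↔ f (fun u => decide (G.Adj w u.1)) = true)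

/-- The functionality of a vertex: least size of a set of which it is a function. -/
noncomputable def SimpleGraph.vertexFun {V : Type*} (G : SimpleGraph V) (v : V) : ℕ :=
  sInf {k | ∃ U : Finset V, U.card = k ∧ G.IsFunctionOf v U}

/-- The functionality of a graph. -/
noncomputable def SimpleGraph.graphFun {V : Type*} (G : SimpleGraph V) : ℕ :=
  sSup {m | ∃ W : Set V, W.Nonempty ∧
    m = sInf {k | ∃ v : W, k = (G.induce W).vertexFun v}}

/-- The symmetric difference of a pair of distinct vertices. -/
noncomputable def SimpleGraph.sdPair {V : Type*} (G : SimpleGraph V) (u v : V) : ℕ :=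
  {w | w ≠ u ∧ w ≠ v ∧ ((G.Adj w u ∧ ¬ G.Adj w v) ∨ (¬ G.Adj w u ∧ G.Adj w v))}.ncard

/-- The symmetric difference of a graph. -/
noncomputable def SimpleGraph.sdGraph {V : Type*} (G : SimpleGraph V) : ℕ :=
  sSup {m | ∃ W : Set V, (∃ u v : W, u ≠ v) ∧
    m = sInf {k | ∃ u v : W, u ≠ v ∧ k = (G.induce W).sdPair u v}}


/-- The incidence graph of an incidence structure of points and lines. -/
def incidenceGraph (P L : Type*) [Membership P L] : SimpleGraph (P ⊕ L) where
  Adj x y :=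
    match x, y with
    | Sum.inl p, Sum.inr l => p ∈ l
    | Sum.inr l, Sum.inl p => p ∈ l
    | _, _ => False
  symm := ⟨by rintro (p | l) (q | m) h <;> simp_all⟩
  loopless := ⟨by rintro (p | l) h <;> simp_all⟩

/-!
A vertex is a function of its neighbourhood, and every vertex of the incidence graph has
`k + 1` neighbours, so every induced subgraph has a vertex of functionality at most `k + 1`.
Conversely, in the whole graph no point `p` is a function of a set `U` of at most `k` other
vertices: counting shows there is a line through `p`, not in `U`, missing the points of `U`, and
a point other than `p`, not in `U`, off the lines of `U`. Both have no neighbour in `U`, yet only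
the line is adjacent to `p`. Lines are handled by duality.
-/

namespace SimpleGraph

variable {V V' : Type*} {G : SimpleGraph V} {G' : SimpleGraph V'} {v : V} {U : Finset V}

open Classical in
theorem IsFunctionOf.adj_iff_adj_of_forall_adj_iff (hU : G.IsFunctionOf v U) {w₁ w₂ : V}
    (hw₁ : w₁ ∉ U) (hw₁v : w₁ ≠ v) (hw₂ : w₂ ∉ U) (hw₂v : w₂ ≠ v)
    (h : ∀ u ∈ U, (G.Adj w₁ u ↔ G.Adj w₂ u)) : G.Adj v w₁ ↔ G.Adj v w₂ := by
  obtain ⟨-, f, hf⟩ := hU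
  have htrace : (fun u : U => decide (G.Adj w₁ u)) = fun u : U => decide (G.Adj w₂ u) :=
    funext fun u => decide_eq_decide.mpr (h u u.2)
  rw [hf w₁ hw₁ hw₁v, hf w₂ hw₂ hw₂v, htrace]

theorem IsFunctionOf.map (e : G ≃g G') (hU : G.IsFunctionOf v U) :
    G'.IsFunctionOf (e v) (U.map e.toEquiv.toEmbedding) := by
  obtain ⟨hvU, f, hf⟩ := hU
  have mem_map {w : V} : e w ∈ U.map e.toEquiv.toEmbedding ↔ w ∈ U := Finset.mem_map' _
  refine ⟨mem_map.not.mpr hvU, fun g => f fun u => g ⟨e u, mem_map.mpr u.2⟩, ?_⟩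
  intro w' hw' hwv
  obtain ⟨w, rfl⟩ := e.surjective w'
  convert hf w (mem_map.not.mp hw') (e.injective.ne_iff.mp hwv) using 4 with u
  · exact e.map_adj_iff
  · exact decide_eq_decide.mpr e.map_adj_iff

theorem Iso.vertexFun_apply (e : G ≃g G') (v : V) : G'.vertexFun (e v) = G.vertexFun v := by
  unfold vertexFun
  congr 1
  ext k
  constructor
  · rintro ⟨U', rfl, hU'⟩
    refine ⟨U'.map e.symm.toEquiv.toEmbedding, Finset.card_map _, ?_⟩
    simpa using hU'.map e.symm
  · rintro ⟨U, rfl, hU⟩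
    exact ⟨U.map e.toEquiv.toEmbedding, Finset.card_map _, hU.map e⟩

theorem vertexFun_le_ncard_neighborSet [Finite V] (G : SimpleGraph V) (v : V) :
    G.vertexFun v ≤ (G.neighborSet v).ncard := by
  have hfin := (G.neighborSet v).toFinite
  rw [Set.ncard_eq_toFinset_card _ hfin]
  refine Nat.sInf_le ⟨_, rfl, by simp, fun _ => false, fun w hw _ => ?_⟩
  simpa using hw

theorem ncard_neighborSet_induce_le [Finite V] (G : SimpleGraph V) (W : Set V) (v : W) :
    ((G.induce W).neighborSet v).ncard ≤ (G.neighborSet v).ncard :=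
  Set.ncard_le_ncard_of_injOn Subtype.val (fun _ h => h) Subtype.val_injective.injOn

theorem lt_vertexFun [Finite V] {n : ℕ}
    (h : ∀ U : Finset V, v ∉ U → U.card ≤ n → ∃ w₁ w₂, w₁ ∉ U ∧ w₂ ∉ U ∧ w₂ ≠ v ∧
      G.Adj v w₁ ∧ ¬ G.Adj v w₂ ∧ ∀ u ∈ U, (G.Adj w₁ u ↔ G.Adj w₂ u)) :
    n < G.vertexFun v := by
  classical
  have := Fintype.ofFinite V
  refine Nat.lt_of_succ_le <| le_csInf
    ⟨(Finset.univ.erase v).card, Finset.univ.erase v, rfl, by simp, fun _ => true, by simp⟩ ?_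
  rintro _ ⟨U, rfl, hU⟩
  by_contra! hUn
  obtain ⟨w₁, w₂, hw₁, hw₂, hw₂v, hadj₁, hadj₂, htrace⟩ := h U hU.1 (by omega)
  exact hadj₂ <|
    (hU.adj_iff_adj_of_forall_adj_iff hw₁ (G.ne_of_adj hadj₁).symm hw₂ hw₂v htrace).mp hadj₁

theorem sInf_vertexFun_induce_le [Finite V] (G : SimpleGraph V) (W : Set V) (w : W) :
    sInf {k | ∃ v : W, k = (G.induce W).vertexFun v} ≤ (G.neighborSet w).ncard :=
  calc sInf {k | ∃ v : W, k = (G.induce W).vertexFun v}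
      _ ≤ (G.induce W).vertexFun w := Nat.sInf_le ⟨w, rfl⟩
      _ ≤ ((G.induce W).neighborSet w).ncard := vertexFun_le_ncard_neighborSet _ w
      _ ≤ (G.neighborSet w).ncard := ncard_neighborSet_induce_le G W w

theorem graphFun_le [Finite V] {n : ℕ} (h : ∀ v, (G.neighborSet v).ncard ≤ n) :
    G.graphFun ≤ n :=
  csSup_le' <| by
    rintro m ⟨W, ⟨w, hw⟩, rfl⟩
    exact (sInf_vertexFun_induce_le G W ⟨w, hw⟩).trans (h w)

theorem le_graphFun [Finite V] [Nonempty V] {n : ℕ} (h : ∀ v, n ≤ G.vertexFun v) :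
    n ≤ G.graphFun := by
  obtain ⟨v₀⟩ := ‹Nonempty V›
  have hbdd : BddAbove {m | ∃ W : Set V, W.Nonempty ∧
      m = sInf {k | ∃ v : W, k = (G.induce W).vertexFun v}} := by
    refine ⟨Nat.card V, ?_⟩
    rintro m ⟨W, ⟨w, hw⟩, rfl⟩
    exact (sInf_vertexFun_induce_le G W ⟨w, hw⟩).trans (Set.ncard_le_card _)
  refine le_trans ?_ (le_csSup hbdd ⟨Set.univ, ⟨v₀, trivial⟩, rfl⟩)
  refine le_csInf ⟨(G.induce Set.univ).vertexFun ⟨v₀, trivial⟩, ⟨v₀, trivial⟩, rfl⟩ ?_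
  rintro _ ⟨v, rfl⟩
  exact (h v).trans_eq ((induceUnivIso G).vertexFun_apply v)

end SimpleGraph

namespace Configuration.ProjectivePlane

open Finset

variable {P L : Type*} [Membership P L] [ProjectivePlane P L] [Fintype P] [Fintype L]

open Classical in
theorem card_filter_mem (p : P) : #{l : L | p ∈ l} = order P L + 1 := by
  rw [← lineCount_eq L p, lineCount, Nat.card_eq_fintype_card, Fintype.card_subtype]

theorem exists_line_mem_forall_notMem {p : P} {S : Finset P} (hp : p ∉ S) (T : Finset L)
    (hST : #S + #T ≤ order P L) : ∃ l : L, p ∈ l ∧ l ∉ T ∧ ∀ q ∈ S, q ∉ l := by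
  classical
  -- each `q ∈ S` rules out only the line `pq`, each element of `T` only itself
  have hjoin : ∀ q ∈ S, #{l : L | p ∈ l ∧ q ∈ l} ≤ 1 := by
    intro q hq
    refine card_le_one.mpr fun l₁ h₁ l₂ h₂ => ?_
    simp only [mem_filter, mem_univ, true_and] at h₁ h₂
    exact (Nondegenerate.eq_or_eq h₁.1 h₁.2 h₂.1 h₂.2).resolve_left
      (ne_of_mem_of_not_mem hq hp).symm
  have hcard : #(T ∪ S.biUnion fun q => {l : L | p ∈ l ∧ q ∈ l}) < #{l : L | p ∈ l} :=
    calc #(T ∪ S.biUnion fun q => {l : L | p ∈ l ∧ q ∈ l})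
        _ ≤ #T + #S * 1 :=
          (card_union_le _ _).trans (Nat.add_le_add_left (card_biUnion_le_card_mul _ _ _ hjoin) _)
        _ < #{l : L | p ∈ l} := by rw [card_filter_mem]; omega
  obtain ⟨l, hpl, hl⟩ := exists_mem_notMem_of_card_lt_card hcard
  simp only [mem_filter, mem_univ, true_and, mem_union, mem_biUnion, not_or, not_exists,
    not_and] at hpl hl
  exact ⟨l, hpl, hl.1, fun q hq hql => hl.2 q hq hpl hql⟩

theorem exists_line_notMem (p : P) {T : Finset L} (hT : #T ≤ order P L) :
    ∃ l : L, p ∉ l ∧ l ∉ T := by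
  classical
  have hcard : #{l : L | p ∉ l} = order P L ^ 2 := by
    have := card_filter_add_card_filter_not (s := (univ : Finset L)) (p ∈ ·)
    rw [card_filter_mem, card_univ, card_lines P L] at this
    omega
  have : #T < #{l : L | p ∉ l} := by
    have := one_lt_order P L
    rw [hcard]
    nlinarith
  simpa using exists_mem_notMem_of_card_lt_card this

/-- The point is found on a line `l` missing `p`, by the dual of
`exists_line_mem_forall_notMem` at `l`. -/
theorem exists_point_forall_notMem (p : P) (S : Finset P) (T : Finset L)
    (hST : #S + #T ≤ order P L) : ∃ r : P, r ≠ p ∧ r ∉ S ∧ ∀ m ∈ T, r ∉ m := by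
  obtain ⟨l, hpl, hlT⟩ := exists_line_notMem p (T := T) (by omega)
  obtain ⟨r, hrl, hrS, hrT⟩ := exists_line_mem_forall_notMem (P := Dual L) (L := Dual P) (p := l)
    (S := T) hlT S (by rw [Dual.order, add_comm]; exact hST)
  exact ⟨r, fun h => hpl (h ▸ hrl), hrS, hrT⟩

end Configuration.ProjectivePlane

namespace incidenceGraph

open Finset Configuration ProjectivePlane

variable {P L : Type*} [Membership P L]

@[simp]
theorem adj_inl_inr {p : P} {l : L} : (incidenceGraph P L).Adj (.inl p) (.inr l) ↔ p ∈ l :=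
  Iff.rfl

@[simp]
theorem adj_inr_inl {p : P} {l : L} : (incidenceGraph P L).Adj (.inr l) (.inl p) ↔ p ∈ l :=
  Iff.rfl

@[simp]
theorem not_adj_inl_inl {p q : P} : ¬ (incidenceGraph P L).Adj (.inl p) (.inl q) :=
  id

@[simp]
theorem not_adj_inr_inr {l m : L} : ¬ (incidenceGraph P L).Adj (.inr l) (.inr m) :=
  id

theorem neighborSet_inl (p : P) :
    (incidenceGraph P L).neighborSet (.inl p) = Sum.inr '' {l | p ∈ l} := by
  ext (q | l) <;> simp

theorem neighborSet_inr (l : L) :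
    (incidenceGraph P L).neighborSet (.inr l) = Sum.inl '' {p | p ∈ l} := by
  ext (p | m) <;> simp

variable (P L) in
def dualIso : incidenceGraph P L ≃g incidenceGraph (Dual L) (Dual P) where
  toEquiv := Equiv.sumComm P L
  map_rel_iff' := by rintro (p | l) (q | m) <;> rfl

variable [ProjectivePlane P L]

theorem ncard_neighborSet [Finite P] [Finite L] (v : P ⊕ L) :
    ((incidenceGraph P L).neighborSet v).ncard = order P L + 1 := by
  rcases v with p | l
  · rw [neighborSet_inl, Set.ncard_image_of_injective _ Sum.inr_injective, ← lineCount_eq L p]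
    rfl
  · rw [neighborSet_inr, Set.ncard_image_of_injective _ Sum.inl_injective, ← pointCount_eq P l]
    rfl

variable [Fintype P] [Fintype L]

theorem order_lt_vertexFun_inl (p : P) : order P L < (incidenceGraph P L).vertexFun (.inl p) := by
  classical
  refine SimpleGraph.lt_vertexFun fun U hpU hU => ?_
  have hST : #U.toLeft + #U.toRight ≤ order P L := by rwa [card_toLeft_add_card_toRight]
  obtain ⟨l, hpl, hlT, hlS⟩ := exists_line_mem_forall_notMem (mt mem_toLeft.mp hpU) U.toRight hST
  obtain ⟨r, hrp, hrS, hrT⟩ := exists_point_forall_notMem p U.toLeft U.toRight hST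
  refine ⟨.inr l, .inl r, mt mem_toRight.mpr hlT, mt mem_toLeft.mpr hrS, by simpa using hrp, hpl,
    not_adj_inl_inl, ?_⟩
  rintro (q | m) hu
  · exact iff_of_false (hlS q (mem_toLeft.mpr hu)) not_adj_inl_inl
  · exact iff_of_false not_adj_inr_inr (hrT m (mem_toRight.mpr hu))

theorem order_lt_vertexFun (v : P ⊕ L) : order P L < (incidenceGraph P L).vertexFun v := by
  rcases v with p | l
  · exact order_lt_vertexFun_inl p
  · rw [← (dualIso P L).vertexFun_apply, ← Dual.order]
    exact order_lt_vertexFun_inl (P := Dual L) (L := Dual P) l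

end incidenceGraph

/-- The incidence graph of a finite projective plane of order `k`
has functionality exactly `k + 1`. -/
theorem fun_incidenceGraph_projectivePlane
    (P L : Type*) [Membership P L] [Fintype P] [Fintype L]
    [Configuration.ProjectivePlane P L] (k : ℕ)
    (hk : Configuration.ProjectivePlane.order P L = k) :
    (incidenceGraph P L).graphFun = k + 1 := by
  subst hk
  obtain ⟨p, -⟩ := Configuration.ProjectivePlane.exists_config (P := P) (L := L)
  have : Nonempty (P ⊕ L) := ⟨.inl p⟩
  exact le_antisymm
    (SimpleGraph.graphFun_le fun v => (incidenceGraph.ncard_neighborSet v).le)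
    (SimpleGraph.le_graphFun incidenceGraph.order_lt_vertexFun)
end

section
/- For every real c > 2 there exists N such that every finite simple graph G on n ≥ N vertices satisfies fun(G) ≤ √(c · n · ln n). -/
open Classical

open Finset in
lemma exists_hitting {α : Type*} [DecidableEq α] (n r : ℕ) (hr : 1 ≤ r)
    (A : Finset α) (hAn : A.card ≤ n) :
    ∀ (t : ℕ) (F : Finset (Finset α)), (∀ S ∈ F, S ⊆ A ∧ r ≤ S.card) →
    ((F.card : ℝ) * (1 - (r : ℝ)/(n : ℝ))^t < 1) →
    ∃ U : Finset α, U ⊆ A ∧ U.card ≤ t ∧ ∀ S ∈ F, ∃ a ∈ U, a ∈ S := by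
  intro t
  induction t with
  | zero =>
    intro F hF hlt
    refine ⟨∅, by simp, by simp, ?_⟩
    simp only [pow_zero, mul_one] at hlt
    have : F.card = 0 := by exact_mod_cast Nat.lt_one_iff.mp (by exact_mod_cast hlt)
    simp [Finset.card_eq_zero.mp this]
  | succ t ih =>
    intro F hF hlt
    rcases F.eq_empty_or_nonempty with rfl | hFne
    · exact ⟨∅, by simp, by simp, by simp⟩
    -- basic facts
    obtain ⟨S₀, hS₀⟩ := hFne
    have hrA : r ≤ A.card := le_trans (hF S₀ hS₀).2 (Finset.card_le_card (hF S₀ hS₀).1)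
    have hApos : 0 < A.card := lt_of_lt_of_le hr hrA
    have hnpos : 0 < n := lt_of_lt_of_le hApos hAn
    -- double counting
    have hsum : r * F.card ≤ ∑ S ∈ F, S.card := by
      calc r * F.card = ∑ S ∈ F, r := by rw [Finset.sum_const, smul_eq_mul, mul_comm]
      _ ≤ ∑ S ∈ F, S.card := Finset.sum_le_sum fun S hS => (hF S hS).2
    have hswap : ∑ S ∈ F, S.card = ∑ a ∈ A, (F.filter (fun S => a ∈ S)).card := by
      calc ∑ S ∈ F, S.card = ∑ S ∈ F, ∑ a ∈ A, (if a ∈ S then 1 else 0) := by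
            refine Finset.sum_congr rfl fun S hS => ?_
            rw [← Finset.card_filter]
            congr 1
            rw [Finset.filter_mem_eq_inter, Finset.inter_eq_right.mpr (hF S hS).1]
      _ = ∑ a ∈ A, ∑ S ∈ F, (if a ∈ S then 1 else 0) := Finset.sum_comm
      _ = ∑ a ∈ A, (F.filter (fun S => a ∈ S)).card := by
            refine Finset.sum_congr rfl fun a _ => ?_
            rw [← Finset.card_filter]
    -- exists good element
    have hex : ∃ a ∈ A, r * F.card ≤ A.card * (F.filter (fun S => a ∈ S)).card := by
      by_contra hcon
      push_neg at hcon
      have : A.card * (r * F.card) ≤ A.card * (r * F.card - 1) := by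
        calc A.card * (r * F.card) = r * F.card * A.card := by ring
        _ ≤ (∑ S ∈ F, S.card) * A.card := Nat.mul_le_mul_right _ hsum
        _ = ∑ a ∈ A, A.card * (F.filter (fun S => a ∈ S)).card := by
              rw [hswap, Finset.sum_mul]
              refine Finset.sum_congr rfl fun a _ => mul_comm _ _
        _ ≤ ∑ a ∈ A, (r * F.card - 1) := Finset.sum_le_sum fun a ha =>
              Nat.le_sub_one_of_lt (hcon a ha)
        _ = A.card * (r * F.card - 1) := by rw [Finset.sum_const, smul_eq_mul]
      have h1 : 1 ≤ r * F.card := Nat.mul_pos hr (Finset.card_pos.mpr ⟨S₀, hS₀⟩)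
      have h2 := Nat.le_of_mul_le_mul_left this hApos
      omega
    obtain ⟨a, haA, ha⟩ := hex
    set F' := F.filter (fun S => a ∉ S) with hF'
    have hcard' : (F'.card : ℝ) ≤ (F.card : ℝ) * (1 - (r:ℝ)/n) := by
      have h1 : F'.card = F.card - (F.filter (fun S => a ∈ S)).card := by
        rw [hF', Finset.filter_not, Finset.card_sdiff_of_subset (Finset.filter_subset _ _)]
      have h2 : ((F.filter (fun S => a ∈ S)).card : ℝ) ≥ (r : ℝ) * F.card / n := by
        rw [ge_iff_le, div_le_iff₀ (by positivity)]
        have : (r : ℝ) * F.card ≤ (A.card : ℝ) * (F.filter (fun S => a ∈ S)).card := by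
          exact_mod_cast ha
        calc (r:ℝ) * F.card ≤ (A.card : ℝ) * (F.filter (fun S => a ∈ S)).card := this
          _ ≤ (F.filter (fun S => a ∈ S)).card * n := by
              rw [mul_comm]
              exact mul_le_mul_of_nonneg_left (by exact_mod_cast hAn) (by positivity)
      have h3 : (F.filter (fun S => a ∈ S)).card ≤ F.card :=
        Finset.card_le_card (Finset.filter_subset _ _)
      have : (F'.card : ℝ) = (F.card : ℝ) - (F.filter (fun S => a ∈ S)).card := by
        rw [h1]; push_cast [h3]; ring
      rw [this, mul_sub, mul_one]
      have he : (F.card:ℝ) * ((r:ℝ)/n) = (r:ℝ)*F.card/n := by ring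
      linarith [h2]
    have hbase : (0:ℝ) ≤ 1 - (r:ℝ)/n := by
      rw [sub_nonneg, div_le_one (by positivity)]
      exact_mod_cast le_trans hrA hAn
    have hlt' : (F'.card : ℝ) * (1 - (r:ℝ)/n)^t < 1 := by
      calc (F'.card : ℝ) * (1 - (r:ℝ)/n)^t
          ≤ ((F.card : ℝ) * (1 - (r:ℝ)/n)) * (1 - (r:ℝ)/n)^t :=
            mul_le_mul_of_nonneg_right hcard' (pow_nonneg hbase t)
        _ = (F.card : ℝ) * (1 - (r:ℝ)/n)^(t+1) := by ring
        _ < 1 := hlt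
    obtain ⟨U', hU'A, hU'card, hU'hit⟩ := ih F' (fun S hS => hF S (Finset.mem_filter.mp hS).1) hlt'
    refine ⟨insert a U', Finset.insert_subset haA hU'A, ?_, ?_⟩
    · exact le_trans (Finset.card_insert_le _ _) (Nat.succ_le_succ hU'card)
    · intro S hS
      by_cases haS : a ∈ S
      · exact ⟨a, Finset.mem_insert_self _ _, haS⟩
      · obtain ⟨b, hb, hbS⟩ := hU'hit S (Finset.mem_filter.mpr ⟨hS, haS⟩)
        exact ⟨b, Finset.mem_insert_of_mem hb, hbS⟩

-- Lemma A
lemma vertexFun_le_sdPair {V : Type*} [Fintype V] (G : SimpleGraph V) (u v : V)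
    (huv : u ≠ v) : G.vertexFun u ≤ G.sdPair u v + 1 := by
  classical
  set D : Set V := {w | w ≠ u ∧ w ≠ v ∧ ((G.Adj w u ∧ ¬ G.Adj w v) ∨ (¬ G.Adj w u ∧ G.Adj w v))}
  have hDfin : D.Finite := Set.toFinite D
  set U : Finset V := insert v hDfin.toFinset with hU
  have hvD : v ∉ hDfin.toFinset := by
    simp [hDfin, D, Set.Finite.mem_toFinset]
  have hcard : U.card = G.sdPair u v + 1 := by
    rw [hU, Finset.card_insert_of_notMem hvD]
    congr 1
    rw [SimpleGraph.sdPair, Set.ncard_eq_toFinset_card D hDfin]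
  have hvU : (v : V) ∈ U := Finset.mem_insert_self _ _
  have hfun : G.IsFunctionOf u U := by
    refine ⟨?_, ?_⟩
    · intro hu
      rcases Finset.mem_insert.mp hu with h | h
      · exact huv h
      · exact (hDfin.mem_toFinset.mp h).1 rfl
    · refine ⟨fun g => g ⟨v, hvU⟩, fun w hwU hwu => ?_⟩
      have hwv : w ≠ v := fun h => hwU (h ▸ hvU)
      have hwD : w ∉ D := fun h => hwU (Finset.mem_insert_of_mem (hDfin.mem_toFinset.mpr h))
      have : G.Adj w u ↔ G.Adj w v := by
        by_contra hiff
        exact hwD ⟨hwu, hwv, by tauto⟩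
      rw [decide_eq_true_iff]
      rw [G.adj_comm u w, this]
  exact Nat.sInf_le ⟨U, hcard, hfun⟩


-- Lemma B
lemma vertexFun_le_of_sd_large {V : Type*} [Fintype V] (G : SimpleGraph V) (v : V)
    (n r t : ℕ) (hn : Fintype.card V ≤ n) (hr : 1 ≤ r) (hrn : r ≤ n)
    (hsd : ∀ u u' : V, u ≠ u' → r + 1 ≤ G.sdPair u u')
    (hineq : ((n:ℝ))^2 * (1 - (r : ℝ)/n)^t < 1) :
    G.vertexFun v ≤ t := by
  classical
  set A : Finset V := Finset.univ.erase v with hA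
  have hAn : A.card ≤ n := le_trans (Finset.card_le_card (Finset.erase_subset _ _))
    (by simpa using hn)
  set Dset : V → V → Set V := fun a b =>
    {w | w ≠ a ∧ w ≠ b ∧ ((G.Adj w a ∧ ¬ G.Adj w b) ∨ (¬ G.Adj w a ∧ G.Adj w b))} with hDset
  set Dv : V × V → Finset V := fun p => ((Set.toFinite (Dset p.1 p.2)).toFinset).erase v with hDv
  set P : Finset (V × V) := Finset.univ.filter (fun p => p.1 ≠ p.2) with hP
  set F : Finset (Finset V) := P.image Dv with hF
  have hFprop : ∀ S ∈ F, S ⊆ A ∧ r ≤ S.card := by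
    intro S hS
    obtain ⟨p, hp, rfl⟩ := Finset.mem_image.mp hS
    have hpne : p.1 ≠ p.2 := (Finset.mem_filter.mp hp).2
    constructor
    · intro x hx
      exact Finset.mem_erase.mpr ⟨(Finset.mem_erase.mp hx).1, Finset.mem_univ x⟩
    · have h1 : ((Set.toFinite (Dset p.1 p.2)).toFinset).card = G.sdPair p.1 p.2 := by
        rw [SimpleGraph.sdPair, Set.ncard_eq_toFinset_card _ (Set.toFinite (Dset p.1 p.2))]
      have h2 := hsd p.1 p.2 hpne
      have h3 := Finset.pred_card_le_card_erase (s := (Set.toFinite (Dset p.1 p.2)).toFinset)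
        (a := v)
      have h4 : Dv p = ((Set.toFinite (Dset p.1 p.2)).toFinset).erase v := rfl
      rw [h4]
      omega
  have hFcard : (F.card : ℝ) ≤ (n:ℝ)^2 := by
    have h1 : F.card ≤ P.card := Finset.card_image_le
    have h2 : P.card ≤ Fintype.card V * Fintype.card V := by
      calc P.card ≤ (Finset.univ : Finset (V × V)).card := Finset.card_le_card
            (Finset.filter_subset _ _)
        _ = Fintype.card V * Fintype.card V := by simp [Finset.card_univ]
    have : F.card ≤ n * n := le_trans h1 (le_trans h2 (Nat.mul_le_mul hn hn))
    calc (F.card : ℝ) ≤ (n * n : ℕ) := by exact_mod_cast this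
      _ = (n:ℝ)^2 := by push_cast; ring
  have hbase : (0:ℝ) ≤ 1 - (r:ℝ)/n := by
    rcases Nat.eq_zero_or_pos n with rfl | hnpos
    · simp
    · rw [sub_nonneg, div_le_one (by positivity)]
      exact_mod_cast hrn
  have hlt : (F.card : ℝ) * (1 - (r:ℝ)/n)^t < 1 :=
    lt_of_le_of_lt (mul_le_mul_of_nonneg_right hFcard (pow_nonneg hbase t)) hineq
  obtain ⟨U, hUA, hUcard, hUhit⟩ := exists_hitting n r hr A hAn t F hFprop hlt
  have hvU : v ∉ U := fun h => (Finset.mem_erase.mp (hUA h)).1 rfl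
  have hfun : G.IsFunctionOf v U := by
    refine ⟨hvU, ?_⟩
    refine ⟨fun g => decide (∃ w : V, w ∉ U ∧ w ≠ v ∧ G.Adj v w ∧
      ∀ u : U, (decide (G.Adj w u.1)) = g u), fun w hwU hwv => ?_⟩
    rw [decide_eq_true_iff]
    constructor
    · intro hadj
      exact ⟨w, hwU, hwv, hadj, fun u => rfl⟩
    · rintro ⟨w', hw'U, hw'v, hadj', hpat⟩
      rcases eq_or_ne w' w with rfl | hne
      · exact hadj'
      · exfalso
        have hSF : Dv (w', w) ∈ F := Finset.mem_image_of_mem Dv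
          (Finset.mem_filter.mpr ⟨Finset.mem_univ _, hne⟩)
        obtain ⟨a, haU, haS⟩ := hUhit _ hSF
        have haD : a ∈ Dset w' w :=
          (Set.Finite.mem_toFinset _).mp (Finset.mem_of_mem_erase haS)
        have hpa := hpat ⟨a, haU⟩
        have : G.Adj w' a ↔ G.Adj w a := by
          simpa [decide_eq_decide] using hpa
        rcases haD.2.2 with ⟨h1, h2⟩ | ⟨h1, h2⟩
        · exact h2 ((this.mp h1.symm).symm)
        · exact h1 ((this.mpr h2.symm).symm)
  exact le_trans (Nat.sInf_le ⟨U, rfl, hfun⟩) hUcard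

lemma key_lemma {V : Type*} [Fintype V] [Nonempty V] (G : SimpleGraph V) (n r t : ℕ)
    (hn : Fintype.card V ≤ n) (hr : 1 ≤ r) (hrn : r ≤ n)
    (hineq : ((n:ℝ))^2 * (1 - (r : ℝ)/n)^t < 1) :
    ∃ v : V, G.vertexFun v ≤ max (r + 1) t := by
  by_cases h : ∃ u u' : V, u ≠ u' ∧ G.sdPair u u' ≤ r
  · obtain ⟨u, u', hne, hle⟩ := h
    exact ⟨u, le_trans (vertexFun_le_sdPair G u u' hne)
      (le_trans (by omega) (le_max_left _ _))⟩
  · push_neg at h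
    obtain ⟨v⟩ := ‹Nonempty V›
    refine ⟨v, le_trans (vertexFun_le_of_sd_large G v n r t hn hr hrn ?_ hineq)
      (le_max_right _ _)⟩
    intro u u' hne
    exact h u u' hne


/-- for every real `c > 2` there is `N` such that every graph on
`n ≥ N` vertices has functionality at most `√(c · n · ln n)`. -/
theorem graphFun_le_sqrt_mul_log (c : ℝ) (hc : 2 < c) :
    ∃ N : ℕ, ∀ (V : Type) [Fintype V] (G : SimpleGraph V),
      N ≤ Fintype.card V →
      (G.graphFun : ℝ) ≤
        Real.sqrt (c * (Fintype.card V : ℝ) * Real.log (Fintype.card V)) := by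
  refine ⟨max 4096 (⌈Real.exp (2/(c-2))⌉₊ + 1), ?_⟩
  intro V _ G hN
  set n : ℕ := Fintype.card V with hncard
  have hn4096 : 4096 ≤ n := le_trans (le_max_left _ _) hN
  have hnpos : 0 < n := by omega
  have hnR : (4096:ℝ) ≤ (n:ℝ) := by exact_mod_cast hn4096
  have hnRpos : (0:ℝ) < n := by linarith
  set L : ℝ := Real.log n with hL
  have hexp : Real.exp (2/(c-2)) ≤ (n:ℝ) := by
    have h1 : ⌈Real.exp (2/(c-2))⌉₊ + 1 ≤ n := le_trans (le_max_right _ _) hN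
    have h2 : Real.exp (2/(c-2)) ≤ (⌈Real.exp (2/(c-2))⌉₊ : ℝ) := Nat.le_ceil _
    have h3 : ((⌈Real.exp (2/(c-2))⌉₊ : ℕ) : ℝ) ≤ (n:ℝ) := by exact_mod_cast by omega
    linarith
  have hLc : 2/(c-2) ≤ L := by
    have := Real.log_le_log (Real.exp_pos _) hexp
    rwa [Real.log_exp] at this
  have hL1 : 1 ≤ L := by
    rw [hL, Real.le_log_iff_exp_le hnRpos]
    have := Real.exp_one_lt_d9
    linarith
  -- the quantity Q = 2 n L
  set Q : ℝ := 2 * n * L with hQ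
  have hQ2 : (2:ℝ) ≤ Q := by
    rw [hQ]; nlinarith
  have hQpos : (0:ℝ) < Q := by linarith
  have hsqQpos : (0:ℝ) < Real.sqrt Q := Real.sqrt_pos.mpr hQpos
  -- √n ≤ n/64 and L ≤ n/32 and √Q ≤ n/4
  have hsqn : Real.sqrt n ≤ n / 64 := by
    have h64 : (64:ℝ) ≤ Real.sqrt n := by
      rw [show (64:ℝ) = Real.sqrt 4096 by
        rw [show (4096:ℝ) = 64^2 by norm_num, Real.sqrt_sq (by norm_num)]]
      exact Real.sqrt_le_sqrt hnR
    nlinarith [Real.sq_sqrt hnRpos.le, Real.sqrt_nonneg (n:ℝ)]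
  have hLn : L ≤ (n:ℝ)/32 := by
    have h1 : Real.log (Real.sqrt n) ≤ Real.sqrt n - 1 :=
      Real.log_le_sub_one_of_pos (Real.sqrt_pos.mpr hnRpos)
    have h2 : Real.log (Real.sqrt n) = L / 2 := by
      rw [Real.log_sqrt hnRpos.le]
    have h3 : Real.sqrt n ≤ n/64 := hsqn
    linarith
  have hsqQ : Real.sqrt Q ≤ (n:ℝ)/4 := by
    have h1 : Q ≤ ((n:ℝ)/4)^2 := by
      rw [hQ]; nlinarith
    calc Real.sqrt Q ≤ Real.sqrt (((n:ℝ)/4)^2) := Real.sqrt_le_sqrt h1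
      _ = (n:ℝ)/4 := Real.sqrt_sq (by positivity)
  -- parameters
  set r : ℕ := ⌈Real.sqrt Q⌉₊ with hr
  set t : ℕ := ⌈Q / r⌉₊ + 1 with ht
  have hr1 : 1 ≤ r := Nat.one_le_iff_ne_zero.mpr (by
    simp only [hr, ne_eq, Nat.ceil_eq_zero, not_le]
    exact hsqQpos)
  have hrR : Real.sqrt Q ≤ (r:ℝ) := Nat.le_ceil _
  have hrRpos : (0:ℝ) < r := lt_of_lt_of_le hsqQpos hrR
  have hrub : (r:ℝ) ≤ Real.sqrt Q + 1 := le_of_lt (Nat.ceil_lt_add_one (Real.sqrt_nonneg _))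
  have hrn : r ≤ n := by
    rw [hr, Nat.ceil_le]
    calc Real.sqrt Q ≤ (n:ℝ)/4 := hsqQ
      _ ≤ (n:ℝ) := by linarith
  -- hineq
  have hineq : ((n:ℝ))^2 * (1 - (r : ℝ)/n)^t < 1 := by
    have hbase0 : (0:ℝ) ≤ 1 - (r:ℝ)/n := by
      rw [sub_nonneg, div_le_one hnRpos]
      exact_mod_cast hrn
    have hb : (1 - (r:ℝ)/n) ≤ Real.exp (-((r:ℝ)/n)) := by
      have := Real.add_one_le_exp (-((r:ℝ)/n))
      linarith
    have htR : Q / r + 1 ≤ (t:ℝ) := by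
      rw [ht]
      push_cast
      have := Nat.le_ceil (Q / (r:ℝ))
      linarith
    have hrt : 2 * n * L < (r:ℝ) * t := by
      have h1 : (r:ℝ) * t ≥ (r:ℝ) * (Q/r + 1) :=
        mul_le_mul_of_nonneg_left htR hrRpos.le
      have h2 : (r:ℝ) * (Q/r + 1) = Q + r := by
        field_simp
      rw [hQ] at h2
      linarith
    calc ((n:ℝ))^2 * (1 - (r : ℝ)/n)^t
        ≤ ((n:ℝ))^2 * (Real.exp (-((r:ℝ)/n)))^t := by
          apply mul_le_mul_of_nonneg_left _ (by positivity)
          exact pow_le_pow_left₀ hbase0 hb t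
      _ = ((n:ℝ))^2 * Real.exp (-((r:ℝ) * t/n)) := by
          rw [← Real.exp_nat_mul]
          congr 1
          ring
      _ < ((n:ℝ))^2 * Real.exp (-(2*L)) := by
          apply mul_lt_mul_of_pos_left _ (by positivity)
          apply Real.exp_lt_exp.mpr
          rw [neg_lt_neg_iff, lt_div_iff₀ hnRpos]
          calc 2 * L * n = 2 * n * L := by ring
            _ < (r:ℝ) * t := hrt
      _ = 1 := by
          rw [Real.exp_neg, show (2:ℝ)*L = L + L by ring, Real.exp_add,
            Real.exp_log hnRpos]
          field_simp
  -- the bound B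
  set B : ℕ := max (r+1) t with hB
  have hBbound : (B:ℝ) ≤ Real.sqrt Q + 2 := by
    have h1 : ((r:ℕ):ℝ) + 1 ≤ Real.sqrt Q + 2 := by linarith
    have h2 : (t:ℝ) ≤ Real.sqrt Q + 2 := by
      rw [ht]
      push_cast
      have h3 : Q / (r:ℝ) ≤ Q / Real.sqrt Q :=
        div_le_div_of_nonneg_left hQpos.le hsqQpos hrR
      rw [Real.div_sqrt] at h3
      have h4 := Nat.ceil_lt_add_one (show (0:ℝ) ≤ Q / r by positivity)
      linarith
    rw [hB, Nat.cast_max]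
    exact max_le (by push_cast; linarith) h2
  have hfinal : Real.sqrt Q + 2 ≤ Real.sqrt (c * n * L) := by
    rw [show Real.sqrt Q + 2 = Real.sqrt ((Real.sqrt Q + 2)^2) by
      rw [Real.sqrt_sq (by positivity)]]
    apply Real.sqrt_le_sqrt
    have hsq : (Real.sqrt Q)^2 = Q := Real.sq_sqrt hQpos.le
    have hcL : 2 ≤ (c-2) * L := by
      have h0 : (0:ℝ) < c - 2 := by linarith
      have h1 := (div_le_iff₀ h0).mp hLc
      have h2 : L * (c-2) = (c-2) * L := mul_comm _ _
      linarith
    have h5 : (n:ℝ)*2 ≤ (n:ℝ)*((c-2)*L) := mul_le_mul_of_nonneg_left hcL hnRpos.le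
    have h6 : Q + 2*(n:ℝ) ≤ c*n*L := by rw [hQ]; linarith [h5]
    nlinarith [hsq, hsqQ, hnR, h6]
  -- now bound graphFun
  have hgf : G.graphFun ≤ B := by
    rw [SimpleGraph.graphFun]
    have hne : Nonempty V := Fintype.card_pos_iff.mp hnpos
    apply csSup_le
    · refine ⟨sInf {k | ∃ v : (Set.univ : Set V), k = (G.induce _).vertexFun v}, ?_⟩
      exact ⟨Set.univ, Set.univ_nonempty, rfl⟩
    · rintro m ⟨W, hWne, rfl⟩
      haveI : Fintype ↥W := W.toFinite.fintype
      haveI : Nonempty ↥W := hWne.to_subtype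
      have hWcard : Fintype.card ↥W ≤ n := by
        rw [hncard]
        exact Fintype.card_le_of_injective (Subtype.val : W → V) Subtype.val_injective
      obtain ⟨v, hv⟩ := key_lemma (G.induce W) n r t hWcard hr1 hrn hineq
      exact le_trans (Nat.sInf_le ⟨v, rfl⟩) hv
  calc (G.graphFun : ℝ) ≤ (B:ℝ) := by exact_mod_cast hgf
    _ ≤ Real.sqrt Q + 2 := hBbound
    _ ≤ Real.sqrt (c * n * L) := hfinal
end

section
/- There exists N such that for every n ≥ N, the probability under μ_{n,1/2} that every vertex v of the random graph G_ω satisfies fun_{G_ω}(v) ≤ 3·log₂ n is at least 1 − 1/n. -/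
open MeasureTheory

open scoped ENNReal

/-- Index set of potential edges of a graph on `Fin n`: non-diagonal unordered pairs. -/
def EdgeIdx (n : ℕ) : Type := {e : Sym2 (Fin n) // ¬ e.IsDiag}

instance (n : ℕ) : Fintype (EdgeIdx n) := by unfold EdgeIdx; infer_instance

/-- The Bernoulli measure on `Bool` with parameter `p`. -/
noncomputable def bernoulliBool (p : ℝ) : Measure Bool :=
  ENNReal.ofReal p • Measure.dirac true + ENNReal.ofReal (1 - p) • Measure.dirac false

/-- The Erdős–Rényi measure `μ_{n,p}`: the product over all potential edges of
independent Bernoulli(`p`) coordinates. -/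
noncomputable def erdosRenyiMeasure (n : ℕ) (p : ℝ) : Measure (EdgeIdx n → Bool) :=
  Measure.pi fun _ => bernoulliBool p

/-- The simple graph on `Fin n` determined by a sample `ω`. -/
def graphOf (n : ℕ) (ω : EdgeIdx n → Bool) : SimpleGraph (Fin n) :=
  SimpleGraph.fromEdgeSet {e : Sym2 (Fin n) | ∃ h : ¬ e.IsDiag, ω ⟨e, h⟩ = true}

/-! ### Auxiliary material -/

instance (n : ℕ) : DecidableEq (EdgeIdx n) := by unfold EdgeIdx; infer_instance

lemma ofReal_half' : ENNReal.ofReal (1/2 : ℝ) = 2⁻¹ := by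
  rw [one_div, ENNReal.ofReal_inv_of_pos (by norm_num)]
  norm_num

lemma bern_singleton (b : Bool) : bernoulliBool (1/2 : ℝ) {b} = 2⁻¹ := by
  have h2 : (1 - 1/2 : ℝ) = 1/2 := by norm_num
  cases b <;>
    simp only [bernoulliBool, Measure.add_apply, Measure.smul_apply, h2, ofReal_half',
      Measure.dirac_apply' _ (measurableSet_singleton _)] <;>
    simp

instance : IsProbabilityMeasure (bernoulliBool (1/2 : ℝ)) := by
  constructor
  have : (Set.univ : Set Bool) = {true} ∪ {false} := by
    ext b; cases b <;> simp
  rw [this, measure_union (by simp) (measurableSet_singleton _), bern_singleton, bern_singleton]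
  exact ENNReal.inv_two_add_inv_two

instance (n : ℕ) : IsProbabilityMeasure (erdosRenyiMeasure n (1/2 : ℝ)) := by
  unfold erdosRenyiMeasure; infer_instance

/-- Measure of a cylinder event. -/
lemma cyl_measure {n : ℕ} {ι : Type} [Fintype ι] [DecidableEq ι] (F : ι → EdgeIdx n)
    (hF : Function.Injective F) (c : ι → Bool) :
    erdosRenyiMeasure n (1/2 : ℝ) {ω | ∀ j, ω (F j) = c j} = 2⁻¹ ^ Fintype.card ι := by
  classical
  set A : EdgeIdx n → Set Bool := fun i => {b | ∀ j, F j = i → b = c j} with hA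
  have hset : {ω : EdgeIdx n → Bool | ∀ j, ω (F j) = c j} = Set.pi Set.univ A := by
    ext ω
    constructor
    · intro h i _ j hj
      subst hj; exact h j
    · intro h j
      exact h (F j) (Set.mem_univ _) j rfl
  rw [hset]
  rw [erdosRenyiMeasure, Measure.pi_pi]
  have hval : ∀ i : EdgeIdx n, bernoulliBool (1/2 : ℝ) (A i) =
      if i ∈ Finset.univ.image F then 2⁻¹ else 1 := by
    intro i
    by_cases hi : i ∈ Finset.univ.image F
    · obtain ⟨j, -, rfl⟩ := Finset.mem_image.mp hi
      have : A (F j) = {c j} := by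
        ext b
        simp only [hA, Set.mem_setOf_eq, Set.mem_singleton_iff]
        constructor
        · intro h; exact h j rfl
        · intro h j' hj'; rw [h]; rw [hF hj']
      rw [this, bern_singleton, if_pos hi]
    · have : A i = Set.univ := by
        ext b
        simp only [hA, Set.mem_setOf_eq, Set.mem_univ, iff_true]
        intro j hj
        exact absurd (Finset.mem_image.mpr ⟨j, Finset.mem_univ _, hj⟩) hi
      rw [this, if_neg hi, measure_univ]
  calc ∏ i, bernoulliBool (1/2 : ℝ) (A i)
      = ∏ i, if i ∈ Finset.univ.image F then (2⁻¹ : ENNReal) else 1 :=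
        Finset.prod_congr rfl (fun i _ => hval i)
    _ = 2⁻¹ ^ Fintype.card ι := by
        rw [Finset.prod_ite_mem, Finset.univ_inter, Finset.prod_const,
          Finset.card_image_of_injective _ hF, Finset.card_univ]

/-- Measure of a family of forced agreements on disjoint coordinates. -/
lemma agree_measure_le {n : ℕ} {ι : Type} [Fintype ι] [DecidableEq ι]
    (g h : ι → EdgeIdx n) (hinj : Function.Injective (Sum.elim g h)) :
    erdosRenyiMeasure n (1/2 : ℝ) {ω | ∀ j, ω (g j) = ω (h j)} ≤ 2⁻¹ ^ Fintype.card ι := by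
  classical
  have hsub : {ω : EdgeIdx n → Bool | ∀ j, ω (g j) = ω (h j)} ⊆
      ⋃ c : ι → Bool, {ω | ∀ jj : ι ⊕ ι, ω (Sum.elim g h jj) = Sum.elim c c jj} := by
    intro ω hω
    refine Set.mem_iUnion.mpr ⟨fun j => ω (g j), ?_⟩
    intro jj
    cases jj with
    | inl j => rfl
    | inr j => exact (hω j).symm
  refine le_trans (measure_mono hsub) (le_trans (measure_iUnion_le _) (le_of_eq ?_))
  have heach : ∀ c : ι → Bool,
      erdosRenyiMeasure n (1/2 : ℝ)
        {ω | ∀ jj : ι ⊕ ι, ω (Sum.elim g h jj) = Sum.elim c c jj}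
        = 2⁻¹ ^ (2 * Fintype.card ι) := by
    intro c
    rw [cyl_measure _ hinj]
    congr 1
    simp [Fintype.card_sum, two_mul]
  calc ∑' c : ι → Bool, erdosRenyiMeasure n (1/2 : ℝ)
        {ω | ∀ jj : ι ⊕ ι, ω (Sum.elim g h jj) = Sum.elim c c jj}
      = ∑' _c : ι → Bool, (2⁻¹ : ENNReal) ^ (2 * Fintype.card ι) := tsum_congr heach
    _ = (Fintype.card (ι → Bool)) * 2⁻¹ ^ (2 * Fintype.card ι) := by
        rw [tsum_fintype]; simp [Finset.sum_const, nsmul_eq_mul]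
    _ = 2 ^ Fintype.card ι * (2⁻¹ ^ Fintype.card ι * 2⁻¹ ^ Fintype.card ι) := by
        rw [Fintype.card_fun]
        simp [two_mul, pow_add]
    _ = 2⁻¹ ^ Fintype.card ι := by
        rw [← mul_assoc, ← mul_pow, ENNReal.mul_inv_cancel (by norm_num) (by norm_num),
          one_pow, one_mul]

section counting
variable {β : Type*} [DecidableEq β]

lemma two_mul_card_filter_le (t : Finset β) (Q : β × β → Prop) [DecidablePred Q]
    (hanti : ∀ p : β × β, Q p → ¬ Q p.swap) :
    2 * ((t ×ˢ t).filter Q).card ≤ t.card * t.card := by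
  classical
  set F := (t ×ˢ t).filter Q with hF
  set G := (t ×ˢ t).filter (fun p => Q p.swap) with hG
  have hdisj : Disjoint F G := by
    rw [Finset.disjoint_left]
    intro p hp hq
    exact hanti p (Finset.mem_filter.mp hp).2 (Finset.mem_filter.mp hq).2
  have hcard : G.card = F.card := by
    apply Finset.card_bij (fun p _ => p.swap)
    · intro p hp
      obtain ⟨hmem, hQ⟩ := Finset.mem_filter.mp hp
      refine Finset.mem_filter.mpr ⟨?_, hQ⟩
      obtain ⟨h1, h2⟩ := Finset.mem_product.mp hmem
      exact Finset.mem_product.mpr ⟨h2, h1⟩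
    · intro p _ q _ hpq
      exact Prod.swap_injective hpq
    · intro p hp
      obtain ⟨hmem, hQ⟩ := Finset.mem_filter.mp hp
      refine ⟨p.swap, Finset.mem_filter.mpr ⟨?_, by simpa using hQ⟩, by simp⟩
      obtain ⟨h1, h2⟩ := Finset.mem_product.mp hmem
      exact Finset.mem_product.mpr ⟨h2, h1⟩
  calc 2 * F.card = F.card + G.card := by rw [hcard]; ring
    _ = (F ∪ G).card := (Finset.card_union_of_disjoint hdisj).symm
    _ ≤ (t ×ˢ t).card := Finset.card_le_card (by
        intro p hp
        rcases Finset.mem_union.mp hp with h | h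
        · exact (Finset.mem_filter.mp h).1
        · exact (Finset.mem_filter.mp h).1)
    _ = t.card * t.card := Finset.card_product t t

lemma two_mul_card_filter_le_offDiag (t : Finset β) (Q : β × β → Prop) [DecidablePred Q]
    (hanti : ∀ p : β × β, Q p → ¬ Q p.swap) (hne : ∀ p : β × β, Q p → p.1 ≠ p.2) :
    2 * ((t ×ˢ t).filter Q).card ≤ t.card * t.card - t.card := by
  classical
  set F := (t ×ˢ t).filter Q with hF
  set G := (t ×ˢ t).filter (fun p => Q p.swap) with hG
  have hdisj : Disjoint F G := by
    rw [Finset.disjoint_left]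
    intro p hp hq
    exact hanti p (Finset.mem_filter.mp hp).2 (Finset.mem_filter.mp hq).2
  have hcard : G.card = F.card := by
    apply Finset.card_bij (fun p _ => p.swap)
    · intro p hp
      obtain ⟨hmem, hQ⟩ := Finset.mem_filter.mp hp
      refine Finset.mem_filter.mpr ⟨?_, hQ⟩
      obtain ⟨h1, h2⟩ := Finset.mem_product.mp hmem
      exact Finset.mem_product.mpr ⟨h2, h1⟩
    · intro p _ q _ hpq
      exact Prod.swap_injective hpq
    · intro p hp
      obtain ⟨hmem, hQ⟩ := Finset.mem_filter.mp hp
      refine ⟨p.swap, Finset.mem_filter.mpr ⟨?_, by simpa using hQ⟩, by simp⟩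
      obtain ⟨h1, h2⟩ := Finset.mem_product.mp hmem
      exact Finset.mem_product.mpr ⟨h2, h1⟩
  have hsub : F ∪ G ⊆ t.offDiag := by
    intro p hp
    have hmem : p ∈ t ×ˢ t ∧ p.1 ≠ p.2 := by
      rcases Finset.mem_union.mp hp with h | h
      · exact ⟨(Finset.mem_filter.mp h).1, hne p (Finset.mem_filter.mp h).2⟩
      · refine ⟨(Finset.mem_filter.mp h).1, ?_⟩
        have := hne p.swap (Finset.mem_filter.mp h).2
        simpa [ne_comm] using this
    obtain ⟨h1, h2⟩ := Finset.mem_product.mp hmem.1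
    exact Finset.mem_offDiag.mpr ⟨h1, h2, hmem.2⟩
  calc 2 * F.card = F.card + G.card := by rw [hcard]; ring
    _ = (F ∪ G).card := (Finset.card_union_of_disjoint hdisj).symm
    _ ≤ t.offDiag.card := Finset.card_le_card hsub
    _ = t.card * t.card - t.card := by rw [Finset.offDiag_card]

end counting

def eIdx {n : ℕ} (w u : Fin n) (h : w ≠ u) : EdgeIdx n :=
  ⟨s(w, u), by simp [Sym2.isDiag_iff_proj_eq, h]⟩

lemma eIdx_eq_iff {n : ℕ} (w u x y : Fin n) (h1 : w ≠ u) (h2 : x ≠ y) :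
    eIdx w u h1 = eIdx x y h2 ↔ (w = x ∧ u = y) ∨ (w = y ∧ u = x) := by
  unfold eIdx
  exact Subtype.mk_eq_mk.trans Sym2.eq_iff

lemma graphOf_adj {n : ℕ} (ω : EdgeIdx n → Bool) (x y : Fin n) (hxy : x ≠ y) :
    (graphOf n ω).Adj x y ↔ ω (eIdx x y hxy) = true := by
  unfold graphOf
  rw [SimpleGraph.fromEdgeSet_adj]
  simp only [Set.mem_setOf_eq, eIdx]
  constructor
  · rintro ⟨⟨h, hω⟩, -⟩
    exact hω
  · intro h
    exact ⟨⟨by simp [Sym2.isDiag_iff_proj_eq, hxy], h⟩, hxy⟩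

/-- The agreement event of `a` and `b` over `S`. -/
def colSet {n : ℕ} (a b : Fin n) (S : Finset (Fin n)) : Set (EdgeIdx n → Bool) :=
  {ω | ∀ u ∈ S, ∀ (h1 : a ≠ u) (h2 : b ≠ u), ω (eIdx a u h1) = ω (eIdx b u h2)}

lemma eIdx_eq_same {n : ℕ} {S : Finset (Fin n)} {x y u u' : Fin n} {h1 : x ≠ u} {h2 : y ≠ u'}
    (hxS : x ∉ S) (hu' : u' ∈ S)
    (heq : eIdx x u h1 = eIdx y u' h2) : x = y ∧ u = u' := by
  rcases (eIdx_eq_iff x u y u' h1 h2).mp heq with ⟨ha, hb⟩ | ⟨ha, hb⟩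
  · exact ⟨ha, hb⟩
  · exact absurd (ha ▸ hu') hxS

lemma ne_of_memout {n : ℕ} {S : Finset (Fin n)} {x u : Fin n} (hx : x ∉ S) (hu : u ∈ S) :
    x ≠ u := fun h => hx (h ▸ hu)

lemma colSet_measure_le {n : ℕ} (a b : Fin n) (S : Finset (Fin n))
    (ha : a ∉ S) (hb : b ∉ S) (hab : a ≠ b) :
    erdosRenyiMeasure n (1/2 : ℝ) (colSet a b S) ≤ 2⁻¹ ^ S.card := by
  classical
  set g : ↥S → EdgeIdx n := fun u => eIdx a u (ne_of_memout ha u.2) with hg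
  set h : ↥S → EdgeIdx n := fun u => eIdx b u (ne_of_memout hb u.2) with hh
  have hsub : colSet a b S ⊆ {ω | ∀ j, ω (g j) = ω (h j)} := by
    intro ω hω j
    exact hω j.1 j.2 _ _
  have hinj : Function.Injective (Sum.elim g h) := by
    intro j1 j2 heq
    rcases j1 with u | u <;> rcases j2 with u' | u' <;>
      simp only [Sum.elim_inl, Sum.elim_inr, hg, hh] at heq
    · obtain ⟨-, h2⟩ := eIdx_eq_same ha u'.2 heq
      exact congrArg Sum.inl (Subtype.ext h2)
    · obtain ⟨h1, -⟩ := eIdx_eq_same ha u'.2 heq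
      exact absurd h1 hab
    · obtain ⟨h1, -⟩ := eIdx_eq_same hb u'.2 heq
      exact absurd h1.symm hab
    · obtain ⟨-, h2⟩ := eIdx_eq_same hb u'.2 heq
      exact congrArg Sum.inr (Subtype.ext h2)
  calc erdosRenyiMeasure n (1/2 : ℝ) (colSet a b S)
      ≤ erdosRenyiMeasure n (1/2 : ℝ) {ω | ∀ j, ω (g j) = ω (h j)} := measure_mono hsub
    _ ≤ 2⁻¹ ^ Fintype.card ↥S := agree_measure_le g h hinj
    _ = 2⁻¹ ^ S.card := by rw [Fintype.card_coe]

lemma colSet_inter_measure_le {n : ℕ} (a b c d : Fin n) (S : Finset (Fin n))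
    (ha : a ∉ S) (hb : b ∉ S) (hc : c ∉ S) (hd : d ∉ S)
    (hab : a ≠ b) (hac : a ≠ c) (had : a ≠ d) (hbc : b ≠ c) (hbd : b ≠ d) (hcd : c ≠ d) :
    erdosRenyiMeasure n (1/2 : ℝ) (colSet a b S ∩ colSet c d S) ≤ 2⁻¹ ^ (2 * S.card) := by
  classical
  set g : ↥S ⊕ ↥S → EdgeIdx n :=
    Sum.elim (fun u => eIdx a u (ne_of_memout ha u.2)) (fun u => eIdx c u (ne_of_memout hc u.2))
    with hg
  set h : ↥S ⊕ ↥S → EdgeIdx n :=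
    Sum.elim (fun u => eIdx b u (ne_of_memout hb u.2)) (fun u => eIdx d u (ne_of_memout hd u.2))
    with hh
  have hsub : colSet a b S ∩ colSet c d S ⊆ {ω | ∀ j, ω (g j) = ω (h j)} := by
    rintro ω ⟨hω1, hω2⟩ j
    rcases j with u | u
    · exact hω1 u.1 u.2 (ne_of_memout ha u.2) (ne_of_memout hb u.2)
    · exact hω2 u.1 u.2 (ne_of_memout hc u.2) (ne_of_memout hd u.2)
  have hinj : Function.Injective (Sum.elim g h) := by
    intro j1 j2 heq
    rcases j1 with (u | u) | (u | u) <;> rcases j2 with (u' | u') | (u' | u') <;>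
        simp only [Sum.elim_inl, Sum.elim_inr, hg, hh] at heq <;>
        [obtain ⟨e1, e2⟩ := eIdx_eq_same ha u'.2 heq;
         obtain ⟨e1, e2⟩ := eIdx_eq_same ha u'.2 heq;
         obtain ⟨e1, e2⟩ := eIdx_eq_same ha u'.2 heq;
         obtain ⟨e1, e2⟩ := eIdx_eq_same ha u'.2 heq;
         obtain ⟨e1, e2⟩ := eIdx_eq_same hc u'.2 heq;
         obtain ⟨e1, e2⟩ := eIdx_eq_same hc u'.2 heq;
         obtain ⟨e1, e2⟩ := eIdx_eq_same hc u'.2 heq;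
         obtain ⟨e1, e2⟩ := eIdx_eq_same hc u'.2 heq;
         obtain ⟨e1, e2⟩ := eIdx_eq_same hb u'.2 heq;
         obtain ⟨e1, e2⟩ := eIdx_eq_same hb u'.2 heq;
         obtain ⟨e1, e2⟩ := eIdx_eq_same hb u'.2 heq;
         obtain ⟨e1, e2⟩ := eIdx_eq_same hb u'.2 heq;
         obtain ⟨e1, e2⟩ := eIdx_eq_same hd u'.2 heq;
         obtain ⟨e1, e2⟩ := eIdx_eq_same hd u'.2 heq;
         obtain ⟨e1, e2⟩ := eIdx_eq_same hd u'.2 heq;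
         obtain ⟨e1, e2⟩ := eIdx_eq_same hd u'.2 heq] <;>
      first
        | (exact absurd e1 (by assumption))
        | (exact absurd e1.symm (by assumption))
        | simp [Subtype.ext e2]
  calc erdosRenyiMeasure n (1/2 : ℝ) (colSet a b S ∩ colSet c d S)
      ≤ erdosRenyiMeasure n (1/2 : ℝ) {ω | ∀ j, ω (g j) = ω (h j)} := measure_mono hsub
    _ ≤ 2⁻¹ ^ Fintype.card (↥S ⊕ ↥S) := agree_measure_le g h hinj
    _ = 2⁻¹ ^ (2 * S.card) := by rw [Fintype.card_sum, Fintype.card_coe, two_mul]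

lemma isFunctionOf_of_inj {V : Type*} (G : SimpleGraph V) (v : V) (U : Finset V)
    (hv : v ∉ U)
    (hinj : ∀ w w', w ∉ U → w ≠ v → w' ∉ U → w' ≠ v →
      (∀ u : U, G.Adj w u.1 ↔ G.Adj w' u.1) → w = w') :
    G.IsFunctionOf v U := by
  classical
  refine ⟨hv, ⟨fun x => decide (∃ w, w ∉ U ∧ w ≠ v ∧
    (∀ u : U, decide (G.Adj w u.1) = x u) ∧ G.Adj v w), ?_⟩⟩
  intro w hw hwv
  rw [decide_eq_true_iff]
  constructor
  · intro hAdj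
    exact ⟨w, hw, hwv, fun u => by rw [decide_eq_decide], hAdj⟩
  · rintro ⟨w', hw', hwv', hpat, hAdj⟩
    have hww : w' = w := by
      refine hinj w' w hw' hwv' hw hwv (fun u => ?_)
      have := hpat u
      rwa [decide_eq_decide] at this
    exact hww ▸ hAdj

lemma vertexFun_le_of_isFunctionOf {V : Type*} (G : SimpleGraph V) (v : V) (U : Finset V)
    (h : G.IsFunctionOf v U) : G.vertexFun v ≤ U.card :=
  Nat.sInf_le ⟨U, rfl, h⟩

lemma colSet_symm {n : ℕ} {a b : Fin n} {S : Finset (Fin n)} {ω : EdgeIdx n → Bool}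
    (h : ω ∈ colSet a b S) : ω ∈ colSet b a S :=
  fun u hu h1 h2 => (h u hu h2 h1).symm

lemma colSet_trans {n : ℕ} {a b c : Fin n} {S : Finset (Fin n)} {ω : EdgeIdx n → Bool}
    (hab : ω ∈ colSet a b S) (hbc : ω ∈ colSet b c S)
    (hbS : b ∉ S) : ω ∈ colSet a c S := by
  intro u hu h1 h2
  have hb : b ≠ u := fun h => hbS (h ▸ hu)
  exact (hab u hu h1 hb).trans (hbc u hu hb h2)

lemma colSet_of_pattern {n : ℕ} {ω : EdgeIdx n → Bool} {w w' : Fin n} {S : Finset (Fin n)}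
    (hpat : ∀ u ∈ S, ((graphOf n ω).Adj w u ↔ (graphOf n ω).Adj w' u)) :
    ω ∈ colSet w w' S := by
  intro u hu h1 h2
  have h := hpat u hu
  rw [graphOf_adj ω w u h1, graphOf_adj ω w' u h2] at h
  exact Bool.eq_iff_iff.mpr (by simpa using h)

theorem vertexFun_le_of_good {n k : ℕ} (hk : 1 ≤ k) (U₁ : Finset (Fin n))
    (hcard : U₁.card = k) (ω : EdgeIdx n → Bool)
    (HC1 : ∀ w w', w ∉ U₁ → w' ∉ U₁ → w ≠ w' → ω ∉ colSet w w' U₁)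
    (HC2 : ∀ v ∈ U₁, ∀ a b c d : Fin n, a ∉ U₁ → b ∉ U₁ → c ∉ U₁ → d ∉ U₁ →
      a ≠ b → a ≠ c → a ≠ d → b ≠ c → b ≠ d → c ≠ d →
      ¬(ω ∈ colSet a b (U₁.erase v) ∧ ω ∈ colSet c d (U₁.erase v)))
    (v : Fin n) : (graphOf n ω).vertexFun v ≤ k := by
  classical
  set G := graphOf n ω with hG
  by_cases hvU : v ∈ U₁
  · have hdis : ∀ x y : Fin n, x ∉ U₁ → y ∉ U₁ → x ≠ y →
        ω ∈ colSet x y (U₁.erase v) →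
        ∀ (h1 : x ≠ v) (h2 : y ≠ v), ω (eIdx x v h1) ≠ ω (eIdx y v h2) := by
      intro x y hx hy hxy hcol h1 h2 heq
      refine HC1 x y hx hy hxy ?_
      intro u hu hu1 hu2
      by_cases huv : u = v
      · subst huv; exact heq
      · exact hcol u (Finset.mem_erase.mpr ⟨huv, hu⟩) hu1 hu2
    by_cases hex : ∃ a b : Fin n, a ∉ U₁ ∧ b ∉ U₁ ∧ a ≠ b ∧ ω ∈ colSet a b (U₁.erase v)
    · obtain ⟨a, b, haU, hbU, hab, hcolab⟩ := hex
      have havv : a ≠ v := fun h => haU (h ▸ hvU)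
      have hbvv : b ≠ v := fun h => hbU (h ▸ hvU)
      set U : Finset (Fin n) := insert a (U₁.erase v) with hU
      have hvnU : v ∉ U := by
        simp [hU, Finset.mem_insert, Finset.mem_erase, havv.symm]
      have hUcard : U.card = k := by
        rw [hU, Finset.card_insert_of_notMem (fun h => haU (Finset.mem_of_mem_erase h)),
          Finset.card_erase_of_mem hvU, hcard]
        omega
      have hmemU1 : ∀ x : Fin n, x ∉ U → x ≠ v → x ∉ U₁ := by
        intro x hxU hxv hxU1
        exact hxU (Finset.mem_insert_of_mem (Finset.mem_erase.mpr ⟨hxv, hxU1⟩))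
      have hfun : G.IsFunctionOf v U := by
        refine isFunctionOf_of_inj G v U hvnU ?_
        intro w w' hw hwv hw' hw'v hpat
        by_contra hne
        have hwU1 : w ∉ U₁ := hmemU1 w hw hwv
        have hw'U1 : w' ∉ U₁ := hmemU1 w' hw' hw'v
        have hwa : w ≠ a := fun h => hw (h ▸ Finset.mem_insert_self a _)
        have hw'a : w' ≠ a := fun h => hw' (h ▸ Finset.mem_insert_self a _)
        have hpat' : ∀ u ∈ U, (G.Adj w u ↔ G.Adj w' u) := fun u hu => hpat ⟨u, hu⟩
        have hcolww' : ω ∈ colSet w w' (U₁.erase v) := by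
          refine colSet_of_pattern ?_
          intro u hu
          exact hpat' u (Finset.mem_insert_of_mem hu)
        by_cases hwb : w = b
        · subst hwb
          have hcolaw' : ω ∈ colSet a w' (U₁.erase v) :=
            colSet_trans hcolab hcolww'
              (fun h => hwU1 (Finset.mem_of_mem_erase h))
          have d1 := hdis a w haU hwU1 hab hcolab havv hwv
          have d2 := hdis w w' hwU1 hw'U1 hne hcolww' hwv hw'v
          have d3 := hdis a w' haU hw'U1 (fun h => hw'a h.symm) hcolaw' havv hw'v
          revert d1 d2 d3
          cases (ω (eIdx a v havv)) <;> cases (ω (eIdx w v hwv)) <;>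
            cases (ω (eIdx w' v hw'v)) <;> simp
        · by_cases hw'b : w' = b
          · subst hw'b
            have hcolaw : ω ∈ colSet a w (U₁.erase v) :=
              colSet_trans hcolab (colSet_symm hcolww')
                (fun h => hw'U1 (Finset.mem_of_mem_erase h))
            have d1 := hdis a w' haU hw'U1 hab hcolab havv hw'v
            have d2 := hdis w w' hwU1 hw'U1 hne hcolww' hwv hw'v
            have d3 := hdis a w haU hwU1 (fun h => hwa h.symm) hcolaw havv hwv
            revert d1 d2 d3
            cases (ω (eIdx a v havv)) <;> cases (ω (eIdx w v hwv)) <;>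
              cases (ω (eIdx w' v hw'v)) <;> simp
          · exact HC2 v hvU a b w w' haU hbU hwU1 hw'U1 hab
              (fun h => hwa h.symm) (fun h => hw'a h.symm)
              (fun h => hwb h.symm) (fun h => hw'b h.symm) hne ⟨hcolab, hcolww'⟩
      calc G.vertexFun v ≤ U.card := vertexFun_le_of_isFunctionOf G v U hfun
        _ = k := hUcard
    · set U : Finset (Fin n) := U₁.erase v with hU
      have hfun : G.IsFunctionOf v U := by
        refine isFunctionOf_of_inj G v U (Finset.notMem_erase v U₁) ?_
        intro w w' hw hwv hw' hw'v hpat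
        by_contra hne
        have hwU1 : w ∉ U₁ := fun h => hw (Finset.mem_erase.mpr ⟨hwv, h⟩)
        have hw'U1 : w' ∉ U₁ := fun h => hw' (Finset.mem_erase.mpr ⟨hw'v, h⟩)
        exact hex ⟨w, w', hwU1, hw'U1, hne,
          colSet_of_pattern (fun u hu => hpat ⟨u, hu⟩)⟩
      calc G.vertexFun v ≤ U.card := vertexFun_le_of_isFunctionOf G v U hfun
        _ ≤ k := by rw [hU, Finset.card_erase_of_mem hvU, hcard]; omega
  · have hfun : G.IsFunctionOf v U₁ := by
      refine isFunctionOf_of_inj G v U₁ hvU ?_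
      intro w w' hw hwv hw' hw'v hpat
      by_contra hne
      exact HC1 w w' hw hw' hne (colSet_of_pattern (fun u hu => hpat ⟨u, hu⟩))
    calc G.vertexFun v ≤ U₁.card := vertexFun_le_of_isFunctionOf G v U₁ hfun
      _ = k := hcard

lemma growth_lemma : ∀ L : ℕ, 4 ≤ L → 3 * L + 3 ≤ 2 ^ L := by
  intro L hL
  induction L with
  | zero => omega
  | succ m ih =>
    rcases Nat.lt_or_ge m 4 with h | h
    · interval_cases m <;> simp_all <;> omega
    · have := ih h
      have h2 : 2 ^ (m + 1) = 2 * 2 ^ m := by ring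
      omega

lemma nat_key_ineq (k a : ℕ) :
    (a * a - a) * (a + k) ^ 3 + 2 * k * (a * a - a) ^ 2 ≤ (a + k) ^ 5 := by
  set n := a + k with hn
  have ha : a ≤ n := by omega
  have s1 : a * a - a ≤ a * a := Nat.sub_le _ _
  have s2 : (a * a - a) ^ 2 ≤ a ^ 4 := by
    calc (a * a - a) ^ 2 ≤ (a * a) ^ 2 := Nat.pow_le_pow_left s1 2
      _ = a ^ 4 := by ring
  have s3 : 2 * a ^ 4 ≤ n ^ 4 + n ^ 3 * a := by
    have h1 : a ^ 4 ≤ n ^ 4 := Nat.pow_le_pow_left ha 4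
    have h2 : a ^ 4 ≤ n ^ 3 * a := by
      have : a ^ 3 ≤ n ^ 3 := Nat.pow_le_pow_left ha 3
      calc a ^ 4 = a ^ 3 * a := by ring
        _ ≤ n ^ 3 * a := Nat.mul_le_mul_right a this
    omega
  have key : a * a * n ^ 3 + (k * n ^ 4 + k * (n ^ 3 * a)) = n ^ 5 := by
    rw [hn]; ring
  calc (a * a - a) * n ^ 3 + 2 * k * (a * a - a) ^ 2
      ≤ a * a * n ^ 3 + 2 * k * a ^ 4 := by
        have := Nat.mul_le_mul_right (n ^ 3) s1
        have h2 : 2 * k * (a * a - a) ^ 2 ≤ 2 * k * a ^ 4 := Nat.mul_le_mul_left _ s2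
        omega
    _ ≤ a * a * n ^ 3 + k * (n ^ 4 + n ^ 3 * a) := by
        have : 2 * k * a ^ 4 = k * (2 * a ^ 4) := by ring
        rw [this]
        have := Nat.mul_le_mul_left k s3
        omega
    _ = n ^ 5 := by rw [← key]; ring

lemma inv_pow_shift (j m : ℕ) {x : ℝ≥0∞} (hx : x ≤ 2 ^ (j + m)) :
    ((2 : ℝ≥0∞) ^ j)⁻¹ ≤ 2 ^ m * x⁻¹ := by
  have h1 : ((2 : ℝ≥0∞) ^ (j + m))⁻¹ ≤ x⁻¹ := ENNReal.inv_le_inv.mpr hx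
  have h2 : ((2 : ℝ≥0∞) ^ j)⁻¹ = 2 ^ m * ((2 : ℝ≥0∞) ^ (j + m))⁻¹ := by
    rw [pow_add, ENNReal.mul_inv (Or.inl (by positivity)) (Or.inl (by
      exact ENNReal.pow_ne_top ENNReal.ofNat_ne_top)), mul_comm (((2:ℝ≥0∞)^j)⁻¹) _,
      ← mul_assoc, ENNReal.mul_inv_cancel (by positivity)
        (ENNReal.pow_ne_top ENNReal.ofNat_ne_top), one_mul]
  rw [h2]
  exact mul_le_mul_right h1 _

open MeasureTheory in
/-- for large `n`, with probability at least `1 − 1/n` under `μ_{n,1/2}`,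
every vertex of the random graph `G(n,1/2)` is a function of at most `3·log₂ n` vertices. -/
theorem randomGraph_vertexFun_upper_bound :
    ∃ N : ℕ, ∀ n : ℕ, N ≤ n →
      ENNReal.ofReal (1 - 1 / (n : ℝ)) ≤
        erdosRenyiMeasure n (1 / 2 : ℝ)
          {ω : EdgeIdx n → Bool |
            ∀ v : Fin n, ((graphOf n ω).vertexFun v : ℝ) ≤ 3 * Real.logb 2 n} := by
  classical
  refine ⟨2 ^ 10, fun n hn => ?_⟩
  have hn2 : 2 ≤ n := le_trans (by norm_num) hn
  have hn0 : 0 < n := by omega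
  have hnR1 : (1 : ℝ) ≤ (n : ℝ) := by exact_mod_cast hn0
  have hnR2 : (2 : ℝ) ≤ (n : ℝ) := by exact_mod_cast hn2
  set k : ℕ := ⌊3 * Real.logb 2 n⌋₊ with hkdef
  have hlogb_nonneg : (0 : ℝ) ≤ Real.logb 2 n := Real.logb_nonneg (by norm_num) hnR1
  have hkR : (k : ℝ) ≤ 3 * Real.logb 2 n := Nat.floor_le (by positivity)
  have hk1 : 1 ≤ k := by
    have h1 : (1 : ℝ) ≤ Real.logb 2 n := by
      rw [show (1 : ℝ) = Real.logb 2 2 by simp]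
      exact Real.logb_le_logb_of_le (by norm_num) (by norm_num) hnR2
    exact Nat.le_floor (by push_cast; linarith)
  -- `n ^ 3 ≤ 2 ^ (k + 1)`
  have hpow : n ^ 3 ≤ 2 ^ (k + 1) := by
    have h1 : 3 * Real.logb 2 n < (k : ℝ) + 1 := Nat.lt_floor_add_one _
    have h2 : ((n : ℝ)) ^ 3 < (2 : ℝ) ^ (k + 1) := by
      have hx : (2 : ℝ) ^ (3 * Real.logb 2 n) = ((n : ℝ)) ^ (3 : ℕ) := by
        rw [show (3 : ℝ) * Real.logb 2 n = Real.logb 2 n * ((3 : ℕ) : ℝ) by push_cast; ring,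
          Real.rpow_mul (by norm_num : (0:ℝ) ≤ 2), Real.rpow_natCast,
          Real.rpow_logb (by norm_num) (by norm_num) (by linarith)]
      have hy : (2 : ℝ) ^ ((k : ℝ) + 1) = (2 : ℝ) ^ (k + 1) := by
        rw [show ((k : ℝ) + 1) = ((k + 1 : ℕ) : ℝ) by push_cast; ring, Real.rpow_natCast]
      rw [← hx, ← hy]
      exact Real.rpow_lt_rpow_left_iff (by norm_num) |>.mpr h1
    exact_mod_cast h2.le
  -- `k ≤ n`
  have hL : 4 ≤ Nat.log 2 n := by
    have : (2 : ℕ) ^ 4 ≤ n := le_trans (by norm_num) hn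
    exact (Nat.le_log_iff_pow_le (by norm_num) (by omega)).mpr this
  have hkn' : k ≤ 3 * Nat.log 2 n + 3 := by
    set L := Nat.log 2 n with hLdef
    have hlt : (n : ℝ) < 2 ^ (L + 1) := by
      exact_mod_cast Nat.lt_pow_succ_log_self (by norm_num) n
    have hlogblt : Real.logb 2 n < (L : ℝ) + 1 := by
      rw [Real.logb_lt_iff_lt_rpow (by norm_num) (by linarith)]
      rw [show ((L : ℝ) + 1) = ((L + 1 : ℕ) : ℝ) by push_cast; ring, Real.rpow_natCast]
      exact_mod_cast hlt
    have : (k : ℝ) < 3 * ((L : ℝ) + 1) := lt_of_le_of_lt hkR (by linarith)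
    have hklt : k < 3 * (L + 1) := by exact_mod_cast this
    omega
  have hkn : k ≤ n :=
    le_trans hkn' (le_trans (growth_lemma _ hL) (Nat.pow_log_le_self 2 (by omega)))
  -- the fixed vertex subset and index sets
  set U₁ : Finset (Fin n) := (Finset.range k).attachFin
    (fun m hm => lt_of_lt_of_le (Finset.mem_range.mp hm) hkn) with hU₁
  have hU₁card : U₁.card = k := by rw [hU₁, Finset.card_attachFin, Finset.card_range]
  set sOut : Finset (Fin n) := U₁ᶜ with hsOut
  have hsOutcard : sOut.card = n - k := by
    rw [hsOut, Finset.card_compl, hU₁card, Fintype.card_fin]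
  set P₁ : Finset (Fin n × Fin n) := (sOut ×ˢ sOut).filter (fun p => p.1 < p.2) with hP₁
  set Qf : Finset ((Fin n × Fin n) × (Fin n × Fin n)) := (P₁ ×ˢ P₁).filter
    (fun pq => pq.1.1 < pq.2.1 ∧ pq.1.2 ≠ pq.2.1 ∧ pq.1.2 ≠ pq.2.2 ∧ pq.1.1 ≠ pq.2.2) with hQf
  set P₂ : Finset (Fin n × ((Fin n × Fin n) × (Fin n × Fin n))) := U₁ ×ˢ Qf with hP₂
  set B₁ : Set (EdgeIdx n → Bool) := ⋃ p ∈ P₁, colSet p.1 p.2 U₁ with hB₁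
  set B₂ : Set (EdgeIdx n → Bool) := ⋃ t ∈ P₂,
    (colSet t.2.1.1 t.2.1.2 (U₁.erase t.1) ∩ colSet t.2.2.1 t.2.2.2 (U₁.erase t.1)) with hB₂
  -- measure bounds
  have hμB₁ : erdosRenyiMeasure n (1/2 : ℝ) B₁ ≤ (P₁.card : ℝ≥0∞) * 2⁻¹ ^ k := by
    refine le_trans (measure_biUnion_finset_le _ _) ?_
    have hbd : ∀ p ∈ P₁, erdosRenyiMeasure n (1/2 : ℝ) (colSet p.1 p.2 U₁) ≤ 2⁻¹ ^ k := by
      intro p hp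
      obtain ⟨hmem, hlt⟩ := Finset.mem_filter.mp hp
      obtain ⟨h1, h2⟩ := Finset.mem_product.mp hmem
      have := colSet_measure_le p.1 p.2 U₁ (Finset.mem_compl.mp h1) (Finset.mem_compl.mp h2)
        (ne_of_lt hlt)
      rwa [hU₁card] at this
    calc _ ≤ ∑ p ∈ P₁, (2⁻¹ : ℝ≥0∞) ^ k := Finset.sum_le_sum hbd
      _ = (P₁.card : ℝ≥0∞) * 2⁻¹ ^ k := by rw [Finset.sum_const, nsmul_eq_mul]
  have hμB₂ : erdosRenyiMeasure n (1/2 : ℝ) B₂ ≤ (P₂.card : ℝ≥0∞) * 2⁻¹ ^ (2 * (k - 1)) := by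
    refine le_trans (measure_biUnion_finset_le _ _) ?_
    have hbd : ∀ t ∈ P₂, erdosRenyiMeasure n (1/2 : ℝ)
        (colSet t.2.1.1 t.2.1.2 (U₁.erase t.1) ∩ colSet t.2.2.1 t.2.2.2 (U₁.erase t.1))
        ≤ 2⁻¹ ^ (2 * (k - 1)) := by
      intro t ht
      obtain ⟨hv, hq⟩ := Finset.mem_product.mp ht
      obtain ⟨hmem, hlt13, hne23, hne24, hne14⟩ := Finset.mem_filter.mp hq
      obtain ⟨hq1, hq2⟩ := Finset.mem_product.mp hmem
      obtain ⟨hmem1, hlt1⟩ := Finset.mem_filter.mp hq1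
      obtain ⟨ha1, hb1⟩ := Finset.mem_product.mp hmem1
      obtain ⟨hmem2, hlt2⟩ := Finset.mem_filter.mp hq2
      obtain ⟨hc1, hd1⟩ := Finset.mem_product.mp hmem2
      have houta : t.2.1.1 ∉ U₁ := Finset.mem_compl.mp ha1
      have houtb : t.2.1.2 ∉ U₁ := Finset.mem_compl.mp hb1
      have houtc : t.2.2.1 ∉ U₁ := Finset.mem_compl.mp hc1
      have houtd : t.2.2.2 ∉ U₁ := Finset.mem_compl.mp hd1
      have hcarde : (U₁.erase t.1).card = k - 1 := by
        rw [Finset.card_erase_of_mem hv, hU₁card]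
      have := colSet_inter_measure_le t.2.1.1 t.2.1.2 t.2.2.1 t.2.2.2 (U₁.erase t.1)
        (fun h => houta (Finset.mem_of_mem_erase h))
        (fun h => houtb (Finset.mem_of_mem_erase h))
        (fun h => houtc (Finset.mem_of_mem_erase h))
        (fun h => houtd (Finset.mem_of_mem_erase h))
        (ne_of_lt hlt1) (ne_of_lt hlt13) hne14 hne23 hne24 (ne_of_lt hlt2)
      rwa [hcarde] at this
    calc _ ≤ ∑ t ∈ P₂, (2⁻¹ : ℝ≥0∞) ^ (2 * (k - 1)) := Finset.sum_le_sum hbd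
      _ = (P₂.card : ℝ≥0∞) * 2⁻¹ ^ (2 * (k - 1)) := by rw [Finset.sum_const, nsmul_eq_mul]
  -- counting bounds
  have hc1 : 2 * P₁.card ≤ (n - k) * (n - k) - (n - k) := by
    have := two_mul_card_filter_le_offDiag sOut (fun p => p.1 < p.2)
      (fun p hp hswap => lt_asymm hp hswap) (fun p hp => ne_of_lt hp)
    rwa [hsOutcard] at this
  have hc2 : 2 * Qf.card ≤ P₁.card * P₁.card :=
    two_mul_card_filter_le P₁ _ (fun p hp hswap => lt_asymm hp.1 hswap.1)
  have hP₂card : P₂.card = k * Qf.card := by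
    rw [hP₂, Finset.card_product, hU₁card]
  -- the key natural-number inequality
  have hkey : 2 * P₁.card * n ^ 3 + 16 * (k * Qf.card) ≤ n ^ 5 := by
    set a : ℕ := n - k with hadef
    have hM : 2 * P₁.card ≤ a * a - a := hc1
    have h8 : 8 * Qf.card ≤ (a * a - a) ^ 2 := by
      calc 8 * Qf.card = 4 * (2 * Qf.card) := by ring
        _ ≤ 4 * (P₁.card * P₁.card) := Nat.mul_le_mul_left 4 hc2
        _ = (2 * P₁.card) * (2 * P₁.card) := by ring
        _ ≤ (a * a - a) * (a * a - a) := Nat.mul_le_mul hM hM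
        _ = (a * a - a) ^ 2 := by ring
    have h16 : 16 * (k * Qf.card) ≤ 2 * k * (a * a - a) ^ 2 := by
      calc 16 * (k * Qf.card) = 2 * k * (8 * Qf.card) := by ring
        _ ≤ 2 * k * ((a * a - a) ^ 2) := Nat.mul_le_mul_left _ h8
    have hsum : a + k = n := Nat.sub_add_cancel hkn
    have hbig := nat_key_ineq k a
    rw [hsum] at hbig
    have h1 : 2 * P₁.card * n ^ 3 ≤ (a * a - a) * n ^ 3 := Nat.mul_le_mul_right _ hM
    omega
  -- ENNReal arithmetic
  have e0 : ((n : ℝ≥0∞)) ^ 3 ≤ 2 ^ (k + 1) := by exact_mod_cast hpow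
  have e0' : ((n : ℝ≥0∞)) ^ 6 ≤ 2 ^ (2 * (k - 1) + 4) := by
    have hexp : 2 * (k - 1) + 4 = (k + 1) + (k + 1) := by omega
    rw [hexp, pow_add]
    calc (n : ℝ≥0∞) ^ 6 = n ^ 3 * n ^ 3 := by ring
      _ ≤ 2 ^ (k + 1) * 2 ^ (k + 1) := mul_le_mul' e0 e0
  have e1 : (2⁻¹ : ℝ≥0∞) ^ k ≤ 2 ^ 1 * (((n : ℝ≥0∞)) ^ 3)⁻¹ := by
    have h := inv_pow_shift k 1 e0
    simpa [ENNReal.inv_pow] using h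
  have e2 : (2⁻¹ : ℝ≥0∞) ^ (2 * (k - 1)) ≤ 2 ^ 4 * (((n : ℝ≥0∞)) ^ 6)⁻¹ := by
    have h := inv_pow_shift (2 * (k - 1)) 4 e0'
    simpa [ENNReal.inv_pow] using h
  have hnn0 : (n : ℝ≥0∞) ≠ 0 := by
    simp [hn0.ne']
  have hnnt : (n : ℝ≥0∞) ≠ ⊤ := ENNReal.natCast_ne_top n
  have hinv3 : (((n : ℝ≥0∞)) ^ 3)⁻¹ = (n : ℝ≥0∞) ^ 3 * (((n : ℝ≥0∞)) ^ 6)⁻¹ := by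
    have h6 : ((n : ℝ≥0∞)) ^ 6 = (n : ℝ≥0∞) ^ 3 * (n : ℝ≥0∞) ^ 3 := by ring
    rw [h6, ENNReal.mul_inv (Or.inl (pow_ne_zero _ hnn0)) (Or.inl (ENNReal.pow_ne_top hnnt)),
      ← mul_assoc, ENNReal.mul_inv_cancel (pow_ne_zero _ hnn0) (ENNReal.pow_ne_top hnnt),
      one_mul]
  have hfin : ((n : ℝ≥0∞)) ^ 5 * (((n : ℝ≥0∞)) ^ 6)⁻¹ = ((n : ℝ≥0∞))⁻¹ := by
    have h6 : ((n : ℝ≥0∞)) ^ 6 = (n : ℝ≥0∞) ^ 5 * (n : ℝ≥0∞) := by ring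
    rw [h6, ENNReal.mul_inv (Or.inl (pow_ne_zero _ hnn0)) (Or.inl (ENNReal.pow_ne_top hnnt)),
      ← mul_assoc, ENNReal.mul_inv_cancel (pow_ne_zero _ hnn0) (ENNReal.pow_ne_top hnnt),
      one_mul]
  have hENN : (P₁.card : ℝ≥0∞) * 2⁻¹ ^ k + (P₂.card : ℝ≥0∞) * 2⁻¹ ^ (2 * (k - 1))
      ≤ ((n : ℝ≥0∞))⁻¹ := by
    calc (P₁.card : ℝ≥0∞) * 2⁻¹ ^ k + (P₂.card : ℝ≥0∞) * 2⁻¹ ^ (2 * (k - 1))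
        ≤ (P₁.card : ℝ≥0∞) * (2 ^ 1 * (((n : ℝ≥0∞)) ^ 3)⁻¹)
          + (P₂.card : ℝ≥0∞) * (2 ^ 4 * (((n : ℝ≥0∞)) ^ 6)⁻¹) :=
        add_le_add (mul_le_mul_right e1 _) (mul_le_mul_right e2 _)
      _ = ((2 * P₁.card * n ^ 3 : ℕ) : ℝ≥0∞) * (((n : ℝ≥0∞)) ^ 6)⁻¹
          + ((16 * (k * Qf.card) : ℕ) : ℝ≥0∞) * (((n : ℝ≥0∞)) ^ 6)⁻¹ := by
        rw [hinv3, hP₂card]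
        push_cast
        ring
      _ = ((2 * P₁.card * n ^ 3 + 16 * (k * Qf.card) : ℕ) : ℝ≥0∞) * (((n : ℝ≥0∞)) ^ 6)⁻¹ := by
        push_cast
        ring
      _ ≤ ((n ^ 5 : ℕ) : ℝ≥0∞) * (((n : ℝ≥0∞)) ^ 6)⁻¹ :=
        mul_le_mul_left (Nat.cast_le.mpr hkey) _
      _ = ((n : ℝ≥0∞))⁻¹ := by
        push_cast
        exact hfin
  have hbad : erdosRenyiMeasure n (1/2 : ℝ) (B₁ ∪ B₂) ≤ ((n : ℝ≥0∞))⁻¹ :=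
    le_trans (measure_union_le _ _) (le_trans (add_le_add hμB₁ hμB₂) hENN)
  -- event inclusion
  have hincl : (B₁ ∪ B₂)ᶜ ⊆
      {ω : EdgeIdx n → Bool | ∀ v : Fin n,
        ((graphOf n ω).vertexFun v : ℝ) ≤ 3 * Real.logb 2 n} := by
    intro ω hω
    have hnB₁ : ω ∉ B₁ := fun h => hω (Or.inl h)
    have hnB₂ : ω ∉ B₂ := fun h => hω (Or.inr h)
    have HC1 : ∀ w w', w ∉ U₁ → w' ∉ U₁ → w ≠ w' → ω ∉ colSet w w' U₁ := by
      intro w w' hw hw' hne hcol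
      rcases hne.lt_or_gt with hlt | hlt
      · exact hnB₁ (Set.mem_iUnion₂.mpr ⟨(w, w'), Finset.mem_filter.mpr
          ⟨Finset.mem_product.mpr ⟨Finset.mem_compl.mpr hw, Finset.mem_compl.mpr hw'⟩, hlt⟩,
          hcol⟩)
      · exact hnB₁ (Set.mem_iUnion₂.mpr ⟨(w', w), Finset.mem_filter.mpr
          ⟨Finset.mem_product.mpr ⟨Finset.mem_compl.mpr hw', Finset.mem_compl.mpr hw⟩, hlt⟩,
          colSet_symm hcol⟩)
    have key : ∀ v, v ∈ U₁ → ∀ a b c d : Fin n, a ∉ U₁ → b ∉ U₁ → c ∉ U₁ → d ∉ U₁ →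
        a < b → c < d → a < c → b ≠ c → b ≠ d → a ≠ d →
        ¬(ω ∈ colSet a b (U₁.erase v) ∧ ω ∈ colSet c d (U₁.erase v)) := by
      intro v hv a b c d ha hb hc hd h1 h2 h3 h4 h5 h6 hcol
      refine hnB₂ (Set.mem_iUnion₂.mpr ⟨(v, ((a, b), (c, d))), ?_, hcol⟩)
      refine Finset.mem_product.mpr ⟨hv, Finset.mem_filter.mpr ⟨?_, h3, h4, h5, h6⟩⟩
      refine Finset.mem_product.mpr ⟨?_, ?_⟩
      · exact Finset.mem_filter.mpr ⟨Finset.mem_product.mpr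
          ⟨Finset.mem_compl.mpr ha, Finset.mem_compl.mpr hb⟩, h1⟩
      · exact Finset.mem_filter.mpr ⟨Finset.mem_product.mpr
          ⟨Finset.mem_compl.mpr hc, Finset.mem_compl.mpr hd⟩, h2⟩
    have HC2 : ∀ v ∈ U₁, ∀ a b c d : Fin n, a ∉ U₁ → b ∉ U₁ → c ∉ U₁ → d ∉ U₁ →
        a ≠ b → a ≠ c → a ≠ d → b ≠ c → b ≠ d → c ≠ d →
        ¬(ω ∈ colSet a b (U₁.erase v) ∧ ω ∈ colSet c d (U₁.erase v)) := by
      rintro v hv a b c d ha hb hc hd hab hac had hbc hbd hcd ⟨h1, h2⟩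
      rcases hab.lt_or_gt with s1 | s1 <;> rcases hcd.lt_or_gt with s2 | s2
      · rcases hac.lt_or_gt with s3 | s3
        · exact key v hv a b c d ha hb hc hd s1 s2 s3 hbc hbd had ⟨h1, h2⟩
        · exact key v hv c d a b hc hd ha hb s2 s1 s3 had.symm hbd.symm hbc.symm ⟨h2, h1⟩
      · rcases had.lt_or_gt with s3 | s3
        · exact key v hv a b d c ha hb hd hc s1 s2 s3 hbd hbc hac ⟨h1, colSet_symm h2⟩
        · exact key v hv d c a b hd hc ha hb s2 s1 s3 hac.symm hbc.symm hbd.symm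
            ⟨colSet_symm h2, h1⟩
      · rcases hbc.lt_or_gt with s3 | s3
        · exact key v hv b a c d hb ha hc hd s1 s2 s3 hac had hbd ⟨colSet_symm h1, h2⟩
        · exact key v hv c d b a hc hd hb ha s2 s1 s3 hbd.symm had.symm hac.symm
            ⟨h2, colSet_symm h1⟩
      · rcases hbd.lt_or_gt with s3 | s3
        · exact key v hv b a d c hb ha hd hc s1 s2 s3 had hac hbc
            ⟨colSet_symm h1, colSet_symm h2⟩
        · exact key v hv d c b a hd hc hb ha s2 s1 s3 hbc.symm hac.symm had.symm
            ⟨colSet_symm h2, colSet_symm h1⟩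
    intro v
    have hvf : (graphOf n ω).vertexFun v ≤ k :=
      vertexFun_le_of_good hk1 U₁ hU₁card ω HC1 HC2 v
    calc ((graphOf n ω).vertexFun v : ℝ) ≤ (k : ℝ) := by exact_mod_cast hvf
      _ ≤ 3 * Real.logb 2 n := hkR
  -- conclude
  have h1 : (1 : ℝ≥0∞) ≤ erdosRenyiMeasure n (1/2 : ℝ)
      {ω : EdgeIdx n → Bool | ∀ v : Fin n,
        ((graphOf n ω).vertexFun v : ℝ) ≤ 3 * Real.logb 2 n} + ((n : ℝ≥0∞))⁻¹ := by
    have huniv : (Set.univ : Set (EdgeIdx n → Bool)) = (B₁ ∪ B₂)ᶜ ∪ (B₁ ∪ B₂) := by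
      rw [Set.compl_union_self]
    calc (1 : ℝ≥0∞) = erdosRenyiMeasure n (1/2 : ℝ) Set.univ := measure_univ.symm
      _ ≤ erdosRenyiMeasure n (1/2 : ℝ) ((B₁ ∪ B₂)ᶜ) +
          erdosRenyiMeasure n (1/2 : ℝ) (B₁ ∪ B₂) := by
        rw [huniv]; exact measure_union_le _ _
      _ ≤ _ := add_le_add (measure_mono hincl) hbad
  have hofReal : ENNReal.ofReal (1 - 1 / (n : ℝ)) = 1 - ((n : ℝ≥0∞))⁻¹ := by
    rw [ENNReal.ofReal_sub _ (by positivity), ENNReal.ofReal_one, one_div,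
      ENNReal.ofReal_inv_of_pos (by exact_mod_cast hn0), ENNReal.ofReal_natCast]
  rw [hofReal]
  exact tsub_le_iff_right.mpr h1
end

section
/- There exists a constant C > 0 such that every circular arc graph G on n ≥ 1 vertices satisfies sd(G) ≤ C·√n. -/
/-- The arc of the circle `AddCircle c` obtained as the image of the closed
interval `[x, x + l]` under the quotient map `ℝ → ℝ/cℤ`. -/
def circleArc (c x l : ℝ) : Set (AddCircle c) :=
  (fun t : ℝ => (t : AddCircle c)) '' Set.Icc x (x + l)

/-- `G` is a circular arc graph: the intersection graph of arcs of a circle. -/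
def IsCircularArcGraph {V : Type*} (G : SimpleGraph V) : Prop :=
  ∃ c : ℝ, 0 < c ∧ ∃ a l : V → ℝ, (∀ v, 0 ≤ l v ∧ l v < c) ∧
    ∀ u v : V, u ≠ v →
      (G.Adj u v ↔ (circleArc c (a u) (l u) ∩ circleArc c (a v) (l v)).Nonempty)

/-- `G` is an interval graph: the intersection graph of closed intervals of `ℝ`. -/
def IsIntervalGraph {V : Type*} (G : SimpleGraph V) : Prop :=
  ∃ a b : V → ℝ, (∀ v, a v ≤ b v) ∧
    ∀ u v : V, u ≠ v →
      (G.Adj u v ↔ (Set.Icc (a u) (b u) ∩ Set.Icc (a v) (b v)).Nonempty)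



noncomputable section SDAux

open Finset

local notation "F" => Int.fract

lemma fract_congr' (x y : ℝ) (k : ℤ) (h : x - y = k) : F x = F y := by
  rw [Int.fract_eq_fract]; exact ⟨k, h⟩

lemma fract_self_of (x : ℝ) (h0 : 0 ≤ x) (h1 : x < 1) : F x = x :=
  Int.fract_eq_self.2 ⟨h0, h1⟩

lemma fract_bounds (x : ℝ) : 0 ≤ F x ∧ F x < 1 := ⟨Int.fract_nonneg x, Int.fract_lt_one x⟩

/-- `POS` : transfer circular-distance comparison to linear position comparison. -/
lemma pos_mem_Icc {q x y : ℝ} (h : F (q - x) ≤ F (y - x)) (hxy : F x ≤ F y) :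
    F q ∈ Set.Icc (F x) (F y) := by
  have hd : F (y - x) = F y - F x := by
    have h1 : F (y - x) = F (F y - F x) := by
      apply fract_congr' _ _ (⌊y⌋ - ⌊x⌋)
      have := Int.floor_add_fract y; have := Int.floor_add_fract x
      push_cast; linarith
    rw [h1, fract_self_of]
    · linarith
    · linarith [Int.fract_lt_one y, Int.fract_nonneg x]
  have hq : F q = F x + F (q - x) := by
    have h1 : F q = F (F x + F (q - x)) := by
      apply fract_congr' _ _ (⌊x⌋ + ⌊q - x⌋)
      have := Int.floor_add_fract x; have := Int.floor_add_fract (q - x)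
      push_cast; linarith
    rw [h1, fract_self_of]
    · linarith [Int.fract_nonneg x, Int.fract_nonneg (q - x)]
    · have : F x + F (q - x) ≤ F x + F (y - x) := by linarith
      rw [hd] at this
      calc F x + F (q-x) ≤ F y := by linarith
        _ < 1 := Int.fract_lt_one y
  constructor
  · rw [hq]; linarith [Int.fract_nonneg (q - x)]
  · rw [hq]; rw [hd] at h; linarith

end SDAux

section SDAux2
open Finset
local notation "F" => Int.fract

lemma fract_eq_sub_one {x : ℝ} (h0 : 1 ≤ x) (h1 : x < 2) : Int.fract x = x - 1 := by
  have : Int.fract x = Int.fract (x - 1) := by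
    apply fract_congr' _ _ 1; push_cast; ring
  rw [this]; exact fract_self_of _ (by linarith) (by linarith)

lemma fract_eq_add_one {x : ℝ} (h0 : -1 ≤ x) (h1 : x < 0) : Int.fract x = x + 1 := by
  have : Int.fract x = Int.fract (x + 1) := by
    apply fract_congr' _ _ (-1); push_cast; ring
  rw [this]; exact fract_self_of _ (by linarith) (by linarith)

/-- Arc `w` contains point `au` but not `av`: then both (A) the right endpoint of `w`
is in the ccw segment from `au` to `av`, and (B) the left endpoint of `w` is in the
ccw segment from `av` to `au`. -/
lemma h2b_core {au av aw lw : ℝ} (hlw0 : 0 ≤ lw) (hlw1 : lw < 1)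
    (hu : F (au - aw) ≤ lw) (hv : ¬ F (av - aw) ≤ lw) :
    F (aw + lw - au) ≤ F (av - au) ∧ F (aw - av) ≤ F (au - av) := by
  set s := F (au - aw) with hs
  set δ := F (av - au) with hδ
  have hs0 : 0 ≤ s := Int.fract_nonneg _
  have hδ0 : 0 ≤ δ := Int.fract_nonneg _
  have hδ1 : δ < 1 := Int.fract_lt_one _
  have hvs : F (av - aw) = F (δ + s) := by
    apply fract_congr' _ _ (⌊av - au⌋ + ⌊au - aw⌋)
    have := Int.floor_add_fract (av - au); have := Int.floor_add_fract (au - aw)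
    push_cast; linarith
  -- show δ + s < 1 and lw < δ + s
  have key : δ + s < 1 ∧ lw < δ + s := by
    by_cases hcase : δ + s < 1
    · refine ⟨hcase, ?_⟩
      have : F (δ + s) = δ + s := fract_self_of _ (by linarith) hcase
      rw [hvs, this] at hv; linarith
    · exfalso
      push_neg at hcase
      have h2 : δ + s - 1 < 1 := by linarith
      have h0 : 0 ≤ δ + s - 1 := by linarith
      have : F (δ + s) = δ + s - 1 := fract_eq_sub_one (by linarith) (by linarith)
      rw [hvs, this] at hv
      -- δ + s - 1 > lw ≥ s gives δ > 1, contradiction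
      have : lw < δ + s - 1 := by linarith
      linarith
  obtain ⟨k1, k2⟩ := key
  constructor
  · have h1 : F (aw + lw - au) = F (lw - s) := by
      apply fract_congr' _ _ (-⌊au - aw⌋)
      have := Int.floor_add_fract (au - aw)
      push_cast; linarith
    have h2 : F (lw - s) = lw - s := fract_self_of _ (by linarith) (by linarith)
    rw [h1, h2]; linarith
  · have hδpos : 0 < δ := by linarith
    have h1 : F (aw - av) = F (-(δ + s)) := by
      apply fract_congr' _ _ (-⌊av - au⌋ - ⌊au - aw⌋)
      have := Int.floor_add_fract (av - au); have := Int.floor_add_fract (au - aw)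
      push_cast; linarith
    have h2 : F (au - av) = F (-δ) := by
      apply fract_congr' _ _ (-⌊av - au⌋)
      have := Int.floor_add_fract (av - au)
      push_cast; linarith
    have hds : 0 < δ + s := by linarith
    have e1 : F (-(δ + s)) = 1 - (δ + s) := by
      rw [fract_eq_add_one (by linarith) (by linarith)]; ring
    have e2 : F (-δ) = 1 - δ := by
      rw [fract_eq_add_one (by linarith) (by linarith)]; ring
    rw [h1, h2, e1, e2]; linarith

end SDAux2

section SDAux3
local notation "F" => Int.fract

/-- Point `x` lies in arc `u` but not in arc `v` (arcs with equal wrap flag):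
its position is between the positions of the left endpoints or between those of
the right endpoints. -/
lemma h2a_core {au lu av lv x : ℝ} (hlu0 : 0 ≤ lu) (hlu1 : lu < 1)
    (hlv0 : 0 ≤ lv) (hlv1 : lv < 1)
    (hwrap : (1 ≤ F au + lu ↔ 1 ≤ F av + lv))
    (h1 : F (x - au) ≤ lu) (h2 : ¬ F (x - av) ≤ lv) :
    (F au ≤ F x ∧ F x ≤ F av) ∨
      (F (av + lv) ≤ F x ∧ F x ≤ F (au + lu)) := by
  set ξ : ℝ := F au + F (x - au) with hξdef
  have hau0 : 0 ≤ F au := Int.fract_nonneg _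
  have hau1 : F au < 1 := Int.fract_lt_one _
  have hav0 : 0 ≤ F av := Int.fract_nonneg _
  have hav1 : F av < 1 := Int.fract_lt_one _
  have hfx0 : 0 ≤ F (x - au) := Int.fract_nonneg _
  have hFx : F ξ = F x := by
    apply fract_congr' _ _ (-⌊au⌋ - ⌊x - au⌋)
    have := Int.floor_add_fract au; have := Int.floor_add_fract (x - au)
    push_cast; linarith
  have hξl : F au ≤ ξ := by linarith
  have hξu : ξ ≤ F au + lu := by linarith
  have hnot : ¬ (F av ≤ ξ ∧ ξ ≤ F av + lv) := by
    rintro ⟨ha, hb⟩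
    apply h2
    have e1 : F (x - av) = F (ξ - F av) := by
      apply fract_congr' _ _ (⌊au⌋ + ⌊x - au⌋ - ⌊av⌋)
      have := Int.floor_add_fract au; have := Int.floor_add_fract (x - au)
      have := Int.floor_add_fract av
      push_cast; linarith
    rw [e1, fract_self_of _ (by linarith) (by linarith)]
    linarith
  rcases not_and_or.1 hnot with hlt | hgt
  · -- ξ < F av : left segment
    push_neg at hlt
    left
    have : F ξ = ξ := fract_self_of _ (by linarith) (by linarith)
    rw [← hFx, this]
    exact ⟨hξl, le_of_lt hlt⟩
  · -- ξ > F av + lv : right segment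
    push_neg at hgt
    right
    by_cases hw : 1 ≤ F au + lu
    · have hwv : 1 ≤ F av + lv := hwrap.1 hw
      have ebu : F (au + lu) = F au + lu - 1 := by
        have : F (au + lu) = F (F au + lu) := by
          apply fract_congr' _ _ (⌊au⌋)
          have := Int.floor_add_fract au; push_cast; linarith
        rw [this]; exact fract_eq_sub_one hw (by linarith)
      have ebv : F (av + lv) = F av + lv - 1 := by
        have : F (av + lv) = F (F av + lv) := by
          apply fract_congr' _ _ (⌊av⌋)
          have := Int.floor_add_fract av; push_cast; linarith
        rw [this]; exact fract_eq_sub_one hwv (by linarith)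
      have ex : F x = ξ - 1 := by
        rw [← hFx]; exact fract_eq_sub_one (by linarith) (by linarith)
      rw [ebu, ebv, ex]
      constructor <;> linarith
    · have hwv : ¬ 1 ≤ F av + lv := fun h => hw (hwrap.2 h)
      push_neg at hw; push_neg at hwv
      have ebu : F (au + lu) = F au + lu := by
        have : F (au + lu) = F (F au + lu) := by
          apply fract_congr' _ _ (⌊au⌋)
          have := Int.floor_add_fract au; push_cast; linarith
        rw [this]; exact fract_self_of _ (by linarith) (by linarith)
      have ebv : F (av + lv) = F av + lv := by
        have : F (av + lv) = F (F av + lv) := by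
          apply fract_congr' _ _ (⌊av⌋)
          have := Int.floor_add_fract av; push_cast; linarith
        rw [this]; exact fract_self_of _ (by linarith) (by linarith)
      have ex : F x = ξ := by
        rw [← hFx]; exact fract_self_of _ (by linarith) (by linarith)
      rw [ebu, ebv, ex]
      constructor <;> linarith

end SDAux3

section SDAux4
local notation "F" => Int.fract

/-- Characterization of distinguishers for two arcs sharing their left endpoint. -/
lemma char1a {au lu av lv aw lw p : ℝ}
    (hu : F au = p) (hv : F av = p) (hluv : lu ≤ lv)
    (hx : ((F (au - aw) ≤ lw ∨ F (aw - au) ≤ lu) ∧ ¬ (F (av - aw) ≤ lw ∨ F (aw - av) ≤ lv)) ∨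
          (¬ (F (au - aw) ≤ lw ∨ F (aw - au) ≤ lu) ∧ (F (av - aw) ≤ lw ∨ F (aw - av) ≤ lv))) :
    lu < F (aw - p) ∧ F (aw - p) ≤ lv := by
  have hfau : au - ⌊au⌋ = p := hu
  have hfav : av - ⌊av⌋ = p := hv
  have e1 : F (aw - au) = F (aw - p) := by
    apply fract_congr' _ _ (-⌊au⌋); push_cast; linarith
  have e2 : F (aw - av) = F (aw - p) := by
    apply fract_congr' _ _ (-⌊av⌋); push_cast; linarith
  have e3 : F (au - aw) = F (-(aw - p)) := by
    apply fract_congr' _ _ (⌊au⌋); push_cast; linarith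
  have e4 : F (av - aw) = F (-(aw - p)) := by
    apply fract_congr' _ _ (⌊av⌋); push_cast; linarith
  rw [e1, e3] at hx; rw [e2, e4] at hx
  rcases hx with ⟨h1, h2⟩ | ⟨h1, h2⟩
  · push_neg at h2
    exfalso
    rcases h1 with h1 | h1
    · linarith [h2.1]
    · linarith [h2.2]
  · push_neg at h1
    rcases h2 with h2 | h2
    · exfalso; linarith [h1.1]
    · exact ⟨h1.2, h2⟩

lemma adj_iff_1b {x lu lw : ℝ} (hx0 : 0 ≤ x) (hx1 : x < 1)
    (hlu0 : 0 ≤ lu) (hlu1 : lu < 1) (hlw0 : 0 ≤ lw) (hlw1 : lw < 1) :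
    (F (x - lu) ≤ lw ∨ F (lu - x) ≤ lu) ↔ x ≤ lu + lw := by
  by_cases hxl : x ≤ lu
  · constructor
    · intro _; linarith
    · intro _
      right
      rw [fract_self_of _ (by linarith) (by linarith)]; linarith
  · push_neg at hxl
    have eA : F (x - lu) = x - lu := fract_self_of _ (by linarith) (by linarith)
    have eB : F (lu - x) = lu - x + 1 := fract_eq_add_one (by linarith) (by linarith)
    rw [eA, eB]
    constructor
    · rintro (h | h) <;> linarith
    · intro h; left; linarith

/-- Characterization of distinguishers for two arcs sharing their right endpoint. -/
lemma char1b {au lu av lv aw lw p : ℝ}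
    (hlu0 : 0 ≤ lu) (hlu1 : lu < 1) (hlv0 : 0 ≤ lv) (hlv1 : lv < 1)
    (hlw0 : 0 ≤ lw) (hlw1 : lw < 1)
    (hu : F (au + lu) = p) (hv : F (av + lv) = p) (hluv : lu ≤ lv)
    (hx : ((F (au - aw) ≤ lw ∨ F (aw - au) ≤ lu) ∧ ¬ (F (av - aw) ≤ lw ∨ F (aw - av) ≤ lv)) ∨
          (¬ (F (au - aw) ≤ lw ∨ F (aw - au) ≤ lu) ∧ (F (av - aw) ≤ lw ∨ F (aw - av) ≤ lv))) :
    lu < F (p - (aw + lw)) ∧ F (p - (aw + lw)) ≤ lv := by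
  set x := F (p - aw) with hxdef
  have hx0 : 0 ≤ x := Int.fract_nonneg _
  have hx1 : x < 1 := Int.fract_lt_one _
  have hfau : au + lu - ⌊au + lu⌋ = p := hu
  have hfav : av + lv - ⌊av + lv⌋ = p := hv
  have hpw : p - aw - ⌊p - aw⌋ = x := rfl
  have e1 : F (au - aw) = F (x - lu) := by
    apply fract_congr' _ _ (⌊au + lu⌋ + ⌊p - aw⌋); push_cast; linarith
  have e2 : F (aw - au) = F (lu - x) := by
    apply fract_congr' _ _ (-⌊au + lu⌋ - ⌊p - aw⌋); push_cast; linarith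
  have e3 : F (av - aw) = F (x - lv) := by
    apply fract_congr' _ _ (⌊av + lv⌋ + ⌊p - aw⌋); push_cast; linarith
  have e4 : F (aw - av) = F (lv - x) := by
    apply fract_congr' _ _ (-⌊av + lv⌋ - ⌊p - aw⌋); push_cast; linarith
  rw [e1, e2] at hx; rw [e3, e4] at hx
  rw [adj_iff_1b hx0 hx1 hlu0 hlu1 hlw0 hlw1] at hx
  rw [adj_iff_1b hx0 hx1 hlv0 hlv1 hlw0 hlw1] at hx
  have hxrange : lu + lw < x ∧ x ≤ lv + lw := by
    rcases hx with ⟨h1, h2⟩ | ⟨h1, h2⟩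
    · exfalso; exact h2 (by linarith)
    · exact ⟨lt_of_not_ge h1, h2⟩
  have ekey : F (p - (aw + lw)) = F (x - lw) := by
    apply fract_congr' _ _ (⌊p - aw⌋); push_cast; linarith
  rw [ekey, fract_self_of _ (by linarith [hxrange.1]) (by linarith [hxrange.2])]
  exact ⟨by linarith [hxrange.1], by linarith [hxrange.2]⟩

end SDAux4

section SDCount
open Finset

variable {α : Type} [Fintype α]

open Classical in
/-- rank of a real number among the values of `P`. -/
noncomputable def rnk (P : α → ℝ) (x : ℝ) : ℕ :=
  (Finset.univ.filter (fun e => P e < x)).card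

open Classical in
lemma rnk_mono (P : α → ℝ) {x y : ℝ} (h : x ≤ y) : rnk P x ≤ rnk P y := by
  classical
  apply Finset.card_le_card
  intro e he
  simp only [Finset.mem_filter, Finset.mem_univ, true_and] at he ⊢
  convert_to P e < y
  · exact lt_of_lt_of_le (by exact_mod_cast he) h

lemma rnk_le_card (P : α → ℝ) (x : ℝ) : rnk P x ≤ Fintype.card α := by
  classical
  exact le_trans (Finset.card_le_card (Finset.filter_subset _ _)) (le_of_eq (Finset.card_univ))

/-- block index of a real number. -/
noncomputable def blk (P : α → ℝ) (K : ℕ) (x : ℝ) : ℕ := rnk P x / K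

lemma blk_between (P : α → ℝ) (K : ℕ) {x q z : ℝ} (hxq : x ≤ q) (hqz : q ≤ z)
    (h : blk P K x = blk P K z) : blk P K q = blk P K x := by
  have h1 := Nat.div_le_div_right (c := K) (rnk_mono P hxq)
  have h2 := Nat.div_le_div_right (c := K) (rnk_mono P hqz)
  unfold blk at *
  omega

open Classical in
lemma blk_card_le (P : α → ℝ) (K : ℕ) (hK : 0 < K)
    (hmult : ∀ e : α, (Finset.univ.filter (fun e' => P e' = P e)).card ≤ K) (j : ℕ) :
    (Finset.univ.filter (fun e => blk P K (P e) = j)).card ≤ 2 * K := by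
  classical
  set Fj := Finset.univ.filter (fun e => blk P K (P e) = j) with hFj
  rcases Fj.eq_empty_or_nonempty with he | hne
  · rw [he]; simp
  obtain ⟨e₀, he₀, hmax⟩ := Finset.exists_max_image Fj P hne
  have hsplit := Finset.card_filter_add_card_filter_not
    (s := Fj) (p := fun e => P e = P e₀)
  have h1 : (Fj.filter (fun e => P e = P e₀)).card ≤ K := by
    refine le_trans (Finset.card_le_card ?_) (hmult e₀)
    intro e he
    simp only [Finset.mem_filter, Finset.mem_univ, true_and] at he ⊢
    exact he.2
  have h2 : (Fj.filter (fun e => ¬ P e = P e₀)).card ≤ K - 1 := by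
    set S2 := Fj.filter (fun e => ¬ P e = P e₀) with hS2
    rcases S2.eq_empty_or_nonempty with hse | hsne
    · rw [hse]; simp
    obtain ⟨e₁, he₁, hmin⟩ := Finset.exists_min_image S2 P hsne
    have he₁Fj : e₁ ∈ Fj := (Finset.mem_filter.1 he₁).1
    have hlt : P e₁ < P e₀ :=
      lt_of_le_of_ne (hmax e₁ he₁Fj) (Finset.mem_filter.1 he₁).2
    have hsub : S2 ⊆ Finset.univ.filter (fun e => P e₁ ≤ P e ∧ P e < P e₀) := by
      intro e he
      have heFj : e ∈ Fj := (Finset.mem_filter.1 he).1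
      simp only [Finset.mem_filter, Finset.mem_univ, true_and]
      exact ⟨hmin e he, lt_of_le_of_ne (hmax e heFj) (Finset.mem_filter.1 he).2⟩
    have hcard : rnk P (P e₁) + (Finset.univ.filter
        (fun e => P e₁ ≤ P e ∧ P e < P e₀)).card = rnk P (P e₀) := by
      have := Finset.card_filter_add_card_filter_not
        (s := Finset.univ.filter (fun e => P e < P e₀)) (p := fun e => P e < P e₁)
      have eA : (Finset.univ.filter (fun e => P e < P e₀)).filter (fun e => P e < P e₁)
          = Finset.univ.filter (fun e => P e < P e₁) := by
        ext e
        simp only [Finset.mem_filter, Finset.mem_univ, true_and]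
        exact ⟨fun h => h.2, fun h => ⟨lt_trans h hlt, h⟩⟩
      have eB : (Finset.univ.filter (fun e => P e < P e₀)).filter (fun e => ¬ P e < P e₁)
          = Finset.univ.filter (fun e => P e₁ ≤ P e ∧ P e < P e₀) := by
        ext e
        simp only [Finset.mem_filter, Finset.mem_univ, true_and, not_lt]
        tauto
      rw [eA, eB] at this
      exact this
    -- rank bounds from block membership
    have hb0 : blk P K (P e₀) = j := (Finset.mem_filter.1 he₀).2
    have hb1 : blk P K (P e₁) = j := (Finset.mem_filter.1 he₁Fj).2
    unfold blk at hb0 hb1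
    have e0 : rnk P (P e₀) = K * j + rnk P (P e₀) % K := by
      conv_lhs => rw [← Nat.div_add_mod (rnk P (P e₀)) K]
      rw [hb0]
    have e1 : rnk P (P e₁) = K * j + rnk P (P e₁) % K := by
      conv_lhs => rw [← Nat.div_add_mod (rnk P (P e₁)) K]
      rw [hb1]
    have hm0 := Nat.mod_lt (rnk P (P e₀)) hK
    have hm1 := Nat.mod_lt (rnk P (P e₁)) hK
    have := Finset.card_le_card hsub
    omega
  omega

/-- from pairwise disjoint finsets, one of them is small. -/
lemma exists_card_le_div {m : ℕ} (hm : 0 < m) (R : Fin m → Finset α)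
    (hdisj : ∀ i j : Fin m, i ≠ j → Disjoint (R i) (R j)) :
    ∃ i, (R i).card ≤ Fintype.card α / m := by
  classical
  by_contra hcon
  push_neg at hcon
  have hsum : ∑ i : Fin m, (R i).card ≤ Fintype.card α := by
    rw [← Finset.card_biUnion (fun i _ j _ hij => hdisj i j hij)]
    exact le_trans (Finset.card_le_card (Finset.subset_univ _)) (le_of_eq Finset.card_univ)
  have hsum2 : (m : ℕ) * (Fintype.card α / m + 1) ≤ ∑ i : Fin m, (R i).card := by
    calc (m : ℕ) * (Fintype.card α / m + 1)
        = ∑ _i : Fin m, (Fintype.card α / m + 1) := by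
          rw [Finset.sum_const, Finset.card_univ, Fintype.card_fin]; ring
      _ ≤ ∑ i : Fin m, (R i).card := Finset.sum_le_sum (fun i _ => hcon i)
  have h1 := Nat.div_add_mod (Fintype.card α) m
  have h2 := Nat.mod_lt (Fintype.card α) hm
  have h3 : (m : ℕ) * (Fintype.card α / m + 1) = m * (Fintype.card α / m) + m := by ring
  omega

end SDCount

section SDCore
open Finset

lemma sdPair_le_card {V : Type} (G : SimpleGraph V) (u v : V) (t : Finset V)
    (h : ∀ w : V, w ≠ u → w ≠ v →
      ((G.Adj w u ∧ ¬ G.Adj w v) ∨ (¬ G.Adj w u ∧ G.Adj w v)) → w ∈ t) :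
    G.sdPair u v ≤ t.card := by
  rw [SimpleGraph.sdPair, ← Set.ncard_coe_finset]
  apply Set.ncard_le_ncard _ t.finite_toSet
  rintro w ⟨h1, h2, h3⟩
  exact h w h1 h2 h3

open Classical in
lemma case1_generic {V : Type} [Fintype V] (G : SimpleGraph V) (l key : V → ℝ) {m : ℕ}
    (g : Fin (m + 2) → V) (hginj : Function.Injective g)
    (hmono : Monotone (fun i => l (g i)))
    (hchar : ∀ (i j : Fin (m + 2)), i < j → ∀ w, w ≠ g i → w ≠ g j →
        ((G.Adj w (g i) ∧ ¬ G.Adj w (g j)) ∨ (¬ G.Adj w (g i) ∧ G.Adj w (g j))) →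
        l (g i) < key w ∧ key w ≤ l (g j)) :
    ∃ u v : V, u ≠ v ∧ G.sdPair u v ≤ Fintype.card V / (m + 1) := by
  classical
  set R : Fin (m + 1) → Finset V := fun i =>
    Finset.univ.filter (fun w => l (g i.castSucc) < key w ∧ key w ≤ l (g i.succ)) with hR
  have hdisj : ∀ i j : Fin (m + 1), i ≠ j → Disjoint (R i) (R j) := by
    have haux : ∀ i j : Fin (m + 1), i < j → Disjoint (R i) (R j) := by
      intro i j hij
      rw [Finset.disjoint_left]
      intro w hwi hwj
      simp only [hR, Finset.mem_filter, Finset.mem_univ, true_and] at hwi hwj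
      have hle : l (g i.succ) ≤ l (g j.castSucc) := by
        apply hmono
        rw [Fin.le_def]
        simp only [Fin.val_succ, Fin.coe_castSucc]
        exact Fin.lt_def.1 hij
      linarith [hwi.2, hwj.1]
    intro i j hij
    rcases lt_or_gt_of_ne hij with h | h
    · exact haux i j h
    · exact (haux j i h).symm
  obtain ⟨i, hi⟩ := exists_card_le_div (Nat.succ_pos m) R hdisj
  refine ⟨g i.castSucc, g i.succ, ?_, ?_⟩
  · intro h
    exact absurd (hginj h) (ne_of_lt (Fin.castSucc_lt_succ : i.castSucc < i.succ))
  · refine le_trans (sdPair_le_card G _ _ (R i) ?_) hi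
    intro w hw1 hw2 hx
    have := hchar i.castSucc i.succ (Fin.castSucc_lt_succ : i.castSucc < i.succ) w hw1 hw2 hx
    simp only [hR, Finset.mem_filter, Finset.mem_univ, true_and]
    exact this

end SDCore

section SDMain
open Finset
local notation "F" => Int.fract

open Classical in
lemma core_lemma {V : Type} [Fintype V] (G : SimpleGraph V) (a l : V → ℝ)
    (hl0 : ∀ v, 0 ≤ l v) (hl1 : ∀ v, l v < 1)
    (hadj : ∀ u v : V, u ≠ v →
      (G.Adj u v ↔ F (a v - a u) ≤ l u ∨ F (a u - a v) ≤ l v))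
    (hcard : 2 ≤ Fintype.card V) :
    ∃ u v : V, u ≠ v ∧ (G.sdPair u v : ℝ) ≤ 100 * Real.sqrt (Fintype.card V) := by
  classical
  set n := Fintype.card V with hn
  have hsqnn : (0:ℝ) ≤ Real.sqrt n := Real.sqrt_nonneg _
  obtain ⟨u0, v0, hne0⟩ := Fintype.exists_pair_of_one_lt_card (α := V) (by omega)
  by_cases hsmall : n ≤ 10000
  · refine ⟨u0, v0, hne0, ?_⟩
    have h1 : (G.sdPair u0 v0 : ℝ) ≤ n := by
      have h1' : G.sdPair u0 v0 ≤ n := by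
        calc G.sdPair u0 v0 ≤ (Set.univ : Set V).ncard := by
              rw [SimpleGraph.sdPair]
              exact Set.ncard_le_ncard (Set.subset_univ _) Set.finite_univ
          _ = n := by rw [Set.ncard_univ, Nat.card_eq_fintype_card, ← hn]
      exact_mod_cast h1'
    have h2 : Real.sqrt n ≤ 100 := by
      rw [show (100:ℝ) = Real.sqrt (100^2) from (Real.sqrt_sq (by norm_num)).symm]
      apply Real.sqrt_le_sqrt
      have : (n:ℝ) ≤ 10000 := by exact_mod_cast hsmall
      norm_num
      linarith
    have h3 : (n:ℝ) = Real.sqrt n * Real.sqrt n := (Real.mul_self_sqrt (by positivity)).symm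
    nlinarith
  push_neg at hsmall
  set s := Nat.sqrt n with hsdef
  have hs100 : 100 ≤ s := Nat.le_sqrt.2 (by omega)
  have hsn : s * s ≤ n := Nat.sqrt_le n
  have hns : n < (s + 1) * (s + 1) := Nat.lt_succ_sqrt n
  have hsreal : (s : ℝ) ≤ Real.sqrt n := by
    rw [show ((s:ℝ)) = Real.sqrt ((s:ℝ)^2) from (Real.sqrt_sq (by positivity)).symm]
    apply Real.sqrt_le_sqrt
    have : ((s*s : ℕ) : ℝ) ≤ (n : ℝ) := by exact_mod_cast hsn
    push_cast at this ⊢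
    nlinarith
  set K := 4 * s + 4 with hKdef
  set P : V × Bool → ℝ :=
    fun e => if e.2 then F (a e.1 + l e.1) else F (a e.1) with hP
  by_cases hbig : ∃ e₀ : V × Bool, K ≤ (Finset.univ.filter (fun e => P e = P e₀)).card
  · -- CASE 1 : a popular endpoint value
    obtain ⟨e₀, he₀⟩ := hbig
    set p := P e₀ with hp
    have hpfr : F p = p := by
      rcases e₀ with ⟨z, b⟩
      cases b <;> simp [hp, hP, Int.fract_fract]
    set Left := Finset.univ.filter (fun v => F (a v) = p) with hLeft
    set Right := Finset.univ.filter (fun v => F (a v + l v) = p) with hRight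
    have hLR : K ≤ Left.card + Right.card := by
      have hsub : Finset.univ.filter (fun e : V × Bool => P e = p) ⊆
          Left.image (fun v => (v, false)) ∪ Right.image (fun v => (v, true)) := by
        intro e he
        simp only [Finset.mem_filter, Finset.mem_univ, true_and] at he
        rcases e with ⟨z, b⟩
        cases b
        · apply Finset.mem_union_left
          apply Finset.mem_image_of_mem (fun v => (v, false))
          simp only [hLeft, Finset.mem_filter, Finset.mem_univ, true_and]
          simpa [hP] using he
        · apply Finset.mem_union_right
          apply Finset.mem_image_of_mem (fun v => (v, true))
          simp only [hRight, Finset.mem_filter, Finset.mem_univ, true_and]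
          simpa [hP] using he
      calc K ≤ (Finset.univ.filter (fun e : V × Bool => P e = p)).card := he₀
        _ ≤ (Left.image (fun v => (v, false)) ∪ Right.image (fun v => (v, true))).card :=
            Finset.card_le_card hsub
        _ ≤ (Left.image (fun v => (v, false))).card + (Right.image (fun v => (v, true))).card :=
            Finset.card_union_le _ _
        _ ≤ Left.card + Right.card := add_le_add Finset.card_image_le Finset.card_image_le
    have hmain : ∃ u v : V, u ≠ v ∧ G.sdPair u v ≤ n / (s + 1) := by
      have hcase : s + 2 ≤ Left.card ∨ s + 2 ≤ Right.card := by omega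
      rcases hcase with hL | hR
      · -- shared left endpoint
        obtain ⟨S', hS'sub, hS'card⟩ := Finset.exists_subset_card_eq hL
        set f : Fin (s + 2) → V := fun i => ((S'.equivFin.symm) (finCongr hS'card.symm i)).1
          with hf
        have hfinj : Function.Injective f :=
          Subtype.val_injective.comp (S'.equivFin.symm.injective.comp (finCongr _).injective)
        have hfmem : ∀ i, F (a (f i)) = p := by
          intro i
          have : f i ∈ Left := hS'sub ((S'.equivFin.symm) (finCongr hS'card.symm i)).2
          simpa [hLeft] using (Finset.mem_filter.1 this).2
        set σ := Tuple.sort (fun i => l (f i)) with hσ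
        set g : Fin (s + 2) → V := f ∘ σ with hg
        have hginj : Function.Injective g := hfinj.comp σ.injective
        have hgmono : Monotone (fun i => l (g i)) := Tuple.monotone_sort (fun i => l (f i))
        have hgp : ∀ i, F (a (g i)) = p := fun i => hfmem (σ i)
        have := case1_generic (m := s) G l (fun w => F (a w - p)) g hginj hgmono ?_
        · rwa [← hn] at this
        · intro i j hij w hwi hwj hx
          rw [hadj w (g i) (Ne.symm (fun h => hwi h.symm)),
              hadj w (g j) (Ne.symm (fun h => hwj h.symm))] at hx
          exact char1a (hgp i) (hgp j) (hgmono hij.le) hx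
      · -- shared right endpoint
        obtain ⟨S', hS'sub, hS'card⟩ := Finset.exists_subset_card_eq hR
        set f : Fin (s + 2) → V := fun i => ((S'.equivFin.symm) (finCongr hS'card.symm i)).1
          with hf
        have hfinj : Function.Injective f :=
          Subtype.val_injective.comp (S'.equivFin.symm.injective.comp (finCongr _).injective)
        have hfmem : ∀ i, F (a (f i) + l (f i)) = p := by
          intro i
          have : f i ∈ Right := hS'sub ((S'.equivFin.symm) (finCongr hS'card.symm i)).2
          simpa [hRight] using (Finset.mem_filter.1 this).2
        set σ := Tuple.sort (fun i => l (f i)) with hσ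
        set g : Fin (s + 2) → V := f ∘ σ with hg
        have hginj : Function.Injective g := hfinj.comp σ.injective
        have hgmono : Monotone (fun i => l (g i)) := Tuple.monotone_sort (fun i => l (f i))
        have hgp : ∀ i, F (a (g i) + l (g i)) = p := fun i => hfmem (σ i)
        have := case1_generic (m := s) G l (fun w => F (p - (a w + l w))) g hginj hgmono ?_
        · rwa [← hn] at this
        · intro i j hij w hwi hwj hx
          rw [hadj w (g i) (Ne.symm (fun h => hwi h.symm)),
              hadj w (g j) (Ne.symm (fun h => hwj h.symm))] at hx
          exact char1b (hl0 _) (hl1 _) (hl0 _) (hl1 _) (hl0 _) (hl1 _)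
            (hgp i) (hgp j) (hgmono hij.le) hx
    obtain ⟨u, v, huv, hle⟩ := hmain
    refine ⟨u, v, huv, ?_⟩
    have hdiv : n / (s + 1) ≤ s := by
      have h' : n / (s + 1) < s + 1 :=
        (Nat.div_lt_iff_lt_mul (by omega : 0 < s + 1)).2 (by omega : n < (s+1) * (s+1))
      omega
    have : (G.sdPair u v : ℝ) ≤ (s : ℝ) := by exact_mod_cast le_trans hle hdiv
    calc (G.sdPair u v : ℝ) ≤ (s:ℝ) := this
      _ ≤ Real.sqrt n := hsreal
      _ ≤ 100 * Real.sqrt n := by linarith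
  · -- CASE 2 : all endpoint values have small multiplicity
    push_neg at hbig
    have hmult : ∀ e : V × Bool, (Finset.univ.filter (fun e' => P e' = P e)).card ≤ K :=
      fun e => le_of_lt (hbig e)
    set b := 2 * n / K with hb
    have hrnkle : ∀ x : ℝ, rnk P x ≤ 2 * n := by
      intro x
      have := rnk_le_card P x
      have hcardVB : Fintype.card (V × Bool) = 2 * n := by
        rw [Fintype.card_prod, Fintype.card_bool, ← hn]; ring
      omega
    have hblkle : ∀ x : ℝ, blk P K x ≤ b := by
      intro x
      exact Nat.div_le_div_right (hrnkle x)
    -- pigeonhole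
    have h2b : 2 * b ≤ s := by
      have h1 : b * K ≤ 2 * n := Nat.div_mul_le_self _ _
      have h2 : b * K = 2 * (b * (2 * s + 2)) := by rw [hKdef]; ring
      have h3 : b * (2 * s + 2) ≤ n := by omega
      by_contra hcon
      push_neg at hcon
      have h4 : (s + 1) * (s + 1) ≤ (2 * b) * (s + 1) :=
        Nat.mul_le_mul_right _ (by omega)
      have h5 : (2 * b) * (s + 1) = b * (2 * s + 2) := by ring
      omega
    set Φ : V → Fin (b + 1) × Fin (b + 1) × Bool := fun v =>
      (⟨blk P K (F (a v)), Nat.lt_succ_of_le (hblkle _)⟩,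
       ⟨blk P K (F (a v + l v)), Nat.lt_succ_of_le (hblkle _)⟩,
       decide (1 ≤ F (a v) + l v)) with hΦ
    have hcardlt : Fintype.card (Fin (b + 1) × Fin (b + 1) × Bool) < Fintype.card V := by
      simp only [Fintype.card_prod, Fintype.card_fin, Fintype.card_bool]
      rw [← hn]
      nlinarith
    obtain ⟨u, v, huv, hΦeq⟩ := Fintype.exists_ne_map_eq_of_card_lt Φ hcardlt
    simp only [hΦ, Prod.mk.injEq, Fin.mk.injEq] at hΦeq
    obtain ⟨hja, hjb, hwrapd⟩ := hΦeq
    have hwrap : (1 ≤ F (a u) + l u ↔ 1 ≤ F (a v) + l v) := decide_eq_decide.mp hwrapd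
    set t : Finset V := Finset.univ.filter (fun w =>
        (blk P K (F (a w)) = blk P K (F (a u)) ∨ blk P K (F (a w)) = blk P K (F (a u + l u))) ∨
        (blk P K (F (a w + l w)) = blk P K (F (a u)) ∨
          blk P K (F (a w + l w)) = blk P K (F (a u + l u)))) with ht
    refine ⟨u, v, huv, ?_⟩
    have hsd : G.sdPair u v ≤ t.card := by
      apply sdPair_le_card
      intro w hw1 hw2 hx
      rw [hadj w u (Ne.symm (fun h => hw1 h.symm)),
          hadj w v (Ne.symm (fun h => hw2 h.symm))] at hx
      simp only [ht, Finset.mem_filter, Finset.mem_univ, true_and]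
      rcases hx with ⟨hAu, hAv⟩ | ⟨hAu, hAv⟩
      · push_neg at hAv
        rcases hAu with hAu | hAu
        · -- a u ∈ A w, a v ∉ A w : one-endpoint case
          have hcore := h2b_core (hl0 w) (hl1 w) hAu (not_le.2 hAv.1)
          by_cases hord : F (a u) ≤ F (a v)
          · have hmem := pos_mem_Icc hcore.1 hord
            right; left
            exact blk_between P K hmem.1 hmem.2 hja
          · have hmem := pos_mem_Icc hcore.2 (le_of_not_ge hord)
            left; left
            exact (blk_between P K hmem.1 hmem.2 hja.symm).trans hja.symm
        · -- a w ∈ A u \ A v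
          have hcore := h2a_core (hl0 u) (hl1 u) (hl0 v) (hl1 v) hwrap hAu
            (not_le.2 hAv.2) (x := a w)
          rcases hcore with ⟨h1, h2⟩ | ⟨h1, h2⟩
          · left; left
            exact blk_between P K h1 h2 hja
          · left; right
            exact (blk_between P K h1 h2 hjb.symm).trans hjb.symm
      · push_neg at hAu
        rcases hAv with hAv | hAv
        · -- a v ∈ A w, a u ∉ A w
          have hcore := h2b_core (hl0 w) (hl1 w) hAv (not_le.2 hAu.1)
          by_cases hord : F (a v) ≤ F (a u)
          · have hmem := pos_mem_Icc hcore.1 hord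
            right; left
            exact (blk_between P K hmem.1 hmem.2 hja.symm).trans hja.symm
          · have hmem := pos_mem_Icc hcore.2 (le_of_not_ge hord)
            left; left
            exact blk_between P K hmem.1 hmem.2 hja
        · -- a w ∈ A v \ A u
          have hcore := h2a_core (hl0 v) (hl1 v) (hl0 u) (hl1 u) hwrap.symm hAv
            (not_le.2 hAu.2) (x := a w)
          rcases hcore with ⟨h1, h2⟩ | ⟨h1, h2⟩
          · left; left
            exact (blk_between P K h1 h2 hja.symm).trans hja.symm
          · left; right
            exact blk_between P K h1 h2 hjb
    -- count the target set
    have hcount : t.card ≤ 4 * K := by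
      have hstep : t.card ≤ (Finset.univ.filter (fun e : V × Bool =>
          blk P K (P e) = blk P K (F (a u)) ∨
            blk P K (P e) = blk P K (F (a u + l u)))).card := by
        apply Finset.card_le_card_of_injOn (fun w =>
          if blk P K (F (a w)) = blk P K (F (a u)) ∨
              blk P K (F (a w)) = blk P K (F (a u + l u)) then (w, false) else (w, true))
        · intro w hw
          simp only [ht, Finset.mem_filter, Finset.mem_univ, true_and] at hw
          by_cases hc : blk P K (F (a w)) = blk P K (F (a u)) ∨
              blk P K (F (a w)) = blk P K (F (a u + l u))
          · simp only [hc, if_true, Finset.mem_filter, Finset.mem_univ, true_and]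
            simpa [hP] using hc
          · simp only [hc, if_false, Finset.mem_filter, Finset.mem_univ, true_and]
            have := (Finset.mem_filter.1 hw).2.resolve_left hc
            simpa [hP] using this
        · intro w1 _ w2 _ heq
          have h' : ((if blk P K (F (a w1)) = blk P K (F (a u)) ∨
              blk P K (F (a w1)) = blk P K (F (a u + l u))
              then (w1, false) else (w1, true)).1 : V) =
              (if blk P K (F (a w2)) = blk P K (F (a u)) ∨
              blk P K (F (a w2)) = blk P K (F (a u + l u))
              then (w2, false) else (w2, true)).1 :=
            congrArg Prod.fst heq
          simpa [apply_ite Prod.fst] using h'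
      have hsplit : (Finset.univ.filter (fun e : V × Bool =>
          blk P K (P e) = blk P K (F (a u)) ∨
            blk P K (P e) = blk P K (F (a u + l u)))).card ≤
          (Finset.univ.filter (fun e : V × Bool =>
            blk P K (P e) = blk P K (F (a u)))).card +
          (Finset.univ.filter (fun e : V × Bool =>
            blk P K (P e) = blk P K (F (a u + l u)))).card := by
        rw [Finset.filter_or]
        exact Finset.card_union_le _ _
      have hb1 := blk_card_le P K (by omega) hmult (blk P K (F (a u)))
      have hb2 := blk_card_le P K (by omega) hmult (blk P K (F (a u + l u)))
      omega
    have hfinal : (G.sdPair u v : ℝ) ≤ 16 * (s : ℝ) + 16 := by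
      have h' : G.sdPair u v ≤ 16 * s + 16 := by
        have h'' : 4 * K = 16 * s + 16 := by omega
        omega
      exact_mod_cast h'
    have h100 : (100 : ℝ) ≤ Real.sqrt n := le_trans (by exact_mod_cast hs100) hsreal
    calc (G.sdPair u v : ℝ) ≤ 16 * (s:ℝ) + 16 := hfinal
      _ ≤ 16 * Real.sqrt n + 16 := by linarith
      _ ≤ 100 * Real.sqrt n := by linarith

end SDMain

section SDCircle
local notation "F" => Int.fract

lemma criterion_of_circular {V : Type*} (G : SimpleGraph V) (h : IsCircularArcGraph G) :
    ∃ a l : V → ℝ, (∀ v, 0 ≤ l v) ∧ (∀ v, l v < 1) ∧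
      ∀ u v : V, u ≠ v → (G.Adj u v ↔ F (a v - a u) ≤ l u ∨ F (a u - a v) ≤ l v) := by
  obtain ⟨c, hc, a, l, hl, hG⟩ := h
  refine ⟨fun v => a v / c, fun v => l v / c,
    fun v => div_nonneg (hl v).1 hc.le,
    fun v => (div_lt_one hc).2 (hl v).2, ?_⟩
  intro u v huv
  rw [hG u v huv]
  have hdiv : ∀ x y : V, a x / c - a y / c = (a x - a y) / c := fun x y => by ring
  rw [hdiv, hdiv]
  constructor
  · rintro ⟨z, hz1, hz2⟩
    obtain ⟨s1, hs1, rfl⟩ := hz1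
    obtain ⟨s2, hs2, heq⟩ := hz2
    obtain ⟨k, hk⟩ := AddSubgroup.mem_zmultiples_iff.1 (QuotientAddGroup.eq_iff_sub_mem.1 heq)
    rw [zsmul_eq_mul] at hk
    -- hk : k * c = s2 - s1
    set ρ1 : ℝ := (s1 - a u) / c with hρ1
    set ρ2 : ℝ := (s2 - a v) / c with hρ2
    have hρ10 : 0 ≤ ρ1 := div_nonneg (by linarith [hs1.1]) hc.le
    have hρ20 : 0 ≤ ρ2 := div_nonneg (by linarith [hs2.1]) hc.le
    have hρ11 : ρ1 ≤ l u / c := (div_le_div_iff_of_pos_right hc).2 (by linarith [hs1.2])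
    have hρ21 : ρ2 ≤ l v / c := (div_le_div_iff_of_pos_right hc).2 (by linarith [hs2.2])
    have hlu1 : l u / c < 1 := (div_lt_one hc).2 (hl u).2
    have hlv1 : l v / c < 1 := (div_lt_one hc).2 (hl v).2
    have hkey : (a v - a u) / c = (ρ1 - ρ2) + k := by
      rw [hρ1, hρ2]
      field_simp
      linarith [hk]
    by_cases hord : ρ2 ≤ ρ1
    · left
      have e1 : F ((a v - a u) / c) = F (ρ1 - ρ2) := by
        apply fract_congr' _ _ k
        rw [hkey]; ring
      rw [e1, fract_self_of _ (by linarith) (by linarith)]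
      linarith
    · right
      push_neg at hord
      have e1 : F ((a u - a v) / c) = F (ρ2 - ρ1) := by
        apply fract_congr' _ _ (-k)
        have : (a u - a v) / c = -((a v - a u) / c) := by ring
        rw [this, hkey]; push_cast; ring
      rw [e1, fract_self_of _ (by linarith) (by linarith)]
      linarith
  · intro hcase
    rcases hcase with hcase | hcase
    · -- point (a v) lies in both arcs
      refine ⟨((a v : ℝ) : AddCircle c), ⟨a u + c * F ((a v - a u) / c), ?_, ?_⟩,
        ⟨a v, ?_, rfl⟩⟩
      · constructor
        · nlinarith [Int.fract_nonneg ((a v - a u) / c)]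
        · have : c * F ((a v - a u) / c) ≤ c * (l u / c) :=
            mul_le_mul_of_nonneg_left hcase hc.le
          have h2 : c * (l u / c) = l u := by field_simp
          linarith
      · rw [QuotientAddGroup.eq_iff_sub_mem]
        apply AddSubgroup.mem_zmultiples_iff.2
        refine ⟨-⌊(a v - a u) / c⌋, ?_⟩
        rw [zsmul_eq_mul]
        have : F ((a v - a u) / c) = (a v - a u) / c - ⌊(a v - a u) / c⌋ := rfl
        rw [this]
        field_simp
        push_cast; ring
      · exact ⟨le_refl _, by linarith [(hl v).1]⟩
    · refine ⟨((a u : ℝ) : AddCircle c), ⟨a u, ⟨le_refl _, by linarith [(hl u).1]⟩, rfl⟩,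
        ⟨a v + c * F ((a u - a v) / c), ⟨?_, ?_⟩, ?_⟩⟩
      · nlinarith [Int.fract_nonneg ((a u - a v) / c)]
      · have : c * F ((a u - a v) / c) ≤ c * (l v / c) :=
          mul_le_mul_of_nonneg_left hcase hc.le
        have h2 : c * (l v / c) = l v := by field_simp
        linarith
      · rw [QuotientAddGroup.eq_iff_sub_mem]
        apply AddSubgroup.mem_zmultiples_iff.2
        refine ⟨-⌊(a u - a v) / c⌋, ?_⟩
        rw [zsmul_eq_mul]
        have : F ((a u - a v) / c) = (a u - a v) / c - ⌊(a u - a v) / c⌋ := rfl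
        rw [this]
        field_simp
        push_cast; ring

end SDCircle

section SDFinal
local notation "F" => Int.fract

lemma sdPair_le_fintype_card {V : Type} [Fintype V] (G : SimpleGraph V) (u v : V) :
    G.sdPair u v ≤ Fintype.card V := by
  calc G.sdPair u v ≤ (Set.univ : Set V).ncard := by
        rw [SimpleGraph.sdPair]
        exact Set.ncard_le_ncard (Set.subset_univ _) Set.finite_univ
    _ = Fintype.card V := by rw [Set.ncard_univ, Nat.card_eq_fintype_card]

/-- every circular arc graph on `n ≥ 1` vertices has symmetric
difference at most `C·√n` for some universal constant `C > 0`. -/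
theorem sd_circularArcGraph_upper_bound :
    ∃ C : ℝ, 0 < C ∧ ∀ (V : Type) [Fintype V] (G : SimpleGraph V),
      IsCircularArcGraph G → 1 ≤ Fintype.card V →
      (G.sdGraph : ℝ) ≤ C * Real.sqrt (Fintype.card V) := by
  refine ⟨100, by norm_num, ?_⟩
  intro V _ G hG _hcard
  obtain ⟨a, l, hl0, hl1, hadj⟩ := criterion_of_circular G hG
  rw [SimpleGraph.sdGraph]
  set S := {m | ∃ W : Set V, (∃ u v : W, u ≠ v) ∧
    m = sInf {k | ∃ u v : W, u ≠ v ∧ k = (G.induce W).sdPair u v}} with hS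
  have hbound : ∀ m ∈ S, (m : ℝ) ≤ 100 * Real.sqrt (Fintype.card V) := by
    rintro m ⟨W, ⟨u₁, v₁, hne₁⟩, rfl⟩
    haveI : Fintype ↥W := Fintype.ofFinite ↥W
    have hadj' : ∀ u v : ↥W, u ≠ v → ((G.induce W).Adj u v ↔
        F (a v.1 - a u.1) ≤ l u.1 ∨ F (a u.1 - a v.1) ≤ l v.1) := by
      intro u v huv
      have hiff : (G.induce W).Adj u v ↔ G.Adj u.1 v.1 := Iff.rfl
      rw [hiff]
      exact hadj u.1 v.1 (fun hh => huv (Subtype.ext hh))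
    have hcard2 : 2 ≤ Fintype.card ↥W := by
      haveI : Nontrivial ↥W := ⟨u₁, v₁, hne₁⟩
      exact Fintype.one_lt_card_iff_nontrivial.2 this
    obtain ⟨u, v, huv, hsd⟩ := core_lemma (G.induce W) (fun w => a w.1) (fun w => l w.1)
      (fun w => hl0 _) (fun w => hl1 _) hadj' hcard2
    have h1 : sInf {k | ∃ u v : ↥W, u ≠ v ∧ k = (G.induce W).sdPair u v} ≤
        (G.induce W).sdPair u v := Nat.sInf_le ⟨u, v, huv, rfl⟩
    have h3 : Real.sqrt (Fintype.card ↥W) ≤ Real.sqrt (Fintype.card V) := by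
      apply Real.sqrt_le_sqrt
      exact_mod_cast Fintype.card_le_of_injective Subtype.val Subtype.val_injective
    calc ((sInf {k | ∃ u v : ↥W, u ≠ v ∧ k = (G.induce W).sdPair u v} : ℕ) : ℝ)
        ≤ ((G.induce W).sdPair u v : ℝ) := by exact_mod_cast h1
      _ ≤ 100 * Real.sqrt (Fintype.card ↥W) := hsd
      _ ≤ 100 * Real.sqrt (Fintype.card V) := by linarith
  rcases Set.eq_empty_or_nonempty S with he | hne
  · rw [he, csSup_empty]
    have h0 : ((⊥ : ℕ) : ℝ) = 0 := by norm_num [Nat.bot_eq_zero]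
    rw [h0]
    positivity
  · have hbdd : BddAbove S := by
      refine ⟨Fintype.card V, ?_⟩
      rintro m ⟨W, ⟨u₁, v₁, hne₁⟩, rfl⟩
      haveI : Fintype ↥W := Fintype.ofFinite ↥W
      have hnek : {k | ∃ u v : ↥W, u ≠ v ∧ k = (G.induce W).sdPair u v}.Nonempty :=
        ⟨_, u₁, v₁, hne₁, rfl⟩
      obtain ⟨u, v, huv, heq⟩ := Nat.sInf_mem hnek
      rw [heq]
      calc (G.induce W).sdPair u v ≤ Fintype.card ↥W := sdPair_le_fintype_card _ _ _
        _ ≤ Fintype.card V := Fintype.card_le_of_injective Subtype.val Subtype.val_injective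
    exact hbound _ (Nat.sSup_mem hne hbdd)


end SDFinal
end

section
/- There exists a constant c > 0 such that for every m ∈ ℕ there is a circular arc graph G on some number n ≥ m of vertices with sd(G) ≥ c·√n. -/
namespace SdCirc

/-- `(a - b) mod k` for `a, b < k`, in closed form. -/
def cd (k a b : ℕ) : ℕ := if b ≤ a then a - b else a + k - b

abbrev NV (h : ℕ) : ℕ := 2 * h * (h + 1)

def I (h : ℕ) (x : Fin (NV h)) : ℕ := x.1 / (h + 1)
def J (h : ℕ) (x : Fin (NV h)) : ℕ := x.1 % (h + 1)

lemma I_lt (h : ℕ) (x : Fin (NV h)) : I h x < 2 * h := by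
  have := x.2
  rw [I, Nat.div_lt_iff_lt_mul (Nat.succ_pos h)]
  exact x.2

lemma J_le (h : ℕ) (x : Fin (NV h)) : J h x ≤ h :=
  Nat.lt_succ_iff.mp (Nat.mod_lt _ (Nat.succ_pos h))

lemma val_eq (h : ℕ) (x : Fin (NV h)) : x.1 = I h x * (h + 1) + J h x := by
  rw [I, J, Nat.mul_comm]
  exact (Nat.div_add_mod _ _).symm

lemma eq_iff (h : ℕ) (x y : Fin (NV h)) : x = y ↔ I h x = I h y ∧ J h x = J h y := by
  constructor
  · rintro rfl; exact ⟨rfl, rfl⟩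
  · rintro ⟨h1, h2⟩
    exact Fin.ext (by rw [val_eq h x, val_eq h y, h1, h2])

def enc (h a b : ℕ) (hh : 0 < h) : Fin (NV h) :=
  ⟨(a * (h + 1) + b) % NV h, Nat.mod_lt _ (by positivity)⟩

lemma enc_val (h a b : ℕ) (hh : 0 < h) (ha : a < 2 * h) (hb : b ≤ h) :
    (enc h a b hh).1 = a * (h + 1) + b := by
  have h1 : a * (h + 1) + b < (a + 1) * (h + 1) := by
    rw [Nat.succ_mul]; omega
  have h2 : (a + 1) * (h + 1) ≤ 2 * h * (h + 1) := Nat.mul_le_mul_right _ (by omega)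
  exact Nat.mod_eq_of_lt (lt_of_lt_of_le h1 h2)

lemma I_enc (h a b : ℕ) (hh : 0 < h) (ha : a < 2 * h) (hb : b ≤ h) :
    I h (enc h a b hh) = a := by
  rw [I, enc_val h a b hh ha hb, Nat.mul_comm, Nat.mul_add_div (Nat.succ_pos h),
    Nat.div_eq_of_lt (by omega)]
  omega

lemma J_enc (h a b : ℕ) (hh : 0 < h) (ha : a < 2 * h) (hb : b ≤ h) :
    J h (enc h a b hh) = b := by
  rw [J, enc_val h a b hh ha hb, Nat.mul_comm, Nat.mul_add_mod, Nat.mod_eq_of_lt (by omega)]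

/-- Arc `w` meets arc `u`. -/
def mets (h : ℕ) (w u : Fin (NV h)) : Prop :=
  cd (2 * h) (I h u) (I h w) ≤ J h w ∨ cd (2 * h) (I h w) (I h u) ≤ J h u

instance (h : ℕ) (w u : Fin (NV h)) : Decidable (mets h w u) := by
  unfold mets; infer_instance

def G (h : ℕ) : SimpleGraph (Fin (NV h)) where
  Adj u v := u ≠ v ∧ mets h u v
  symm := by
    constructor
    rintro u v ⟨h1, h2⟩
    exact ⟨h1.symm, by unfold mets at *; tauto⟩
  loopless := by constructor; rintro u ⟨h1, -⟩; exact h1 rfl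

lemma adj_iff (h : ℕ) (u v : Fin (NV h)) : (G h).Adj u v ↔ u ≠ v ∧ mets h u v := Iff.rfl

lemma mets_comm (h : ℕ) (w u : Fin (NV h)) : mets h w u ↔ mets h u w := by
  unfold mets; tauto

/-- The distinguisher set for a pair. -/
def D (h : ℕ) (u v : Fin (NV h)) : Set (Fin (NV h)) :=
  {w | w ≠ u ∧ w ≠ v ∧ (((G h).Adj w u ∧ ¬(G h).Adj w v) ∨ (¬(G h).Adj w u ∧ (G h).Adj w v))}

lemma sdPair_eq (h : ℕ) (u v : Fin (NV h)) : (G h).sdPair u v = (D h u v).ncard := rfl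

lemma mem_D_iff (h : ℕ) (u v w : Fin (NV h)) :
    w ∈ D h u v ↔ ¬(I h w = I h u ∧ J h w = J h u) ∧ ¬(I h w = I h v ∧ J h w = J h v) ∧
      ((mets h w u ∧ ¬ mets h w v) ∨ (¬ mets h w u ∧ mets h w v)) := by
  rw [D, Set.mem_setOf_eq, adj_iff, adj_iff, ne_eq, ne_eq, eq_iff, eq_iff]
  tauto

lemma card_le_ncard_D (h : ℕ) (u v : Fin (NV h)) (F : Finset (Fin (NV h)))
    (hsub : ∀ x ∈ F, x ∈ D h u v) : F.card ≤ (D h u v).ncard := by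
  rw [← Set.ncard_coe_finset]
  exact Set.ncard_le_ncard hsub (Set.toFinite _)

lemma sdPair_comm {V : Type*} (G : SimpleGraph V) (u v : V) :
    G.sdPair u v = G.sdPair v u := by
  unfold SimpleGraph.sdPair
  congr 1
  ext w
  constructor <;> rintro ⟨a, b, c⟩ <;> exact ⟨b, a, by tauto⟩

end SdCirc

namespace SdCirc

lemma card_image_J (h : ℕ) (hpos : 0 < h) (s : Finset ℕ) (g : ℕ → ℕ)
    (hg : ∀ b ∈ s, g b < 2 * h) (hs : ∀ b ∈ s, b ≤ h) :
    (s.image (fun b => enc h (g b) b hpos)).card = s.card := by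
  apply Finset.card_image_of_injOn
  intro b hb b' hb' he
  have := congrArg (J h) he
  rwa [J_enc h _ _ hpos (hg b hb) (hs b hb), J_enc h _ _ hpos (hg b' hb') (hs b' hb')] at this

lemma case1 (h : ℕ) (hh : 4 ≤ h) (u v : Fin (NV h)) (hI : I h u = I h v)
    (hJ : J h u < J h v) : h - 2 ≤ (G h).sdPair u v := by
  have hpos : 0 < h := by omega
  have B1 := I_lt h u; have B2 := I_lt h v
  have B3 := J_le h u; have B4 := J_le h v
  set p : ℕ := if I h u + J h u + 1 < 2 * h then I h u + J h u + 1
    else I h u + J h u + 1 - 2 * h with hpdef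
  have hpk : p < 2 * h ∧ (p = I h u + J h u + 1 ∨ p + 2 * h = I h u + J h u + 1) := by
    rw [hpdef]; split_ifs <;> omega
  set F : Finset (Fin (NV h)) := (Finset.range h).image (fun b => enc h p b hpos) with hF
  have hsub : ∀ x ∈ F, x ∈ D h u v := by
    intro x hx
    rw [hF, Finset.mem_image] at hx
    obtain ⟨b, hb, rfl⟩ := hx
    rw [Finset.mem_range] at hb
    have hbh : b ≤ h := by omega
    rw [mem_D_iff]
    simp only [mets, cd, I_enc h p b hpos hpk.1 hbh, J_enc h p b hpos hpk.1 hbh]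
    split_ifs <;> omega
  rw [sdPair_eq]
  calc h - 2 ≤ F.card := by
        rw [hF, card_image_J h hpos _ _ (fun b _ => hpk.1) (fun b hb => by
          rw [Finset.mem_range] at hb; omega), Finset.card_range]
        omega
    _ ≤ _ := card_le_ncard_D h u v F hsub

lemma case2 (h : ℕ) (hh : 4 ≤ h) (u v : Fin (NV h)) (hI : I h u ≠ I h v)
    (hd : cd (2 * h) (I h v) (I h u) ≤ h) : h - 2 ≤ (G h).sdPair u v := by
  have hpos : 0 < h := by omega
  have B1 := I_lt h u; have B2 := I_lt h v
  have B3 := J_le h u; have B4 := J_le h v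
  set d := cd (2 * h) (I h v) (I h u) with hddef
  have hdd : (I h u ≤ I h v ∧ d = I h v - I h u) ∨
      (I h v < I h u ∧ d = I h v + 2 * h - I h u) := by
    rw [hddef, cd]; split_ifs with hc
    · exact Or.inl ⟨hc, rfl⟩
    · exact Or.inr ⟨by omega, rfl⟩
  have hd1 : 1 ≤ d := by omega
  rw [sdPair_eq]
  rcases Nat.lt_or_ge d (J h u + 2) with hca | hcb
  · -- Case 2a : d ≤ J h u + 1; arcs ending at I h v - 1, minus possibly u
    set F : Finset (Fin (NV h)) := ((Finset.range (h - 1)).image (fun b =>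
      enc h (if b + 1 ≤ I h v then I h v - 1 - b else I h v + 2 * h - 1 - b) b hpos)).erase u
      with hF
    have hsub : ∀ x ∈ F, x ∈ D h u v := by
      intro x hx
      rw [hF, Finset.mem_erase] at hx
      obtain ⟨hxu, hx⟩ := hx
      rw [Finset.mem_image] at hx
      obtain ⟨b, hb, rfl⟩ := hx
      rw [Finset.mem_range] at hb
      have hbh : b ≤ h := by omega
      set qb := if b + 1 ≤ I h v then I h v - 1 - b else I h v + 2 * h - 1 - b with hqb
      have hq1 : qb < 2 * h ∧ (qb + 1 + b = I h v ∨ qb + 1 + b = I h v + 2 * h) := by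
        rw [hqb]; split_ifs <;> omega
      have hne1 : ¬(qb = I h u ∧ b = J h u) := by
        rintro ⟨e1, e2⟩
        exact hxu ((eq_iff h _ u).mpr ⟨by rw [I_enc h qb b hpos hq1.1 hbh]; exact e1,
          by rw [J_enc h qb b hpos hq1.1 hbh]; exact e2⟩)
      rw [mem_D_iff]
      simp only [mets, cd, I_enc h qb b hpos hq1.1 hbh, J_enc h qb b hpos hq1.1 hbh]
      refine ⟨hne1, ?_, ?_⟩
      · omega
      · split_ifs <;> omega
    calc h - 2 ≤ F.card := by
          rw [hF]
          have := Finset.pred_card_le_card_erase (s := (Finset.range (h - 1)).image (fun b =>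
            enc h (if b + 1 ≤ I h v then I h v - 1 - b else I h v + 2 * h - 1 - b) b hpos))
            (a := u)
          rw [card_image_J h hpos _ _ (fun b hb => by
              rw [Finset.mem_range] at hb; split_ifs <;> omega) (fun b hb => by
              rw [Finset.mem_range] at hb; omega), Finset.card_range] at this
          omega
      _ ≤ _ := card_le_ncard_D h u v F hsub
  · by_cases hcc : d = h ∧ J h v = h
    · -- Case 2c
      rcases Nat.eq_zero_or_pos (J h u) with hj0 | hj1
      · -- j = 0 : arcs starting at I h v
        set F : Finset (Fin (NV h)) := (Finset.range (h - 1)).image (fun b =>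
          enc h (I h v) b hpos) with hF
        have hsub : ∀ x ∈ F, x ∈ D h u v := by
          intro x hx
          rw [hF, Finset.mem_image] at hx
          obtain ⟨b, hb, rfl⟩ := hx
          rw [Finset.mem_range] at hb
          have hbh : b ≤ h := by omega
          rw [mem_D_iff]
          simp only [mets, cd, I_enc h (I h v) b hpos B2 hbh, J_enc h (I h v) b hpos B2 hbh]
          split_ifs <;> omega
        calc h - 2 ≤ F.card := by
              rw [hF, card_image_J h hpos _ _ (fun b _ => B2) (fun b hb => by
                rw [Finset.mem_range] at hb; omega), Finset.card_range]
              omega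
          _ ≤ _ := card_le_ncard_D h u v F hsub
      · -- j ≥ 1 : arcs starting at I h u + 1
        set p : ℕ := if I h u + 1 < 2 * h then I h u + 1 else I h u + 1 - 2 * h with hpdef
        have hpk : p < 2 * h ∧ (p = I h u + 1 ∨ p + 2 * h = I h u + 1) := by
          rw [hpdef]; split_ifs <;> omega
        set F : Finset (Fin (NV h)) := (Finset.range (h - 1)).image (fun b =>
          enc h p b hpos) with hF
        have hsub : ∀ x ∈ F, x ∈ D h u v := by
          intro x hx
          rw [hF, Finset.mem_image] at hx
          obtain ⟨b, hb, rfl⟩ := hx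
          rw [Finset.mem_range] at hb
          have hbh : b ≤ h := by omega
          rw [mem_D_iff]
          simp only [mets, cd, I_enc h p b hpos hpk.1 hbh, J_enc h p b hpos hpk.1 hbh]
          split_ifs <;> omega
        calc h - 2 ≤ F.card := by
              rw [hF, card_image_J h hpos _ _ (fun b _ => hpk.1) (fun b hb => by
                rw [Finset.mem_range] at hb; omega), Finset.card_range]
              omega
          _ ≤ _ := card_le_ncard_D h u v F hsub
    · -- Case 2b : union of two families
      set FA : Finset (Fin (NV h)) := (((Finset.range (d - 1)).erase (J h u)).image (fun b =>
        enc h (I h u) b hpos)) with hFA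
      set FB : Finset (Fin (NV h)) := ((Finset.Ico (d - 1) (h - 1)).image (fun b =>
        enc h (if b + 1 ≤ I h v then I h v - 1 - b else I h v + 2 * h - 1 - b) b hpos)) with hFB
      have hAmem : ∀ b ∈ (Finset.range (d - 1)).erase (J h u), b ≤ h := by
        intro b hb
        rw [Finset.mem_erase, Finset.mem_range] at hb
        omega
      have hBmem : ∀ b ∈ Finset.Ico (d - 1) (h - 1), b ≤ h := by
        intro b hb
        rw [Finset.mem_Ico] at hb
        omega
      have hBlt : ∀ b ∈ Finset.Ico (d - 1) (h - 1),
          (if b + 1 ≤ I h v then I h v - 1 - b else I h v + 2 * h - 1 - b) < 2 * h := by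
        intro b hb
        rw [Finset.mem_Ico] at hb
        split_ifs <;> omega
      have hdisj : Disjoint FA FB := by
        rw [Finset.disjoint_left]
        intro x hxa hxb
        rw [hFA, Finset.mem_image] at hxa
        rw [hFB, Finset.mem_image] at hxb
        obtain ⟨b, hb, rfl⟩ := hxa
        obtain ⟨b', hb', he⟩ := hxb
        have := congrArg (J h) he
        rw [J_enc h _ _ hpos (hBlt b' hb') (hBmem b' hb'),
          J_enc h _ _ hpos B1 (hAmem b hb)] at this
        rw [Finset.mem_erase, Finset.mem_range] at hb
        rw [Finset.mem_Ico] at hb'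
        omega
      have hsub : ∀ x ∈ FA ∪ FB, x ∈ D h u v := by
        intro x hx
        rw [Finset.mem_union] at hx
        rcases hx with hx | hx
        · rw [hFA, Finset.mem_image] at hx
          obtain ⟨b, hb, rfl⟩ := hx
          have hbh := hAmem b hb
          rw [Finset.mem_erase, Finset.mem_range] at hb
          rw [mem_D_iff]
          simp only [mets, cd, I_enc h (I h u) b hpos B1 hbh, J_enc h (I h u) b hpos B1 hbh]
          split_ifs <;> omega
        · rw [hFB, Finset.mem_image] at hx
          obtain ⟨b, hb, rfl⟩ := hx
          have hbh := hBmem b hb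
          have hblt := hBlt b hb
          rw [Finset.mem_Ico] at hb
          set qb := if b + 1 ≤ I h v then I h v - 1 - b else I h v + 2 * h - 1 - b with hqb
          have hq1 : qb < 2 * h ∧ (qb + 1 + b = I h v ∨ qb + 1 + b = I h v + 2 * h) := by
            rw [hqb]; split_ifs <;> omega
          rw [mem_D_iff]
          simp only [mets, cd, I_enc h qb b hpos hq1.1 hbh, J_enc h qb b hpos hq1.1 hbh]
          split_ifs <;> omega
      calc h - 2 ≤ (FA ∪ FB).card := by
            rw [Finset.card_union_of_disjoint hdisj, hFA, hFB,
              card_image_J h hpos _ _ (fun b _ => B1) hAmem,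
              card_image_J h hpos _ _ hBlt hBmem,
              Finset.card_erase_of_mem (by rw [Finset.mem_range]; omega),
              Finset.card_range, Nat.card_Ico]
            omega
        _ ≤ _ := card_le_ncard_D h u v (FA ∪ FB) hsub

lemma cd_add (k a b : ℕ) (ha : a < k) (hb : b < k) (hne : a ≠ b) :
    cd k a b + cd k b a = k := by
  unfold cd; split_ifs <;> omega

lemma key (h : ℕ) (hh : 4 ≤ h) (u v : Fin (NV h)) (huv : u ≠ v) :
    h - 2 ≤ (G h).sdPair u v := by
  by_cases hI : I h u = I h v
  · have hJ : J h u ≠ J h v := by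
      intro hc
      exact huv ((eq_iff h u v).mpr ⟨hI, hc⟩)
    rcases Nat.lt_or_ge (J h u) (J h v) with hlt | hge
    · exact case1 h hh u v hI hlt
    · rw [sdPair_comm]
      exact case1 h hh v u hI.symm (by omega)
  · rcases le_or_gt (cd (2 * h) (I h v) (I h u)) h with hle | hgt
    · exact case2 h hh u v hI hle
    · rw [sdPair_comm]
      refine case2 h hh v u (Ne.symm hI) ?_
      have := cd_add (2 * h) (I h v) (I h u) (I_lt h v) (I_lt h u) (fun e => hI e.symm)
      omega

end SdCirc

namespace SdCirc

lemma sdPair_induce_univ {V : Type*} (Gr : SimpleGraph V)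
    (u v : (Set.univ : Set V)) :
    (Gr.induce Set.univ).sdPair u v = Gr.sdPair u.1 v.1 := by
  unfold SimpleGraph.sdPair
  have himg : Subtype.val '' {w : (Set.univ : Set V) | w ≠ u ∧ w ≠ v ∧
      (((Gr.induce Set.univ).Adj w u ∧ ¬(Gr.induce Set.univ).Adj w v) ∨
        (¬(Gr.induce Set.univ).Adj w u ∧ (Gr.induce Set.univ).Adj w v))} =
      {w : V | w ≠ u.1 ∧ w ≠ v.1 ∧ ((Gr.Adj w u.1 ∧ ¬Gr.Adj w v.1) ∨
        (¬Gr.Adj w u.1 ∧ Gr.Adj w v.1))} := by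
    ext w
    simp only [Set.mem_image, Set.mem_setOf_eq, SimpleGraph.comap_adj,
      Function.Embedding.coe_subtype]
    constructor
    · rintro ⟨x, ⟨h1, h2, h3⟩, rfl⟩
      exact ⟨fun hc => h1 (Subtype.ext hc), fun hc => h2 (Subtype.ext hc), h3⟩
    · rintro ⟨h1, h2, h3⟩
      exact ⟨⟨w, trivial⟩, ⟨fun hc => h1 (congrArg Subtype.val hc),
        fun hc => h2 (congrArg Subtype.val hc), h3⟩, rfl⟩
  rw [← himg, Set.ncard_image_of_injective _ Subtype.val_injective]

lemma sdPair_le_card {n : ℕ} (Gr : SimpleGraph (Fin n)) (W : Set (Fin n))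
    (u v : W) : (Gr.induce W).sdPair u v ≤ n := by
  unfold SimpleGraph.sdPair
  have h1 := Set.ncard_le_ncard (Set.subset_univ
    {w : W | w ≠ u ∧ w ≠ v ∧ (((Gr.induce W).Adj w u ∧ ¬(Gr.induce W).Adj w v) ∨
      (¬(Gr.induce W).Adj w u ∧ (Gr.induce W).Adj w v))}) Set.finite_univ
  have h2 : (Set.univ : Set W).ncard = Nat.card W := Set.ncard_univ _
  have h3 : Nat.card W ≤ Nat.card (Fin n) :=
    Nat.card_le_card_of_injective _ Subtype.val_injective
  have h4 : Nat.card (Fin n) = n := by simp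
  omega

lemma le_sdGraph {n : ℕ} (Gr : SimpleGraph (Fin n)) (t : ℕ) (hn : 2 ≤ n)
    (H : ∀ u v : Fin n, u ≠ v → t ≤ Gr.sdPair u v) : t ≤ Gr.sdGraph := by
  have hne01 : (⟨0, by omega⟩ : Fin n) ≠ ⟨1, by omega⟩ := by
    simp [Fin.ext_iff]
  have hpair : ∃ u v : (Set.univ : Set (Fin n)), u ≠ v :=
    ⟨⟨⟨0, by omega⟩, trivial⟩, ⟨⟨1, by omega⟩, trivial⟩,
      fun hc => hne01 (congrArg Subtype.val hc)⟩
  unfold SimpleGraph.sdGraph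
  have hbdd : BddAbove {m | ∃ W : Set (Fin n), (∃ u v : W, u ≠ v) ∧
      m = sInf {k | ∃ u v : W, u ≠ v ∧ k = (Gr.induce W).sdPair u v}} := by
    refine ⟨n, ?_⟩
    rintro m ⟨W, ⟨u, v, huv⟩, rfl⟩
    exact le_trans (Nat.sInf_le ⟨u, v, huv, rfl⟩) (sdPair_le_card Gr W u v)
  have hmem : sInf {k | ∃ u v : (Set.univ : Set (Fin n)), u ≠ v ∧
      k = (Gr.induce Set.univ).sdPair u v} ∈ {m | ∃ W : Set (Fin n),
      (∃ u v : W, u ≠ v) ∧ m = sInf {k | ∃ u v : W, u ≠ v ∧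
        k = (Gr.induce W).sdPair u v}} := ⟨Set.univ, hpair, rfl⟩
  refine le_trans ?_ (le_csSup hbdd hmem)
  obtain ⟨u0, v0, huv0⟩ := hpair
  refine le_csInf ⟨_, u0, v0, huv0, rfl⟩ ?_
  rintro x ⟨u, v, huv, rfl⟩
  rw [sdPair_induce_univ]
  exact H u.1 v.1 (fun hc => huv (Subtype.ext hc))

end SdCirc

namespace SdCirc

lemma start_mem_arc (k x l : ℕ) (hk : 0 < k) :
    (((x : ℝ)) : AddCircle ((k : ℕ) : ℝ)) ∈ circleArc (k : ℝ) (x : ℝ) (l : ℝ) :=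
  ⟨(x : ℝ), ⟨le_refl _, by
    have : (0 : ℝ) ≤ l := by positivity
    linarith⟩, rfl⟩

lemma start_mem_arc' (k x y m : ℕ) (hk : 0 < k) (hx : x < k) (hy : y < k) (hcd : cd k x y ≤ m) :
    (((x : ℝ)) : AddCircle ((k : ℕ) : ℝ)) ∈ circleArc (k : ℝ) (y : ℝ) (m : ℝ) := by
  unfold cd at hcd
  split_ifs at hcd with hc
  · refine ⟨(x : ℝ), ⟨by exact_mod_cast hc, ?_⟩, rfl⟩
    have hxy : x ≤ y + m := by omega
    exact_mod_cast hxy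
  · refine ⟨(x : ℝ) + (k : ℝ), ⟨?_, ?_⟩, ?_⟩
    · have : y ≤ x + k := by omega
      exact_mod_cast this
    · have : x + k ≤ y + m := by omega
      exact_mod_cast this
    · exact AddCircle.coe_add_period (k : ℝ) (x : ℝ)

lemma arcs_meet (k x y l m : ℕ) (hk : 0 < k) (hx : x < k) (hy : y < k)
    (hl : l < k) (hm : m < k) :
    (circleArc (k : ℝ) (x : ℝ) (l : ℝ) ∩ circleArc (k : ℝ) (y : ℝ) (m : ℝ)).Nonempty ↔
      (cd k x y ≤ m ∨ cd k y x ≤ l) := by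
  constructor
  · rintro ⟨z, hz1, hz2⟩
    obtain ⟨p, hp, rfl⟩ := hz1
    obtain ⟨q, hq, hqz⟩ := hz2
    have hsub : q - p ∈ AddSubgroup.zmultiples ((k : ℕ) : ℝ) :=
      (QuotientAddGroup.eq_iff_sub_mem).mp hqz
    obtain ⟨N, hN⟩ := AddSubgroup.mem_zmultiples_iff.mp hsub
    rw [zsmul_eq_mul] at hN
    obtain ⟨hp1, hp2⟩ := hp
    obtain ⟨hq1, hq2⟩ := hq
    -- q = p + N * k
    have key1 : (y : ℝ) ≤ (x : ℝ) + (l : ℝ) + N * k := by linarith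
    have key2 : (y : ℝ) + (m : ℝ) ≥ (x : ℝ) + N * k := by linarith
    have ck : ((k : ℕ) : ℝ) = ((k : ℤ) : ℝ) := by push_cast; ring
    have k1 : (y : ℤ) ≤ (x : ℤ) + (l : ℤ) + N * k := by
      rw [ck] at key1; exact_mod_cast key1
    have k2 : (y : ℤ) + (m : ℤ) ≥ (x : ℤ) + N * k := by
      rw [ck] at key2; exact_mod_cast key2
    have cx : (x : ℤ) < k := by exact_mod_cast hx
    have cy : (y : ℤ) < k := by exact_mod_cast hy
    have cl : (l : ℤ) < k := by exact_mod_cast hl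
    have cm : (m : ℤ) < k := by exact_mod_cast hm
    have ckpos : (0 : ℤ) < k := by exact_mod_cast hk
    have hx0 : (0 : ℤ) ≤ (x : ℤ) := Int.natCast_nonneg x
    have hy0 : (0 : ℤ) ≤ (y : ℤ) := Int.natCast_nonneg y
    have hl0 : (0 : ℤ) ≤ (l : ℤ) := Int.natCast_nonneg l
    have hm0 : (0 : ℤ) ≤ (m : ℤ) := Int.natCast_nonneg m
    have hN2 : N < 2 := by
      by_contra hc
      push_neg at hc
      have h2k : (2 : ℤ) * k ≤ N * k := mul_le_mul_of_nonneg_right hc (le_of_lt ckpos)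
      linarith
    have hN3 : -2 < N := by
      by_contra hc
      push_neg at hc
      have h2k : N * k ≤ (-2 : ℤ) * k := mul_le_mul_of_nonneg_right hc (le_of_lt ckpos)
      linarith
    interval_cases N <;> · unfold cd; split_ifs <;> omega
  · rintro (hcd | hcd)
    · exact ⟨((x : ℝ) : AddCircle ((k : ℕ) : ℝ)), start_mem_arc k x l hk,
        start_mem_arc' k x y m hk hx hy hcd⟩
    · exact ⟨((y : ℝ) : AddCircle ((k : ℕ) : ℝ)), start_mem_arc' k y x l hk hy hx hcd,
        start_mem_arc k y m hk⟩

lemma isCircular (h : ℕ) (hh : 4 ≤ h) : IsCircularArcGraph (G h) := by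
  refine ⟨((2 * h : ℕ) : ℝ), by positivity, fun v => ((I h v : ℕ) : ℝ),
    fun v => ((J h v : ℕ) : ℝ), fun v => ⟨by positivity, ?_⟩, ?_⟩
  · show ((J h v : ℕ) : ℝ) < ((2 * h : ℕ) : ℝ)
    have := J_le h v
    have h2 : J h v < 2 * h := by omega
    exact_mod_cast h2
  · intro u v huv
    rw [adj_iff]
    have hJu : J h u < 2 * h := by have := J_le h u; omega
    have hJv : J h v < 2 * h := by have := J_le h v; omega
    rw [arcs_meet (2 * h) (I h u) (I h v) (J h u) (J h v) (by omega)
      (I_lt h u) (I_lt h v) hJu hJv]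
    unfold mets
    tauto

end SdCirc

/-- there are circular arc graphs on arbitrarily many vertices `n` with
symmetric difference at least `c·√n`, for a universal constant `c > 0`. -/
theorem sd_circularArcGraph_lower_bound :
    ∃ c : ℝ, 0 < c ∧ ∀ m : ℕ, ∃ n : ℕ, m ≤ n ∧ ∃ G : SimpleGraph (Fin n),
      IsCircularArcGraph G ∧ c * Real.sqrt n ≤ (G.sdGraph : ℝ) := by
  refine ⟨1/8, by norm_num, fun m => ?_⟩
  set h := max 4 m with hdef
  have hh : 4 ≤ h := le_max_left _ _
  have hm : m ≤ h := le_max_right _ _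
  have hn2 : 2 ≤ SdCirc.NV h := by
    have h1 : 2 * 4 * (4 + 1) ≤ 2 * h * (h + 1) := Nat.mul_le_mul (by omega) (by omega)
    show 2 ≤ 2 * h * (h + 1)
    omega
  have hmn : m ≤ SdCirc.NV h := by
    have h1 : h ≤ 2 * h * (h + 1) :=
      le_trans (by omega : h ≤ 2 * h) (Nat.le_mul_of_pos_right _ (by omega))
    show m ≤ 2 * h * (h + 1)
    omega
  refine ⟨SdCirc.NV h, hmn, SdCirc.G h, SdCirc.isCircular h hh, ?_⟩
  have hsd : h - 2 ≤ (SdCirc.G h).sdGraph := SdCirc.le_sdGraph _ _ hn2 (SdCirc.key h hh)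
  have hr1 : ((SdCirc.NV h : ℕ) : ℝ) ≤ ((2 * h : ℕ) : ℝ) ^ 2 := by
    have h1 : SdCirc.NV h ≤ (2 * h) ^ 2 := by
      show 2 * h * (h + 1) ≤ (2 * h) ^ 2
      rw [pow_two]
      exact Nat.mul_le_mul_left _ (by omega)
    exact_mod_cast h1
  have hr2 : Real.sqrt ((SdCirc.NV h : ℕ) : ℝ) ≤ ((2 * h : ℕ) : ℝ) := by
    rw [show ((2 * h : ℕ) : ℝ) = Real.sqrt (((2 * h : ℕ) : ℝ) ^ 2) from
      (Real.sqrt_sq (by positivity)).symm]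
    exact Real.sqrt_le_sqrt hr1
  have hr3 : ((h : ℝ) - 2) ≤ ((SdCirc.G h).sdGraph : ℝ) := by
    have h1 : ((h - 2 : ℕ) : ℝ) ≤ ((SdCirc.G h).sdGraph : ℝ) := Nat.cast_le.mpr hsd
    rw [Nat.cast_sub (by omega)] at h1
    exact_mod_cast h1
  have hc4 : (4 : ℝ) ≤ (h : ℝ) := by exact_mod_cast hh
  have hc2 : ((2 * h : ℕ) : ℝ) = 2 * (h : ℝ) := by push_cast; ring
  rw [hc2] at hr2
  linarith [Real.sqrt_nonneg ((SdCirc.NV h : ℕ) : ℝ)]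
end

section
/- There exists a constant C > 0 such that every interval graph G on n ≥ 1 vertices satisfies sd(G) ≤ C·n^{1/3}. -/
/- ------------------------------------------------------------------ -/
/- Auxiliary lemmas for the proof.                                     -/
/- ------------------------------------------------------------------ -/

/-- Packing lemma: points of a finite set whose two integer coordinates are
confined to a box, and such that any two distinct points differ by at least `q`
in one of the two coordinates, number at most `(X/q+1)*(Y/q+1)`. -/
lemma sdaux_pack {V : Type*} [Fintype V] [DecidableEq V] (S : Finset V) (f g : V → ℕ)
    (q X Y x₀ y₀ : ℕ) (hq : 1 ≤ q)
    (hx : ∀ v ∈ S, x₀ ≤ f v ∧ f v ≤ x₀ + X)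
    (hy : ∀ v ∈ S, y₀ ≤ g v ∧ g v ≤ y₀ + Y)
    (hsep : ∀ u ∈ S, ∀ v ∈ S, u ≠ v → q ≤ Nat.dist (f u) (f v) ∨ q ≤ Nat.dist (g u) (g v)) :
    S.card ≤ (X / q + 1) * (Y / q + 1) := by
  classical
  have key : ∀ p r : ℕ, p / q = r / q → Nat.dist p r < q := by
    intro p r h
    have hp := Nat.div_add_mod p q
    have hr := Nat.div_add_mod r q
    rw [h] at hp
    have hpm : p % q < q := Nat.mod_lt _ hq
    have hrm : r % q < q := Nat.mod_lt _ hq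
    set m := q * (r / q) with hm
    unfold Nat.dist
    omega
  have hcard := Finset.card_le_card_of_injOn
    (fun v => ((f v - x₀) / q, (g v - y₀) / q))
    (s := S) (t := (Finset.range (X / q + 1)) ×ˢ (Finset.range (Y / q + 1)))
    (fun v hv => by
      simp only [Finset.mem_coe, Finset.mem_product, Finset.mem_range]
      constructor
      · have := (hx v hv).2
        have : f v - x₀ ≤ X := by omega
        exact Nat.lt_succ_of_le (Nat.div_le_div_right this)
      · have := (hy v hv).2
        have : g v - y₀ ≤ Y := by omega
        exact Nat.lt_succ_of_le (Nat.div_le_div_right this))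
    (by
      intro u hu v hv heq
      by_contra hne
      simp only [Prod.mk.injEq] at heq
      have h1 := key _ _ heq.1
      have h2 := key _ _ heq.2
      have hxu := (hx u hu).1; have hxv := (hx v hv).1
      have hyu := (hy u hu).1; have hyv := (hy v hv).1
      have d1 : Nat.dist (f u) (f v) < q := by
        have := h1; unfold Nat.dist at *; omega
      have d2 : Nat.dist (g u) (g v) < q := by
        have := h2; unfold Nat.dist at *; omega
      rcases hsep u hu v hv hne with h | h <;> omega)
  simpa using hcard

/-- One can always select `t` vertices on which `b` is smallest. -/
lemma sdaux_select {V : Type*} [Fintype V] [DecidableEq V] (b : V → ℝ) :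
    ∀ t : ℕ, t ≤ Fintype.card V → ∃ S : Finset V, S.card = t ∧
      ∀ v ∈ S, ∀ w, w ∉ S → b v ≤ b w := by
  intro t
  induction t with
  | zero => intro _; exact ⟨∅, by simp⟩
  | succ k ih =>
    intro hk
    obtain ⟨S, hScard, hSmin⟩ := ih (le_of_lt (Nat.lt_of_succ_le hk))
    have hne : (Finset.univ \ S).Nonempty := by
      rw [← Finset.card_pos, Finset.card_sdiff_of_subset (Finset.subset_univ S)]
      have : S.card < Fintype.card V := by rw [hScard]; omega
      simp only [Finset.card_univ]; omega
    obtain ⟨w₀, hw₀mem, hw₀min⟩ := Finset.exists_min_image (Finset.univ \ S) b hne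
    have hw₀S : w₀ ∉ S := (Finset.mem_sdiff.mp hw₀mem).2
    refine ⟨insert w₀ S, by rw [Finset.card_insert_of_notMem hw₀S, hScard], ?_⟩
    intro v hv w hw
    have hwS : w ∉ S := fun h => hw (Finset.mem_insert_of_mem h)
    rcases Finset.mem_insert.mp hv with rfl | hvS
    · exact hw₀min w (Finset.mem_sdiff.mpr ⟨Finset.mem_univ w, hwS⟩)
    · exact hSmin v hvS w hwS

open Finset in
/-- The symmetric difference of a pair is bounded by the number of right
endpoints between the two left endpoints plus the number of left endpoints
between the two right endpoints. -/
lemma sdaux_lemA {V : Type*} [Fintype V] [DecidableEq V] (G : SimpleGraph V)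
    [DecidableRel G.Adj] (a b : V → ℝ)
    (hab : ∀ v, a v ≤ b v)
    (hadj : ∀ u v : V, u ≠ v → (G.Adj u v ↔ (a v ≤ b u ∧ a u ≤ b v)))
    (u v : V) (huv : u ≠ v) (hauv : a u ≤ a v) :
    (univ.filter (fun w => w ≠ u ∧ w ≠ v ∧
      ((G.Adj w u ∧ ¬ G.Adj w v) ∨ (¬ G.Adj w u ∧ G.Adj w v)))).card ≤
    Nat.dist ((univ.filter (fun w => b w < a u)).card) ((univ.filter (fun w => b w < a v)).card)
    + Nat.dist ((univ.filter (fun w => a w ≤ b u)).card) ((univ.filter (fun w => a w ≤ b v)).card) := by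
  classical
  set W1 : Finset V := univ.filter (fun w => a u ≤ b w ∧ b w < a v) with hW1
  set W2 : Finset V := univ.filter (fun w => min (b u) (b v) < a w ∧ a w ≤ max (b u) (b v)) with hW2
  have hsub : univ.filter (fun w => w ≠ u ∧ w ≠ v ∧
      ((G.Adj w u ∧ ¬ G.Adj w v) ∨ (¬ G.Adj w u ∧ G.Adj w v))) ⊆ W1 ∪ W2 := by
    intro w hw
    simp only [mem_filter, mem_univ, true_and] at hw
    obtain ⟨hwu, hwv, hor⟩ := hw
    rcases lt_or_ge (b w) (a v) with hlt | hge
    · have hnadjv : ¬ G.Adj w v := by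
        intro h
        exact absurd ((hadj w v hwv).mp h).1 (not_le.mpr hlt)
      have hadju : G.Adj w u := by
        rcases hor with ⟨h, _⟩ | ⟨_, h⟩
        · exact h
        · exact absurd h hnadjv
      have h1 : a u ≤ b w := ((hadj w u hwu).mp hadju).1
      exact Finset.mem_union_left _ (by simp [hW1, h1, hlt])
    · have hiffu : G.Adj w u ↔ a w ≤ b u := by
        rw [hadj w u hwu]
        exact ⟨fun h => h.2, fun h => ⟨le_trans hauv hge, h⟩⟩
      have hiffv : G.Adj w v ↔ a w ≤ b v := by
        rw [hadj w v hwv]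
        exact ⟨fun h => h.2, fun h => ⟨hge, h⟩⟩
      apply Finset.mem_union_right
      rcases hor with ⟨h1, h2⟩ | ⟨h1, h2⟩
      · have hu' : a w ≤ b u := hiffu.mp h1
        have hv' : b v < a w := not_le.mp (fun h => h2 (hiffv.mpr h))
        simp only [hW2, mem_filter, mem_univ, true_and]
        exact ⟨lt_of_le_of_lt (min_le_right _ _) hv', le_trans hu' (le_max_left _ _)⟩
      · have hv' : a w ≤ b v := hiffv.mp h2
        have hu' : b u < a w := not_le.mp (fun h => h1 (hiffu.mpr h))
        simp only [hW2, mem_filter, mem_univ, true_and]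
        exact ⟨lt_of_le_of_lt (min_le_left _ _) hu', le_trans hv' (le_max_right _ _)⟩
  have hcard1 : W1.card = (univ.filter (fun w => b w < a v)).card
      - (univ.filter (fun w => b w < a u)).card := by
    have hW1eq : W1 = univ.filter (fun w => b w < a v) \ univ.filter (fun w => b w < a u) := by
      ext w
      simp only [hW1, mem_filter, mem_univ, true_and, mem_sdiff, not_lt]
      constructor
      · rintro ⟨h1, h2⟩; exact ⟨h2, h1⟩
      · rintro ⟨h1, h2⟩; exact ⟨h2, h1⟩
    rw [hW1eq, card_sdiff_of_subset]
    intro w hw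
    simp only [mem_filter, mem_univ, true_and] at *
    exact lt_of_lt_of_le hw hauv
  have hmono1 : (univ.filter (fun w => b w < a u)).card ≤ (univ.filter (fun w => b w < a v)).card := by
    apply card_le_card
    intro w hw
    simp only [mem_filter, mem_univ, true_and] at *
    exact lt_of_lt_of_le hw hauv
  have hcard2 : W2.card ≤ Nat.dist ((univ.filter (fun w => a w ≤ b u)).card)
      ((univ.filter (fun w => a w ≤ b v)).card) := by
    rcases le_total (b u) (b v) with hbb | hbb
    · have hW2eq : W2 = univ.filter (fun w => a w ≤ b v) \ univ.filter (fun w => a w ≤ b u) := by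
        ext w
        simp only [hW2, mem_filter, mem_univ, true_and, mem_sdiff, not_le,
          min_eq_left hbb, max_eq_right hbb]
        tauto
      have hmono : (univ.filter (fun w => a w ≤ b u)).card
          ≤ (univ.filter (fun w => a w ≤ b v)).card := by
        apply card_le_card; intro w hw
        simp only [mem_filter, mem_univ, true_and] at *
        exact le_trans hw hbb
      rw [hW2eq, card_sdiff_of_subset (by
        intro w hw; simp only [mem_filter, mem_univ, true_and] at *; exact le_trans hw hbb)]
      rw [Nat.dist_eq_sub_of_le hmono]
    · have hW2eq : W2 = univ.filter (fun w => a w ≤ b u) \ univ.filter (fun w => a w ≤ b v) := by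
        ext w
        simp only [hW2, mem_filter, mem_univ, true_and, mem_sdiff, not_le,
          min_eq_right hbb, max_eq_left hbb]
        tauto
      have hmono : (univ.filter (fun w => a w ≤ b v)).card
          ≤ (univ.filter (fun w => a w ≤ b u)).card := by
        apply card_le_card; intro w hw
        simp only [mem_filter, mem_univ, true_and] at *
        exact le_trans hw hbb
      rw [hW2eq, card_sdiff_of_subset (by
        intro w hw; simp only [mem_filter, mem_univ, true_and] at *; exact le_trans hw hbb)]
      rw [Nat.dist_eq_sub_of_le_right hmono]
  calc (univ.filter _).card ≤ (W1 ∪ W2).card := card_le_card hsub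
    _ ≤ W1.card + W2.card := card_union_le _ _
    _ ≤ _ := by
        rw [Nat.dist_eq_sub_of_le hmono1]
        omega

open Finset in
/-- Core combinatorial estimate: any finite family of intervals with at least
two members contains a pair whose symmetric difference cubed is `O(n)`. -/
lemma sdaux_core {V : Type*} [Fintype V] (G : SimpleGraph V) (a b : V → ℝ)
    (hab : ∀ v, a v ≤ b v)
    (hadj : ∀ u v : V, u ≠ v → (G.Adj u v ↔ (a v ≤ b u ∧ a u ≤ b v)))
    (h2 : ∃ u v : V, u ≠ v) :
    ∃ u v : V, u ≠ v ∧ (G.sdPair u v)^3 ≤ 216000 * Fintype.card V := by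
  classical
  set n := Fintype.card V with hn
  set x : V → ℕ := fun v => (univ.filter (fun w => b w < a v)).card with hx
  set y : V → ℕ := fun v => (univ.filter (fun w => a w ≤ b v)).card with hy
  set sdc : V → V → ℕ := fun u v => (univ.filter (fun w => w ≠ u ∧ w ≠ v ∧
      ((G.Adj w u ∧ ¬ G.Adj w v) ∨ (¬ G.Adj w u ∧ G.Adj w v)))).card with hsdc
  have hsd : ∀ u v : V, G.sdPair u v = sdc u v := by
    intro u v
    unfold SimpleGraph.sdPair
    rw [show {w | w ≠ u ∧ w ≠ v ∧ ((G.Adj w u ∧ ¬ G.Adj w v) ∨ (¬ G.Adj w u ∧ G.Adj w v))}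
        = ↑(univ.filter (fun w => w ≠ u ∧ w ≠ v ∧
          ((G.Adj w u ∧ ¬ G.Adj w v) ∨ (¬ G.Adj w u ∧ G.Adj w v)))) by
      ext w; simp]
    rw [Set.ncard_coe_finset]
  have hsymm : ∀ u v : V, sdc u v = sdc v u := by
    intro u v
    simp only [hsdc]
    congr 1
    ext w
    simp only [mem_filter, mem_univ, true_and]
    tauto
  have hA : ∀ u v : V, u ≠ v → sdc u v ≤ Nat.dist (x u) (x v) + Nat.dist (y u) (y v) := by
    intro u v huv
    rcases le_total (a u) (a v) with h | h
    · exact sdaux_lemA G a b hab hadj u v huv h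
    · rw [hsymm, Nat.dist_comm (x u), Nat.dist_comm (y u)]
      exact sdaux_lemA G a b hab hadj v u huv.symm h
  obtain ⟨u₂, v₂, huv₂⟩ := h2
  set P : Finset (V × V) := univ.filter (fun p => p.1 ≠ p.2) with hP
  have hPne : P.Nonempty := ⟨(u₂, v₂), by simp [hP, huv₂]⟩
  set T : Finset ℕ := P.image (fun p => sdc p.1 p.2) with hT
  have hTne : T.Nonempty := hPne.image _
  set t : ℕ := T.min' hTne with htdef
  have htmin : ∀ u v : V, u ≠ v → t ≤ sdc u v := by
    intro u v huv
    exact Finset.min'_le T _ (Finset.mem_image.mpr ⟨(u, v), by simp [hP, huv], rfl⟩)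
  obtain ⟨p₀, hp₀P, hp₀⟩ := Finset.mem_image.mp (Finset.min'_mem T hTne)
  have hp₀ne : p₀.1 ≠ p₀.2 := by simpa [hP] using hp₀P
  refine ⟨p₀.1, p₀.2, hp₀ne, ?_⟩
  rw [hsd, hp₀]
  have hn1 : 1 ≤ n := by
    rw [hn]
    exact Fintype.card_pos_iff.mpr ⟨u₂⟩
  rcases le_or_gt t 53 with ht53 | ht54
  · calc t ^ 3 ≤ 53 ^ 3 := Nat.pow_le_pow_left ht53 3
      _ ≤ 216000 * 1 := by norm_num
      _ ≤ 216000 * n := by omega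
  have ht54' : 54 ≤ t := ht54
  set q : ℕ := (t + 1) / 2 with hqdef
  have hq1 : 1 ≤ q := by omega
  have hq3 : t ≤ 2 * q := by omega
  have hq4 : t < 3 * q := by omega
  have hsep : ∀ u v : V, u ≠ v →
      q ≤ Nat.dist (x u) (x v) ∨ q ≤ Nat.dist (y u) (y v) := by
    intro u v huv
    have h1 := htmin u v huv
    have h2 := hA u v huv
    omega
  have htn : t ≤ n := by
    have : sdc p₀.1 p₀.2 ≤ n := by
      rw [hsdc, hn, ← Finset.card_univ]
      exact card_filter_le _ _
    omega
  obtain ⟨S, hScard, hSmin⟩ := sdaux_select b t (by rw [← hn]; exact htn)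
  have hSne : S.Nonempty := by
    rw [← Finset.card_pos, hScard]; omega
  obtain ⟨vmax, hvmaxS, hβ1⟩ := Finset.exists_max_image S b hSne
  set β : ℝ := b vmax with hβ
  have hβ3 : ∀ w, w ∉ S → β ≤ b w := fun w hw => hSmin vmax hvmaxS w hw
  set QQ : Finset V := univ.filter (fun w => w ∉ S ∧ a w ≤ β) with hQQ
  set K : ℕ := QQ.card with hK
  have hdisj : Disjoint S QQ := by
    rw [Finset.disjoint_left]
    intro w hwS hwQQ
    exact ((mem_filter.mp hwQQ).2.1 hwS)
  have hcup : (S ∪ QQ).card = t + K := by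
    rw [Finset.card_union_of_disjoint hdisj, hScard]
  have hSQn : t + K ≤ n := by
    rw [← hcup, hn, ← Finset.card_univ]
    exact card_le_card (subset_univ _)
  have box1x : ∀ v ∈ S, x v ≤ t := by
    intro v hv
    rw [hx, ← hScard]
    apply card_le_card
    intro w hw
    simp only [mem_filter, mem_univ, true_and] at hw
    by_contra hwS
    have h0 := hβ3 w hwS
    have h1 := hβ1 v hv
    have h2 := hab v
    linarith
  have box1y : ∀ v ∈ S, y v ≤ t + K := by
    intro v hv
    rw [hy, ← hcup]
    apply card_le_card
    intro w hw
    simp only [mem_filter, mem_univ, true_and] at hw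
    by_cases hwS : w ∈ S
    · exact Finset.mem_union_left _ hwS
    · apply Finset.mem_union_right
      simp only [hQQ, mem_filter, mem_univ, true_and]
      exact ⟨hwS, le_trans hw (hβ1 v hv)⟩
  have pack1 : S.card ≤ (t / q + 1) * ((t + K) / q + 1) := by
    apply sdaux_pack S x y q t (t + K) 0 0 hq1
    · intro v hv; exact ⟨Nat.zero_le _, by simpa using box1x v hv⟩
    · intro v hv; exact ⟨Nat.zero_le _, by simpa using box1y v hv⟩
    · intro u hu v hv huv; exact hsep u v huv
  have htq : t / q + 1 ≤ 3 := by
    have : t / q < 3 := Nat.div_lt_of_lt_mul (by omega)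
    omega
  have c1 : t ≤ 3 * ((t + K) / q + 1) := by
    calc t = S.card := hScard.symm
      _ ≤ (t / q + 1) * ((t + K) / q + 1) := pack1
      _ ≤ 3 * ((t + K) / q + 1) := Nat.mul_le_mul_right _ htq
  have box2x : ∀ v ∈ QQ, x v ≤ t := by
    intro v hv
    simp only [hQQ, mem_filter, mem_univ, true_and] at hv
    rw [hx, ← hScard]
    apply card_le_card
    intro w hw
    simp only [mem_filter, mem_univ, true_and] at hw
    by_contra hwS
    have h0 := hβ3 w hwS
    have h1 := hv.2
    linarith
  have box2y : ∀ v ∈ QQ, t + K ≤ y v ∧ y v ≤ n := by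
    intro v hv
    simp only [hQQ, mem_filter, mem_univ, true_and] at hv
    have hvb : β ≤ b v := hβ3 v hv.1
    constructor
    · rw [hy, ← hcup]
      apply card_le_card
      intro w hw
      simp only [mem_filter, mem_univ, true_and]
      rcases Finset.mem_union.mp hw with hwS | hwQQ
      · exact le_trans (hab w) (le_trans (hβ1 w hwS) hvb)
      · exact le_trans (mem_filter.mp hwQQ).2.2 hvb
    · rw [hy, hn, ← Finset.card_univ]
      exact card_filter_le _ _
  have pack2 : K ≤ (t / q + 1) * ((n - (t + K)) / q + 1) := by
    rw [hK]
    apply sdaux_pack QQ x y q t (n - (t + K)) 0 (t + K) hq1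
    · intro v hv; exact ⟨Nat.zero_le _, by simpa using box2x v hv⟩
    · intro v hv
      obtain ⟨h1, h2⟩ := box2y v hv
      exact ⟨h1, by omega⟩
    · intro u hu v hv huv; exact hsep u v huv
  have c2 : K ≤ 3 * (n / q + 1) := by
    calc K ≤ (t / q + 1) * ((n - (t + K)) / q + 1) := pack2
      _ ≤ 3 * ((n - (t + K)) / q + 1) := Nat.mul_le_mul_right _ htq
      _ ≤ 3 * (n / q + 1) := by
          have : (n - (t + K)) / q ≤ n / q := Nat.div_le_div_right (by omega)
          omega
  have hDdef : q * ((t + K) / q) ≤ t + K := Nat.mul_div_le _ _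
  have hNdef : q * (n / q) ≤ n := Nat.mul_div_le _ _
  have h6 : t * t ≤ 6 * K + 9 * t + 3 := by
    have h1 : t * t ≤ (2 * q) * (3 * ((t + K) / q + 1)) :=
      Nat.mul_le_mul hq3 c1
    have h2 : (2 * q) * (3 * ((t + K) / q + 1)) = 6 * (q * ((t + K) / q)) + 6 * q := by ring
    omega
  have h8 : t * K ≤ 6 * n + 3 * t + 3 := by
    have h1 : t * K ≤ (2 * q) * (3 * (n / q + 1)) := Nat.mul_le_mul hq3 c2
    have h2 : (2 * q) * (3 * (n / q + 1)) = 6 * (q * (n / q)) + 6 * q := by ring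
    omega
  -- conclude
  have h9 : t * (t * t) ≤ t * (6 * K + 9 * t + 3) := Nat.mul_le_mul_left t h6
  have h10 : t ^ 3 ≤ 6 * (t * K) + 9 * (t * t) + 3 * t := by
    calc t ^ 3 = t * (t * t) := by ring
      _ ≤ t * (6 * K + 9 * t + 3) := h9
      _ = 6 * (t * K) + 9 * (t * t) + 3 * t := by ring
  have h11 : t ^ 3 ≤ 36 * n + 9 * (t * t) + 21 * t + 18 := by omega
  -- 9 t² + 21 t ≤ 10 t² ≤ (10/54) t³ for t ≥ 54
  nlinarith [h11, ht54', hn1, sq_nonneg t, Nat.mul_le_mul hq3 c1]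

lemma sdaux_icc {a₁ b₁ a₂ b₂ : ℝ} (h₁ : a₁ ≤ b₁) (h₂ : a₂ ≤ b₂) :
    (Set.Icc a₁ b₁ ∩ Set.Icc a₂ b₂).Nonempty ↔ (a₂ ≤ b₁ ∧ a₁ ≤ b₂) := by
  rw [Set.Icc_inter_Icc, Set.nonempty_Icc, max_le_iff, le_min_iff, le_min_iff]
  constructor
  · rintro ⟨⟨c1, c2⟩, ⟨c3, c4⟩⟩
    exact ⟨c3, c2⟩
  · rintro ⟨c1, c2⟩
    exact ⟨⟨h₁, c2⟩, ⟨c1, h₂⟩⟩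

lemma sdaux_sdPair_le {V : Type*} [Fintype V] (G : SimpleGraph V) (u v : V) :
    G.sdPair u v ≤ Fintype.card V := by
  unfold SimpleGraph.sdPair
  calc ({w | w ≠ u ∧ w ≠ v ∧ ((G.Adj w u ∧ ¬ G.Adj w v) ∨ (¬ G.Adj w u ∧ G.Adj w v))}).ncard
      ≤ (Set.univ : Set V).ncard :=
        Set.ncard_le_ncard (Set.subset_univ _) Set.finite_univ
    _ = Fintype.card V := by rw [Set.ncard_univ, Nat.card_eq_fintype_card]

/-- every interval graph on `n ≥ 1` vertices has symmetric difference
at most `C·n^{1/3}` for some universal constant `C > 0`. -/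
theorem sd_intervalGraph_upper_bound :
    ∃ C : ℝ, 0 < C ∧ ∀ (V : Type) [Fintype V] (G : SimpleGraph V),
      IsIntervalGraph G → 1 ≤ Fintype.card V →
      (G.sdGraph : ℝ) ≤ C * (Fintype.card V : ℝ) ^ (1 / 3 : ℝ) := by
  classical
  refine ⟨60, by norm_num, ?_⟩
  intro V _ G hIG hcard
  set n := Fintype.card V with hn
  have hrhs_nonneg : (0:ℝ) ≤ 60 * (n:ℝ) ^ (1 / 3 : ℝ) := by positivity
  -- each member of the defining set is small
  have key : ∀ m ∈ {m | ∃ W : Set V, (∃ u v : W, u ≠ v) ∧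
      m = sInf {k | ∃ u v : W, u ≠ v ∧ k = (G.induce W).sdPair u v}},
      (m : ℝ) ≤ 60 * (n:ℝ) ^ (1 / 3 : ℝ) := by
    rintro m ⟨W, ⟨u, v, huv⟩, hmeq⟩
    letI : Fintype ↥W := (Set.toFinite W).fintype
    obtain ⟨a, b, hab, hGadj⟩ := hIG
    have hadj' : ∀ p r : ↥W, p ≠ r →
        ((G.induce W).Adj p r ↔ (a r.1 ≤ b p.1 ∧ a p.1 ≤ b r.1)) := by
      intro p r hpr
      have hpr' : (p : V) ≠ (r : V) := Subtype.coe_injective.ne hpr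
      have : (G.induce W).Adj p r ↔ G.Adj p.1 r.1 := by
        simp [SimpleGraph.induce, SimpleGraph.comap]
      rw [this, hGadj p.1 r.1 hpr', sdaux_icc (hab p.1) (hab r.1)]
    obtain ⟨u₁, v₁, huv₁, hbound⟩ := sdaux_core (G.induce W) (fun p => a p.1) (fun p => b p.1)
      (fun p => hab p.1) hadj' ⟨u, v, huv⟩
    have hmle : m ≤ (G.induce W).sdPair u₁ v₁ := by
      rw [hmeq]
      exact Nat.sInf_le ⟨u₁, v₁, huv₁, rfl⟩
    have hWn : Fintype.card ↥W ≤ n := by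
      rw [hn]
      exact Fintype.card_le_of_injective _ Subtype.coe_injective
    have hm3 : m ^ 3 ≤ 216000 * n := by
      calc m ^ 3 ≤ ((G.induce W).sdPair u₁ v₁) ^ 3 := Nat.pow_le_pow_left hmle 3
        _ ≤ 216000 * Fintype.card ↥W := hbound
        _ ≤ 216000 * n := by omega
    -- convert to the real inequality
    have h3 : ((n:ℝ) ^ ((1:ℝ) / 3)) ^ (3:ℕ) = (n:ℝ) := by
      rw [← Real.rpow_natCast ((n:ℝ) ^ ((1:ℝ)/3)) 3, ← Real.rpow_mul (by positivity)]
      norm_num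
    apply le_of_pow_le_pow_left₀ (n := 3) (by norm_num) hrhs_nonneg
    rw [mul_pow, h3]
    have : ((m:ℝ)) ^ (3:ℕ) ≤ 216000 * (n:ℝ) := by
      have := hm3
      push_cast
      exact_mod_cast hm3
    calc ((m:ℝ)) ^ (3:ℕ) ≤ 216000 * (n:ℝ) := this
      _ ≤ 60 ^ 3 * (n:ℝ) := by norm_num
  -- now bound the supremum
  unfold SimpleGraph.sdGraph
  by_cases hne : {m | ∃ W : Set V, (∃ u v : W, u ≠ v) ∧
      m = sInf {k | ∃ u v : W, u ≠ v ∧ k = (G.induce W).sdPair u v}}.Nonempty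
  · have hbdd : BddAbove {m | ∃ W : Set V, (∃ u v : W, u ≠ v) ∧
        m = sInf {k | ∃ u v : W, u ≠ v ∧ k = (G.induce W).sdPair u v}} := by
      refine ⟨n, ?_⟩
      rintro m ⟨W, ⟨u, v, huv⟩, hmeq⟩
      letI : Fintype ↥W := (Set.toFinite W).fintype
      have hmle : m ≤ (G.induce W).sdPair u v := by
        rw [hmeq]
        exact Nat.sInf_le ⟨u, v, huv, rfl⟩
      have h1 : (G.induce W).sdPair u v ≤ Fintype.card ↥W := sdaux_sdPair_le _ _ _
      have h2 : Fintype.card ↥W ≤ n := by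
        rw [hn]
        exact Fintype.card_le_of_injective _ Subtype.coe_injective
      omega
    exact key _ (Nat.sSup_mem hne hbdd)
  · rw [Set.not_nonempty_iff_eq_empty.mp hne]
    simpa using hrhs_nonneg
end
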